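/- arXiv:2310.13884 — 5 statements merged into one kernel-verified Lean document; each statement's English description precedes it below -/
import Mathlib

section
/- Let n ≥ 3, let C_n be the cycle graph on n vertices, and let i be a vertex of C_n. Then every matrix A ∈ 𝒮(C_n) has the i-SNIP, and for nonnegative integers k, ℓ the rooted graph (C_n,i) allows the nullity pair (k,ℓ) with the SNIP if and only if (k,ℓ) ∈ {(0,0), (1,0), (0,1), (1,1), (2,1)}. -/
open Matrix

/-- The nullity of a square real matrix: the dimension of its kernel. -/
noncomputable def nullity {V : Type*} [Fintype V] (A : Matrix V V ℝ) : ℕ :=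
  Module.finrank ℝ (LinearMap.ker A.mulVecLin)

/-- The principal submatrix of `A` obtained by deleting row and column `i`. -/
def deleteRC {V : Type*} (A : Matrix V V ℝ) (i : V) :
    Matrix {v : V // v ≠ i} {v : V // v ≠ i} ℝ :=
  A.submatrix (fun v => (v : V)) (fun v => (v : V))

/-- `A` has the `i`-strong nullity interlacing property. -/
def HasSNIP {V : Type*} [Fintype V] [DecidableEq V] (A : Matrix V V ℝ) (i : V) : Prop :=
  ∀ X : Matrix V V ℝ, X.IsSymm → A.hadamard X = 0 →
    (1 : Matrix V V ℝ).hadamard X = 0 →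
    (∀ r, r ≠ i → ∀ c, (A * X) r c = 0) → X = 0

/-- `A` has the strong Arnold property. -/
def HasSAP {V : Type*} [Fintype V] [DecidableEq V] (A : Matrix V V ℝ) : Prop :=
  ∀ X : Matrix V V ℝ, X.IsSymm → A.hadamard X = 0 →
    (1 : Matrix V V ℝ).hadamard X = 0 → A * X = 0 → X = 0

/-- `A` belongs to `𝒮(G)`. -/
def InSG {V : Type*} (G : SimpleGraph V) (A : Matrix V V ℝ) : Prop :=
  A.IsSymm ∧ ∀ u v : V, u ≠ v → (A u v ≠ 0 ↔ G.Adj u v)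

/-- `(G,i)` allows the nullity pair `(k,l)`. -/
def Allows {V : Type*} [Fintype V] [DecidableEq V] (G : SimpleGraph V) (i : V)
    (k l : ℕ) : Prop :=
  ∃ A : Matrix V V ℝ, InSG G A ∧ nullity A = k ∧ nullity (deleteRC A i) = l

/-- `(G,i)` allows the nullity pair `(k,l)` with the SNIP. -/
def AllowsSNIP {V : Type*} [Fintype V] [DecidableEq V] (G : SimpleGraph V) (i : V)
    (k l : ℕ) : Prop :=
  ∃ A : Matrix V V ℝ, InSG G A ∧ nullity A = k ∧ nullity (deleteRC A i) = l ∧ HasSNIP A i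

set_option linter.unusedVariables false
set_option linter.unusedSectionVars false
set_option maxHeartbeats 1000000


open Real
open Fin.NatCast
open Fin.CommRing

section Prop1
variable {n : ℕ} [NeZero n]

lemma cast_inj_of_lt {a b : ℕ} (ha : a < n) (hb : b < n) (h : (a : Fin n) = b) : a = b := by
  have := congrArg Fin.val h
  simpa [Nat.mod_eq_of_lt ha, Nat.mod_eq_of_lt hb] using this

lemma cast_ne_of_ne {a b : ℕ} (ha : a < n) (hb : b < n) (h : a ≠ b) : (a : Fin n) ≠ b :=
  fun hh => h (cast_inj_of_lt ha hb hh)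

/-- Propagation of zeros around a cycle, avoiding one row `i`. -/
lemma prop_zero (hn : 3 ≤ n) (i c : Fin n) (p q s y : Fin n → ℝ)
    (hp : ∀ r, r ≠ i → p r ≠ 0) (hs : ∀ r, r ≠ i → s r ≠ 0)
    (hrow : ∀ r, r ≠ i → p r * y (r - 1) + q r * y r + s r * y (r + 1) = 0)
    (h0 : y c = 0) (h1 : y (c + 1) = 0) : y = 0 := by
  set e : ℕ := (i - c).val with he
  have hen : e < n := (i - c).isLt
  have hi : i = c + (e : Fin n) := by
    rw [he, Fin.cast_val_eq_self]; ring
  set E : ℕ := if e = 0 then n - 1 else e with hE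
  have hEn : E ≤ n - 1 := by rw [hE]; split <;> omega
  have F : ∀ t : ℕ, t ≤ E → y (c + (t : Fin n)) = 0 := by
    intro t
    induction t using Nat.strong_induction_on with
    | _ t ih =>
      match t, ih with
      | 0, _ => intro _; simpa using h0
      | 1, _ => intro _; simpa using h1
      | (m+2), ih =>
        intro ht
        have hm2 : m + 2 ≤ n - 1 := le_trans ht hEn
        have hr : (c + ((m+1 : ℕ) : Fin n)) ≠ i := by
          rw [hi]
          intro hh
          have : ((m+1 : ℕ) : Fin n) = (e : Fin n) := by
            exact add_left_cancel hh
          have := cast_inj_of_lt (by omega) hen this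
          rw [hE] at ht
          split at ht <;> omega
        have hrow' := hrow _ hr
        have e1 : (c + ((m+1 : ℕ) : Fin n)) - 1 = c + ((m : ℕ) : Fin n) := by
          push_cast; ring
        have e2 : (c + ((m+1 : ℕ) : Fin n)) + 1 = c + ((m+2 : ℕ) : Fin n) := by
          push_cast; ring
        rw [e1, e2, ih m (by omega) (by omega), ih (m+1) (by omega) (by omega)] at hrow'
        simp only [mul_zero, zero_add, add_zero] at hrow'
        rcases mul_eq_zero.mp hrow' with h | h
        · exact absurd h (hs _ hr)
        · exact h
  have main : ∀ j : Fin n, y j = 0 := by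
    intro j
    have hj : j = c + (((j - c).val : ℕ) : Fin n) := by
      rw [Fin.cast_val_eq_self]; ring
    set t : ℕ := (j - c).val with htdef
    have htn : t < n := (j - c).isLt
    by_cases hcase : t ≤ E
    · rw [hj]; exact F t hcase
    · -- backward
      have he0 : e ≠ 0 := by
        intro h; rw [hE] at hcase; simp [h] at hcase; omega
      have hEe : E = e := by rw [hE, if_neg he0]
      rw [hEe] at hcase
      push_neg at hcase
      have B : ∀ u : ℕ, u ≤ n + 1 - e → y (c + 1 - (u : Fin n)) = 0 := by
        intro u
        induction u using Nat.strong_induction_on with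
        | _ u ihb =>
          match u, ihb with
          | 0, _ => intro _; simpa using h1
          | 1, _ => intro _; simpa using h0
          | (m+2), ihb =>
            intro hu
            have hr : (c - ((m : ℕ) : Fin n)) ≠ i := by
              rw [hi]
              intro hh
              have h2 : ((e + m : ℕ) : Fin n) = 0 := by
                push_cast
                linear_combination - hh
              rw [Fin.natCast_eq_zero] at h2
              rcases h2 with ⟨k, hk⟩
              have hkk : n ≤ n * k ∨ k = 0 := by
                rcases Nat.eq_zero_or_pos k with h | h
                · exact Or.inr h
                · exact Or.inl (Nat.le_mul_of_pos_right n h)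
              rcases hkk with h | h
              · omega
              · subst h
                simp at hk
                omega
            have hrow' := hrow _ hr
            have e1 : (c - ((m : ℕ) : Fin n)) + 1 = c + 1 - ((m : ℕ) : Fin n) := by ring
            have e2 : (c - ((m : ℕ) : Fin n)) = c + 1 - ((m+1 : ℕ) : Fin n) := by
              push_cast; ring
            have e3 : (c - ((m : ℕ) : Fin n)) - 1 = c + 1 - ((m+2 : ℕ) : Fin n) := by
              push_cast; ring
            have hy1 : y ((c - ((m : ℕ) : Fin n)) + 1) = 0 := by
              rw [e1]; exact ihb m (by omega) (by omega)
            have hy0 : y (c - ((m : ℕ) : Fin n)) = 0 := by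
              rw [e2]; exact ihb (m+1) (by omega) (by omega)
            rw [hy0, hy1] at hrow'
            simp only [mul_zero, zero_add, add_zero] at hrow'
            rw [← e3]
            rcases mul_eq_zero.mp hrow' with h | h
            · exact absurd h (hp _ hr)
            · exact h
      have hu : n + 1 - t ≤ n + 1 - e := by omega
      have key : c + (t : Fin n) = c + 1 - ((n + 1 - t : ℕ) : Fin n) := by
        have : ((t + (n + 1 - t) : ℕ) : Fin n) = 1 := by
          have : t + (n + 1 - t) = n + 1 := by omega
          rw [this]; push_cast; simp
        push_cast at this ⊢
        linear_combination this
      rw [hj, key]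
      exact B (n + 1 - t) hu
  funext j; exact main j

end Prop1

section MaxL
variable {n : ℕ} [NeZero n]

lemma cast_inj_of_lt' {a b : ℕ} (ha : a < n) (hb : b < n) (h : (a : Fin n) = b) : a = b := by
  have := congrArg Fin.val h
  simpa [Nat.mod_eq_of_lt ha, Nat.mod_eq_of_lt hb] using this

/-- abs-max argument with one exempt row where the value is 0 -/
lemma diag3_del (hn : 3 ≤ n) (i : Fin n) (y : Fin n → ℝ)
    (hrow : ∀ r : Fin n, r ≠ i → 3 * y r + y (r - 1) + y (r + 1) = 0)
    (hy : y i = 0) : y = 0 := by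
  obtain ⟨r₀, -, hr₀⟩ := Finset.exists_max_image Finset.univ (fun r => |y r|)
    ⟨i, Finset.mem_univ i⟩
  have hmax : ∀ j, |y j| ≤ |y r₀| := fun j => hr₀ j (Finset.mem_univ j)
  have hM : |y r₀| ≤ 0 := by
    by_cases h : r₀ = i
    · rw [h, hy]; simp
    · have h3 := hrow r₀ h
      have : 3 * |y r₀| ≤ 2 * |y r₀| := by
        have h4 : 3 * y r₀ = -(y (r₀ - 1) + y (r₀ + 1)) := by linarith
        calc 3 * |y r₀| = |3 * y r₀| := by rw [abs_mul]; simp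
        _ = |y (r₀ - 1) + y (r₀ + 1)| := by rw [h4, abs_neg]
        _ ≤ |y (r₀ - 1)| + |y (r₀ + 1)| := abs_add_le _ _
        _ ≤ 2 * |y r₀| := by have := hmax (r₀ - 1); have := hmax (r₀ + 1); linarith
      linarith [abs_nonneg (y r₀)]
    done
  funext j
  have := hmax j
  have := abs_nonneg (y j)
  have : |y j| = 0 := by linarith
  simpa using this

lemma diag3_full (hn : 3 ≤ n) (y : Fin n → ℝ)
    (hrow : ∀ r : Fin n, 3 * y r + y (r - 1) + y (r + 1) = 0) : y = 0 := by
  obtain ⟨r₀, -, hr₀⟩ := Finset.exists_max_image Finset.univ (fun r => |y r|)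
    ⟨0, Finset.mem_univ 0⟩
  have hmax : ∀ j, |y j| ≤ |y r₀| := fun j => hr₀ j (Finset.mem_univ j)
  have hM : |y r₀| ≤ 0 := by
    have h3 := hrow r₀
    have h4 : 3 * y r₀ = -(y (r₀ - 1) + y (r₀ + 1)) := by linarith
    have : 3 * |y r₀| ≤ 2 * |y r₀| := by
      calc 3 * |y r₀| = |3 * y r₀| := by rw [abs_mul]; simp
      _ = |y (r₀ - 1) + y (r₀ + 1)| := by rw [h4, abs_neg]
      _ ≤ |y (r₀ - 1)| + |y (r₀ + 1)| := abs_add_le _ _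
      _ ≤ 2 * |y r₀| := by have := hmax (r₀ - 1); have := hmax (r₀ + 1); linarith
    linarith [abs_nonneg (y r₀)]
  funext j
  have := hmax j
  have := abs_nonneg (y j)
  have : |y j| = 0 := by linarith
  simpa using this

/-- max propagation for the `-2` diagonal: solutions are constant -/
lemma diag2_full (hn : 3 ≤ n) (y : Fin n → ℝ)
    (hrow : ∀ r : Fin n, 2 * y r = y (r - 1) + y (r + 1)) :
    ∀ j : Fin n, y j = y 0 := by
  obtain ⟨r₀, -, hr₀⟩ := Finset.exists_max_image Finset.univ y ⟨0, Finset.mem_univ 0⟩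
  have hmax : ∀ j, y j ≤ y r₀ := fun j => hr₀ j (Finset.mem_univ j)
  have key : ∀ t : ℕ, y (r₀ + (t : Fin n)) = y r₀ := by
    intro t
    induction t with
    | zero => simp
    | succ m ih =>
      have hr := hrow (r₀ + (m : Fin n))
      have e1 : (r₀ + ((m:ℕ) : Fin n)) + 1 = r₀ + ((m+1 : ℕ) : Fin n) := by push_cast; ring
      rw [ih, e1] at hr
      have := hmax ((r₀ + ((m:ℕ) : Fin n)) - 1)
      have := hmax (r₀ + ((m+1 : ℕ) : Fin n))
      linarith
  have hall : ∀ j, y j = y r₀ := by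
    intro j
    have hj : j = r₀ + (((j - r₀).val : ℕ) : Fin n) := by
      rw [Fin.cast_val_eq_self]; ring
    rw [hj]; exact key _
  intro j; rw [hall j, hall 0]

lemma diag2_del_le (hn : 3 ≤ n) (i : Fin n) (y : Fin n → ℝ)
    (hrow : ∀ r : Fin n, r ≠ i → 2 * y r = y (r - 1) + y (r + 1))
    (hy : y i = 0) : ∀ j, y j ≤ 0 := by
  obtain ⟨r₀, -, hr₀⟩ := Finset.exists_max_image Finset.univ y ⟨0, Finset.mem_univ 0⟩
  have hmax : ∀ j, y j ≤ y r₀ := fun j => hr₀ j (Finset.mem_univ j)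
  set d : ℕ := (i - r₀).val with hd
  have hdn : d < n := (i - r₀).isLt
  have hi : i = r₀ + (d : Fin n) := by rw [hd, Fin.cast_val_eq_self]; ring
  have key : ∀ t : ℕ, t ≤ d → y (r₀ + (t : Fin n)) = y r₀ := by
    intro t
    induction t with
    | zero => intro _; simp
    | succ m ih =>
      intro ht
      have hne : (r₀ + ((m:ℕ) : Fin n)) ≠ i := by
        rw [hi]
        intro hh
        have := add_left_cancel hh
        have := cast_inj_of_lt' (by omega) (by omega) this
        omega
      have hr := hrow _ hne
      have e1 : (r₀ + ((m:ℕ) : Fin n)) + 1 = r₀ + ((m+1 : ℕ) : Fin n) := by push_cast; ring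
      rw [ih (by omega), e1] at hr
      have := hmax ((r₀ + ((m:ℕ) : Fin n)) - 1)
      have := hmax (r₀ + ((m+1 : ℕ) : Fin n))
      linarith
  have : y i = y r₀ := by rw [hi]; exact key d le_rfl
  intro j
  have h1 := hmax j
  rw [hy] at this
  linarith

lemma diag2_del (hn : 3 ≤ n) (i : Fin n) (y : Fin n → ℝ)
    (hrow : ∀ r : Fin n, r ≠ i → 2 * y r = y (r - 1) + y (r + 1))
    (hy : y i = 0) : y = 0 := by
  have h1 := diag2_del_le hn i y hrow hy
  have h2 := diag2_del_le hn i (fun j => - y j) (by intro r hr; have := hrow r hr; simp; linarith) (by simp [hy])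
  funext j
  have := h1 j
  have := h2 j
  simp at *
  linarith
end MaxL

section MatL
variable {n : ℕ} [NeZero n]

lemma finOne_ne_zero (hn : 3 ≤ n) : (1 : Fin n) ≠ 0 := by
  have : ((1 : ℕ) : Fin n) ≠ 0 := by
    rw [Ne, Fin.natCast_eq_zero, Nat.dvd_one]; omega
  simpa using this

lemma finTwo_ne_zero (hn : 3 ≤ n) : (2 : Fin n) ≠ 0 := by
  have : ((2 : ℕ) : Fin n) ≠ 0 := by
    rw [Ne, Fin.natCast_eq_zero]
    intro h
    have := Nat.le_of_dvd (by omega) h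
    omega
  simpa using this

lemma add_one_ne (hn : 3 ≤ n) (r : Fin n) : r + 1 ≠ r := by
  intro h; exact finOne_ne_zero hn (by linear_combination h)

lemma sub_one_ne (hn : 3 ≤ n) (r : Fin n) : r - 1 ≠ r := by
  intro h; exact finOne_ne_zero hn (by linear_combination -h)

lemma sub_one_ne_add (hn : 3 ≤ n) (r : Fin n) : r - 1 ≠ r + 1 := by
  intro h; exact finTwo_ne_zero hn (by linear_combination -h)

lemma cycle_adj_iff (hn : 3 ≤ n) (u v : Fin n) :
    (SimpleGraph.cycleGraph n).Adj u v ↔ (v = u + 1 ∨ u = v + 1) := by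
  rw [SimpleGraph.cycleGraph_adj']
  have hval : ∀ w : Fin n, w.val = 1 ↔ w = 1 := by
    intro w
    rw [Fin.ext_iff, Fin.val_one']
    have h1 : 1 % n = 1 := Nat.mod_eq_of_lt (by omega)
    rw [h1]
  rw [hval, hval, sub_eq_iff_eq_add, sub_eq_iff_eq_add,
      add_comm (1 : Fin n) v, add_comm (1 : Fin n) u]
  tauto

/-- structural facts from membership in S(C_n) -/
lemma insg_right (hn : 3 ≤ n) {A : Matrix (Fin n) (Fin n) ℝ}
    (hA : InSG (SimpleGraph.cycleGraph n) A) (r : Fin n) : A r (r + 1) ≠ 0 := by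
  rw [hA.2 r (r+1) (add_one_ne hn r).symm, cycle_adj_iff hn]
  exact Or.inl rfl

lemma insg_left (hn : 3 ≤ n) {A : Matrix (Fin n) (Fin n) ℝ}
    (hA : InSG (SimpleGraph.cycleGraph n) A) (r : Fin n) : A r (r - 1) ≠ 0 := by
  rw [hA.2 r (r-1) (sub_one_ne hn r).symm, cycle_adj_iff hn]
  exact Or.inr (by ring)

lemma insg_zero (hn : 3 ≤ n) {A : Matrix (Fin n) (Fin n) ℝ}
    (hA : InSG (SimpleGraph.cycleGraph n) A) {r c : Fin n}
    (h1 : c ≠ r - 1) (h2 : c ≠ r) (h3 : c ≠ r + 1) : A r c = 0 := by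
  by_contra h
  have h' := (cycle_adj_iff hn r c).mp ((hA.2 r c (Ne.symm h2)).mp h)
  rcases h' with h | h
  · exact h3 h
  · exact h1 (by rw [h]; ring)

lemma mulVec_three (hn : 3 ≤ n) (A : Matrix (Fin n) (Fin n) ℝ)
    (hz : ∀ r c : Fin n, c ≠ r - 1 → c ≠ r → c ≠ r + 1 → A r c = 0)
    (y : Fin n → ℝ) (r : Fin n) :
    A.mulVec y r = A r (r-1) * y (r-1) + A r r * y r + A r (r+1) * y (r+1) := by
  have hsum : A.mulVec y r = ∑ c : Fin n, A r c * y c := rfl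
  rw [hsum]
  rw [show (Finset.univ : Finset (Fin n)) = insert (r-1) (insert r {r+1}) ∪
      (Finset.univ \ insert (r-1) (insert r {r+1})) from by
    rw [Finset.union_sdiff_of_subset (Finset.subset_univ _)]]
  rw [Finset.sum_union (Finset.disjoint_sdiff)]
  have h2 : ∑ c ∈ Finset.univ \ insert (r-1) (insert r {r+1}), A r c * y c = 0 := by
    apply Finset.sum_eq_zero
    intro c hc
    simp only [Finset.mem_sdiff, Finset.mem_insert, Finset.mem_singleton] at hc
    push_neg at hc
    rw [hz r c hc.2.1 hc.2.2.1 hc.2.2.2, zero_mul]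
  rw [h2, add_zero]
  rw [Finset.sum_insert (by simp [sub_one_ne hn r, sub_one_ne_add hn r]),
      Finset.sum_insert (by simp [(add_one_ne hn r).symm]), Finset.sum_singleton]
  ring

end MatL

section NullL
variable {V : Type*} [Fintype V] [DecidableEq V]

lemma ker_mem_iff (A : Matrix V V ℝ) (y : V → ℝ) :
    y ∈ LinearMap.ker A.mulVecLin ↔ A.mulVec y = 0 := by
  rw [LinearMap.mem_ker, mulVecLin_apply]

/-- extending a vector on `V \ {i}` by zero at `i`. -/
def extZ (i : V) (z : {v : V // v ≠ i} → ℝ) : V → ℝ :=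
  fun u => if h : u = i then 0 else z ⟨u, h⟩

lemma extZ_sum (A : Matrix V V ℝ) (i : V) (z : {v : V // v ≠ i} → ℝ) (r : V) :
    A.mulVec (extZ i z) r = ∑ u : {v : V // v ≠ i}, A r u.1 * z u := by
  have h1 : A.mulVec (extZ i z) r = ∑ u : V, A r u * extZ i z u := rfl
  rw [h1]
  rw [← Finset.sum_subset (Finset.subset_univ (Finset.univ.erase i))]
  · rw [Finset.sum_subtype (Finset.univ.erase i)
      (p := fun v => v ≠ i) (by intro x; simp) (fun u => A r u * extZ i z u)]
    apply Finset.sum_congr rfl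
    intro u _
    rw [extZ, dif_neg u.2]
  · intro u _ hu
    simp only [Finset.mem_erase, Finset.mem_univ, and_true, not_not] at hu
    rw [extZ, dif_pos hu, mul_zero]

lemma del_mulVec (A : Matrix V V ℝ) (i : V) (z : {v : V // v ≠ i} → ℝ)
    (r : {v : V // v ≠ i}) :
    (deleteRC A i).mulVec z r = ∑ u : {v : V // v ≠ i}, A r.1 u.1 * z u := rfl

/-- k ≤ l + 1 for arbitrary real symmetric-pattern-free matrices -/
lemma null_le_del_add_one (A : Matrix V V ℝ) (i : V) :
    nullity A ≤ nullity (deleteRC A i) + 1 := by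
  classical
  set K := LinearMap.ker A.mulVecLin
  let φ : K →ₗ[ℝ] ℝ := (LinearMap.proj i).comp K.subtype
  have hrank : Module.finrank ℝ (LinearMap.range φ) + Module.finrank ℝ (LinearMap.ker φ)
      = Module.finrank ℝ K := LinearMap.finrank_range_add_finrank_ker φ
  have h1 : Module.finrank ℝ (LinearMap.range φ) ≤ 1 := by
    have := Submodule.finrank_le (LinearMap.range φ)
    simpa using this
  -- ker φ injects into ker of the deleted matrix
  let ψ : LinearMap.ker φ →ₗ[ℝ] LinearMap.ker (deleteRC A i).mulVecLin :=
    { toFun := fun w => ⟨fun u => w.1.1 u.1, by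
        rw [ker_mem_iff]
        funext r
        have hw : A.mulVec w.1.1 = 0 := (ker_mem_iff A w.1.1).mp w.1.2
        have hwi : w.1.1 i = 0 := w.2
        have hext : extZ i (fun u => w.1.1 u.1) = w.1.1 := by
          funext u
          rw [extZ]
          split
          · rename_i h; rw [h, hwi]
          · rfl
        have := extZ_sum A i (fun u => w.1.1 u.1) r.1
        rw [hext] at this
        rw [Pi.zero_apply, del_mulVec, ← this, hw, Pi.zero_apply]⟩
      map_add' := fun w₁ w₂ => rfl
      map_smul' := fun c w => rfl }
  have hψ : Function.Injective ψ := by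
    intro w₁ w₂ h
    have h' : ∀ u : {v : V // v ≠ i}, w₁.1.1 u.1 = w₂.1.1 u.1 := by
      intro u
      have hh : (ψ w₁).1 = (ψ w₂).1 := congrArg Subtype.val h
      exact congrFun hh u
    ext u
    by_cases hu : u = i
    · rw [hu]
      have h1 : w₁.1.1 i = 0 := w₁.2
      have h2 : w₂.1.1 i = 0 := w₂.2
      rw [h1, h2]
    · exact h' ⟨u, hu⟩
  have h2 : Module.finrank ℝ (LinearMap.ker φ)
      ≤ Module.finrank ℝ (LinearMap.ker (deleteRC A i).mulVecLin) :=
    LinearMap.finrank_le_finrank_of_injective hψ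
  calc nullity A = Module.finrank ℝ K := rfl
  _ = Module.finrank ℝ (LinearMap.range φ) + Module.finrank ℝ (LinearMap.ker φ) := hrank.symm
  _ ≤ 1 + nullity (deleteRC A i) := by
      unfold nullity; exact add_le_add h1 h2
  _ = nullity (deleteRC A i) + 1 := by ring

end NullL

section TrigL
variable {n : ℕ} [NeZero n]

/-- `cos (θ * (a % n) + φ) = cos (θ * a + φ)` for `θ = 2π/n`. -/
lemma cos_theta_mod (hn : 3 ≤ n) (a : ℕ) (φ : ℝ) :
    Real.cos ((2 * π / n) * ((a % n : ℕ) : ℝ) + φ) = Real.cos ((2 * π / n) * (a : ℝ) + φ) := by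
  set θ : ℝ := 2 * π / n with hθ
  have hn0 : (n : ℝ) ≠ 0 := by positivity
  have key : θ * (a : ℝ) + φ = (θ * ((a % n : ℕ) : ℝ) + φ) + ((a / n : ℕ) : ℝ) * (2 * π) := by
    have h1 : (a : ℝ) = ((a % n : ℕ) : ℝ) + ((a / n : ℕ) : ℝ) * (n : ℝ) := by
      conv_lhs => rw [← Nat.mod_add_div a n]
      push_cast
      ring
    rw [h1, hθ]
    field_simp
    ring
  rw [key, Real.cos_add_nat_mul_two_pi]

/-- the phase vector based at `i` -/
noncomputable def pvec (i : Fin n) (φ : ℝ) : Fin n → ℝ :=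
  fun j => Real.cos ((2 * π / n) * (((j - i : Fin n)).val : ℝ) + φ)

lemma pvec_row (hn : 3 ≤ n) (i : Fin n) (φ : ℝ) (r : Fin n) :
    pvec i φ (r - 1) + pvec i φ (r + 1) = 2 * Real.cos (2 * π / n) * pvec i φ r := by
  set θ : ℝ := 2 * π / n with hθ
  have hone : (1 : Fin n).val = 1 := by
    rw [Fin.val_one']; exact Nat.mod_eq_of_lt (by omega)
  set x : Fin n := r - i with hx
  set a : ℕ := x.val with ha
  have e1 : (r + 1) - i = x + 1 := by rw [hx]; ring
  have e2 : (r - 1) - i = x - 1 := by rw [hx]; ring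
  have hv1 : ((x + 1 : Fin n)).val = (a + 1) % n := by
    rw [Fin.add_def, hone]
  have hv2 : ((x - 1 : Fin n)).val = (a + (n - 1)) % n := by
    rw [Fin.sub_def, hone]
    simp [Nat.add_comm]
    rfl
  have hp1 : pvec i φ (r + 1) = Real.cos (θ * (a : ℝ) + θ + φ) := by
    rw [pvec, e1, hv1]
    have := cos_theta_mod hn (a + 1) φ
    rw [hθ]
    rw [this]
    congr 1
    push_cast
    ring
  have hp2 : pvec i φ (r - 1) = Real.cos (θ * (a : ℝ) - θ + φ) := by
    rw [pvec, e2, hv2]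
    have := cos_theta_mod hn (a + (n - 1)) φ
    rw [hθ]
    rw [this]
    have hc : ((a + (n - 1) : ℕ) : ℝ) = (a : ℝ) + (n : ℝ) - 1 := by
      push_cast [Nat.cast_sub (by omega : 1 ≤ n)]
      ring
    rw [hc]
    have hθn : θ * ((n : ℝ)) = 2 * π := by
      rw [hθ]; field_simp
    have : θ * ((a : ℝ) + (n : ℝ) - 1) + φ = (θ * (a : ℝ) - θ + φ) + (1 : ℕ) * (2 * π) := by
      push_cast
      linear_combination hθn
    rw [this, Real.cos_add_nat_mul_two_pi]
  have hp0 : pvec i φ r = Real.cos (θ * (a : ℝ) + φ) := by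
    rw [pvec, ← hx, ← ha, ← hθ]
  have key : ∀ u : ℝ, Real.cos (u - θ) + Real.cos (u + θ) = 2 * Real.cos θ * Real.cos u := by
    intro u
    rw [Real.cos_sub, Real.cos_add]
    ring
  rw [hp0, hp1, hp2,
    show θ * (a:ℝ) - θ + φ = (θ * a + φ) - θ by ring,
    show θ * (a:ℝ) + θ + φ = (θ * a + φ) + θ by ring]
  exact key _

lemma pvec_at_base (i : Fin n) (φ : ℝ) : pvec i φ i = Real.cos φ := by
  rw [pvec]
  simp

lemma pvec_at_next (hn : 3 ≤ n) (i : Fin n) (φ : ℝ) :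
    pvec i φ (i + 1) = Real.cos ((2 * π / n) + φ) := by
  rw [pvec]
  have : (i + 1 - i : Fin n) = 1 := by ring
  rw [this, Fin.val_one']
  rw [Nat.mod_eq_of_lt (by omega)]
  norm_num

end TrigL

section CycL
variable {n : ℕ} [NeZero n]

/-- the weighted cycle matrix: weight `g j` on edge `{j, j+1}`, diagonal `h`. -/
noncomputable def cyc (g h : Fin n → ℝ) : Matrix (Fin n) (Fin n) ℝ :=
  Matrix.of fun u v =>
    if v = u + 1 then g u else if u = v + 1 then g v else if u = v then h u else 0

variable {g h : Fin n → ℝ}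

lemma cyc_right (hn : 3 ≤ n) (r : Fin n) : cyc g h r (r + 1) = g r := by
  rw [cyc, Matrix.of_apply, if_pos rfl]

lemma cyc_left (hn : 3 ≤ n) (r : Fin n) : cyc g h r (r - 1) = g (r - 1) := by
  rw [cyc, Matrix.of_apply, if_neg (sub_one_ne_add hn r), if_pos (by ring)]

lemma cyc_diag (hn : 3 ≤ n) (r : Fin n) : cyc g h r r = h r := by
  rw [cyc, Matrix.of_apply, if_neg (Ne.symm (add_one_ne hn r)),
    if_neg (Ne.symm (add_one_ne hn r)), if_pos rfl]

lemma cyc_off (hn : 3 ≤ n) {r c : Fin n} (h1 : c ≠ r - 1) (h2 : c ≠ r) (h3 : c ≠ r + 1) :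
    cyc g h r c = 0 := by
  rw [cyc, Matrix.of_apply, if_neg h3, if_neg, if_neg (Ne.symm h2)]
  intro hh
  exact h1 (by rw [hh]; ring)

lemma cyc_symm (hn : 3 ≤ n) : (cyc g h).IsSymm := by
  rw [Matrix.IsSymm]
  ext u v
  rw [Matrix.transpose_apply]
  show cyc g h v u = cyc g h u v
  by_cases hvu : v = u + 1
  · by_cases huv : u = v + 1
    · exact absurd (by linear_combination - hvu - huv) (finTwo_ne_zero hn)
    · rw [cyc, Matrix.of_apply, Matrix.of_apply, if_neg huv, if_pos hvu, if_pos hvu]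
  · by_cases huv : u = v + 1
    · rw [cyc, Matrix.of_apply, Matrix.of_apply, if_pos huv, if_neg hvu, if_pos huv]
    · by_cases hd : u = v
      · subst hd
        rfl
      · rw [cyc, Matrix.of_apply, Matrix.of_apply, if_neg huv, if_neg hvu,
          if_neg (Ne.symm hd), if_neg hvu, if_neg huv, if_neg hd]

lemma cyc_insg (hn : 3 ≤ n) (hg : ∀ j, g j ≠ 0) :
    InSG (SimpleGraph.cycleGraph n) (cyc g h) := by
  refine ⟨cyc_symm hn, fun u v huv => ?_⟩
  rw [cycle_adj_iff hn]
  constructor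
  · intro hA
    by_contra hcon
    push_neg at hcon
    refine hA (cyc_off hn ?_ (Ne.symm huv) hcon.1)
    intro hh
    exact hcon.2 (by rw [hh]; ring)
  · rintro (hh | hh)
    · rw [hh, cyc_right hn]; exact hg u
    · rw [show v = u - 1 from by rw [hh]; ring, cyc_left hn]
      exact hg (u - 1)

lemma cyc_mulVec (hn : 3 ≤ n) (y : Fin n → ℝ) (r : Fin n) :
    (cyc g h).mulVec y r = g (r-1) * y (r-1) + h r * y r + g r * y (r+1) := by
  rw [mulVec_three hn _ (fun r c h1 h2 h3 => cyc_off hn h1 h2 h3),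
    cyc_left hn, cyc_diag hn, cyc_right hn]

lemma ker_iff_rows (A : Matrix (Fin n) (Fin n) ℝ) (y : Fin n → ℝ) :
    A.mulVec y = 0 ↔ ∀ r, A.mulVec y r = 0 := by
  constructor
  · intro h r; rw [h]; rfl
  · intro h; funext r; rw [h r]; rfl

lemma symm_dot (M : Matrix (Fin n) (Fin n) ℝ) (hM : M.IsSymm) (x y : Fin n → ℝ) :
    x ⬝ᵥ (M *ᵥ y) = (M *ᵥ x) ⬝ᵥ y := by
  rw [Matrix.dotProduct_mulVec, ← Matrix.mulVec_transpose, hM.eq]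

lemma dot_two_supp (hn : 3 ≤ n) (i : Fin n) (a b : ℝ) (f y : Fin n → ℝ)
    (hf : ∀ r, f r = if r = i then a else if r = i + 1 then b else 0) :
    f ⬝ᵥ y = a * y i + b * y (i + 1) := by
  classical
  rw [dotProduct]
  rw [← Finset.sum_subset (Finset.subset_univ ({i, i+1} : Finset (Fin n)))
    (fun r _ hr => by
      simp only [Finset.mem_insert, Finset.mem_singleton] at hr
      push_neg at hr
      rw [hf r, if_neg hr.1, if_neg hr.2, zero_mul])]
  rw [Finset.sum_insert (by simp [Ne.symm (add_one_ne hn i)]), Finset.sum_singleton,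
    hf i, hf (i+1), if_pos rfl, if_neg (add_one_ne hn i), if_pos rfl]

/-- generic: kernel trivial gives nullity zero. -/
lemma nullity_zero_of {V : Type*} [Fintype V] (A : Matrix V V ℝ)
    (h : ∀ y, A.mulVec y = 0 → y = 0) : nullity A = 0 := by
  have hker : LinearMap.ker A.mulVecLin = ⊥ := by
    rw [eq_bot_iff]
    intro y hy
    rw [LinearMap.mem_ker, mulVecLin_apply] at hy
    rw [Submodule.mem_bot]
    exact h y hy
  rw [nullity, hker, finrank_bot]

/-- generic: kernel spanned by one nonzero vector gives nullity one. -/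
lemma nullity_one_of {V : Type*} [Fintype V] (A : Matrix V V ℝ) (v : V → ℝ)
    (hv : v ≠ 0) (hker : A.mulVec v = 0)
    (h : ∀ y, A.mulVec y = 0 → ∃ c : ℝ, y = c • v) : nullity A = 1 := by
  have hk : LinearMap.ker A.mulVecLin = Submodule.span ℝ {v} := by
    apply le_antisymm
    · intro y hy
      rw [LinearMap.mem_ker, mulVecLin_apply] at hy
      obtain ⟨c, hc⟩ := h y hy
      rw [Submodule.mem_span_singleton]
      exact ⟨c, hc.symm⟩
    · rw [Submodule.span_le, Set.singleton_subset_iff]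
      rw [SetLike.mem_coe, LinearMap.mem_ker, mulVecLin_apply]
      exact hker
  rw [nullity, hk, finrank_span_singleton hv]

lemma nullity_pos_of {V : Type*} [Fintype V] (A : Matrix V V ℝ) (v : V → ℝ)
    (hv : v ≠ 0) (hker : A.mulVec v = 0) : 1 ≤ nullity A := by
  rw [nullity]
  rw [Nat.one_le_iff_ne_zero]
  intro h0
  rw [Submodule.finrank_eq_zero] at h0
  have : v ∈ LinearMap.ker A.mulVecLin := by
    rw [LinearMap.mem_ker, mulVecLin_apply]; exact hker
  rw [h0, Submodule.mem_bot] at this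
  exact hv this

lemma nullity_two_le_of {V : Type*} [Fintype V] (A : Matrix V V ℝ) (v w : V → ℝ)
    (hker_v : A.mulVec v = 0) (hker_w : A.mulVec w = 0)
    (hli : LinearIndependent ℝ ![v, w]) : 2 ≤ nullity A := by
  have hspan : Submodule.span ℝ (Set.range ![v, w]) ≤ LinearMap.ker A.mulVecLin := by
    rw [Submodule.span_le]
    rintro x ⟨k, rfl⟩
    fin_cases k <;>
      simp only [Matrix.cons_val_zero, Matrix.cons_val_one, Matrix.head_cons, SetLike.mem_coe,
        LinearMap.mem_ker, mulVecLin_apply]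
    · exact hker_v
    · exact hker_w
  have h2 : Module.finrank ℝ (Submodule.span ℝ (Set.range ![v, w])) = 2 := by
    rw [finrank_span_eq_card hli]
    simp
  calc (2 : ℕ) = Module.finrank ℝ (Submodule.span ℝ (Set.range ![v, w])) := h2.symm
  _ ≤ Module.finrank ℝ (LinearMap.ker A.mulVecLin) := Submodule.finrank_mono hspan
  _ = nullity A := rfl

end CycL
section SnipL
variable {n : ℕ} [NeZero n]

theorem snip_all (hn : 3 ≤ n) (i : Fin n) (A : Matrix (Fin n) (Fin n) ℝ)
    (hA : InSG (SimpleGraph.cycleGraph n) A) : HasSNIP A i := by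
  intro X hX hAX hIX hrows
  have hcol : ∀ c r, X r c = 0 := by
    intro c
    have hrows' : ∀ r, r ≠ i → (fun r => A r (r-1)) r * (fun u => X u c) (r - 1) +
        (fun r => A r r) r * (fun u => X u c) r +
        (fun r => A r (r+1)) r * (fun u => X u c) (r + 1) = 0 := by
      intro r hr
      have h1 := hrows r hr c
      rw [Matrix.mul_apply] at h1
      have h3 := mulVec_three hn A (fun r c h1 h2 h3 => insg_zero hn hA h1 h2 h3)
        (fun u => X u c) r
      have h4 : A.mulVec (fun u => X u c) r = ∑ u, A r u * X u c := rfl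
      rw [h4, h1] at h3
      simpa using h3.symm
    have h0 : X c c = 0 := by
      have := congrFun (congrFun hIX c) c
      simpa using this
    have h1 : X (c+1) c = 0 := by
      have h2 := congrFun (congrFun hAX (c+1)) c
      have h5 : A (c+1) c * X (c+1) c = 0 := by simpa [Matrix.hadamard] using h2
      have h6 : A (c+1) c ≠ 0 := by
        have := insg_left hn hA (c+1)
        rwa [add_sub_cancel_right] at this
      exact (mul_eq_zero.mp h5).resolve_left h6
    have h := prop_zero hn i c (fun r => A r (r-1)) (fun r => A r r) (fun r => A r (r+1))
      (fun u => X u c)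
      (fun r _ => insg_left hn hA r) (fun r _ => insg_right hn hA r)
      hrows' h0 h1
    intro r
    exact congrFun h r
  ext r c
  rw [hcol c r]
  rfl

lemma null_del_le_one (hn : 3 ≤ n) (i : Fin n) (A : Matrix (Fin n) (Fin n) ℝ)
    (hA : InSG (SimpleGraph.cycleGraph n) A) : nullity (deleteRC A i) ≤ 1 := by
  classical
  set K := LinearMap.ker (deleteRC A i).mulVecLin with hK
  have hne : (i + 1 : Fin n) ≠ i := add_one_ne hn i
  let ev : K →ₗ[ℝ] ℝ := (LinearMap.proj (⟨i+1, hne⟩ : {v : Fin n // v ≠ i})).comp K.subtype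
  have hinj : Function.Injective ev := by
    rw [← LinearMap.ker_eq_bot, eq_bot_iff]
    intro z hz
    rw [Submodule.mem_bot]
    rw [LinearMap.mem_ker] at hz
    have hzk : (deleteRC A i).mulVec z.1 = 0 := (ker_mem_iff _ _).mp z.2
    set y : Fin n → ℝ := extZ i z.1 with hy
    have hyrow : ∀ r, r ≠ i → (fun r => A r (r-1)) r * y (r - 1) +
        (fun r => A r r) r * y r + (fun r => A r (r+1)) r * y (r + 1) = 0 := by
      intro r hr
      have h3 := mulVec_three hn A (fun r c h1 h2 h3 => insg_zero hn hA h1 h2 h3) y r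
      simp only at h3 ⊢
      rw [← h3, hy, extZ_sum, ← del_mulVec A i z.1 ⟨r, hr⟩, hzk]
      rfl
    have hy0 : y i = 0 := by rw [hy, extZ, dif_pos rfl]
    have hy1 : y (i+1) = 0 := by
      rw [hy, extZ, dif_neg hne]
      exact hz
    have hyz := prop_zero hn i i (fun r => A r (r-1)) (fun r => A r r) (fun r => A r (r+1)) y
      (fun r hr => insg_left hn hA r) (fun r hr => insg_right hn hA r) hyrow hy0 hy1
    have hz0 : z = 0 := by
      ext u
      have h7 : y u.1 = 0 := by rw [hyz]; rfl
      rwa [hy, extZ, dif_neg u.2] at h7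
    exact hz0
  calc nullity (deleteRC A i) = Module.finrank ℝ K := rfl
  _ ≤ Module.finrank ℝ ℝ := LinearMap.finrank_le_finrank_of_injective hinj
  _ = 1 := Module.finrank_self ℝ

end SnipL
section ConsL
variable {n : ℕ} [NeZero n]

lemma sin_theta_pos (hn : 3 ≤ n) : 0 < Real.sin (2 * π / n) := by
  have hn0 : (0 : ℝ) < n := by positivity
  apply Real.sin_pos_of_pos_of_lt_pi
  · positivity
  · rw [div_lt_iff₀ hn0]
    nlinarith [Real.pi_pos, show (3 : ℝ) ≤ n by exact_mod_cast hn]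

/-- shared pieces about the two trig vectors -/
lemma Wv_base (hn : 3 ≤ n) (i : Fin n) : pvec i (-(π/2)) i = 0 := by
  rw [pvec_at_base]
  simp

lemma Wv_next (hn : 3 ≤ n) (i : Fin n) :
    pvec i (-(π/2)) (i + 1) = Real.sin (2 * π / n) := by
  rw [pvec_at_next hn]
  rw [show 2 * π / ↑n + -(π/2) = 2 * π / ↑n - π/2 by ring]
  exact Real.cos_sub_pi_div_two _

lemma Cv_base (hn : 3 ≤ n) (i : Fin n) : pvec i 0 i = 1 := by
  rw [pvec_at_base]
  simp

lemma Cv_next (hn : 3 ≤ n) (i : Fin n) : pvec i 0 (i + 1) = Real.cos (2 * π / n) := by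
  rw [pvec_at_next hn]
  norm_num

lemma del_ker_ext (A : Matrix (Fin n) (Fin n) ℝ) (i : Fin n) (z : {v : Fin n // v ≠ i} → ℝ)
    (hz : (deleteRC A i).mulVec z = 0) (r : Fin n) (hr : r ≠ i) :
    A.mulVec (extZ i z) r = 0 := by
  rw [extZ_sum, ← del_mulVec A i z ⟨r, hr⟩, hz]
  rfl

/-- entries of `cyc` away from `i` only depend on data away from `i`. -/
lemma cyc_del_congr (hn : 3 ≤ n) (i : Fin n) (g g' h h' : Fin n → ℝ)
    (hgg : ∀ j, j ≠ i → g j = g' j) (hhh : ∀ j, j ≠ i → h j = h' j) :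
    deleteRC (cyc g h) i = deleteRC (cyc g' h') i := by
  ext u v
  show cyc g h u.1 v.1 = cyc g' h' u.1 v.1
  by_cases h1 : (v : Fin n) = u + 1
  · rw [h1, cyc_right hn, cyc_right hn, hgg u u.2]
  · by_cases h2 : (u : Fin n) = v + 1
    · have h3 : (v : Fin n) = u - 1 := by rw [h2]; ring
      rw [h3, cyc_left hn, cyc_left hn, ← h3, hgg v v.2]
    · by_cases h4 : (u : Fin n) = v
      · rw [h4, cyc_diag hn, cyc_diag hn, hhh v v.2]
      · have h5 : (v : Fin n) ≠ u - 1 := by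
          intro hh; exact h2 (by rw [hh]; ring)
        rw [cyc_off hn h5 (Ne.symm h4) h1, cyc_off hn h5 (Ne.symm h4) h1]

/-- the pure trig matrix kills all phase vectors -/
lemma pvec_ker (hn : 3 ≤ n) (i : Fin n) (φ : ℝ) :
    (cyc (fun _ => (1:ℝ)) (fun _ => -(2 * Real.cos (2 * π / n)))).mulVec (pvec i φ) = 0 := by
  funext r
  rw [cyc_mulVec hn]
  have := pvec_row hn i φ r
  simp only [Pi.zero_apply]
  linear_combination this

/-- construction for (0,0) -/
lemma allows00 (hn : 3 ≤ n) (i : Fin n) :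
    ∃ A : Matrix (Fin n) (Fin n) ℝ, InSG (SimpleGraph.cycleGraph n) A ∧
      nullity A = 0 ∧ nullity (deleteRC A i) = 0 := by
  refine ⟨cyc (fun _ => 1) (fun _ => 3), cyc_insg hn (fun _ => one_ne_zero), ?_, ?_⟩
  · apply nullity_zero_of
    intro y hy
    apply diag3_full hn
    intro r
    have h := congrFun hy r
    rw [cyc_mulVec hn] at h
    simp only [Pi.zero_apply] at h
    linarith
  · apply nullity_zero_of
    intro z hz
    have hext := diag3_del hn i (extZ i z) ?_ (by rw [extZ, dif_pos rfl])
    · funext u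
      have h7 : extZ i z u.1 = 0 := by rw [hext]; rfl
      rwa [extZ, dif_neg u.2] at h7
    · intro r hr
      have h := del_ker_ext _ i z hz r hr
      rw [cyc_mulVec hn] at h
      linarith

/-- construction for (1,0) -/
lemma allows10 (hn : 3 ≤ n) (i : Fin n) :
    ∃ A : Matrix (Fin n) (Fin n) ℝ, InSG (SimpleGraph.cycleGraph n) A ∧
      nullity A = 1 ∧ nullity (deleteRC A i) = 0 := by
  refine ⟨cyc (fun _ => 1) (fun _ => -2), cyc_insg hn (fun _ => one_ne_zero), ?_, ?_⟩
  · apply nullity_one_of _ (fun _ => (1:ℝ))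
    · intro h
      have := congrFun h 0
      norm_num at this
    · funext r
      rw [cyc_mulVec hn]
      norm_num
    · intro y hy
      have hconst := diag2_full hn y ?_
      · exact ⟨y 0, funext fun j => by rw [hconst j]; simp⟩
      · intro r
        have h := congrFun hy r
        rw [cyc_mulVec hn] at h
        simp only [Pi.zero_apply] at h
        linarith
  · apply nullity_zero_of
    intro z hz
    have hext := diag2_del hn i (extZ i z) ?_ (by rw [extZ, dif_pos rfl])
    · funext u
      have h7 : extZ i z u.1 = 0 := by rw [hext]; rfl
      rwa [extZ, dif_neg u.2] at h7
    · intro r hr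
      have h := del_ker_ext _ i z hz r hr
      rw [cyc_mulVec hn] at h
      linarith

/-- the deleted trig matrix has nullity exactly one -/
lemma del_trig_null_one (hn : 3 ≤ n) (i : Fin n) :
    nullity (deleteRC (cyc (fun _ => (1:ℝ)) (fun _ => -(2 * Real.cos (2 * π / n)))) i) = 1 := by
  set A := cyc (fun _ : Fin n => (1:ℝ)) (fun _ => -(2 * Real.cos (2 * π / n))) with hA
  have hinsg : InSG (SimpleGraph.cycleGraph n) A := cyc_insg hn (fun _ => one_ne_zero)
  apply Nat.le_antisymm (null_del_le_one hn i A hinsg)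
  -- exhibit nonzero kernel vector: restriction of the sine vector
  set z : {v : Fin n // v ≠ i} → ℝ := fun u => pvec i (-(π/2)) u.1 with hzdef
  have hext : extZ i z = pvec i (-(π/2)) := by
    funext u
    rw [extZ]
    split
    · rename_i hh; rw [hh, Wv_base hn]
    · rfl
  apply nullity_pos_of _ z
  · intro h0
    have h1 : z ⟨i + 1, add_one_ne hn i⟩ = 0 := by rw [h0]; rfl
    rw [hzdef] at h1
    simp only at h1
    rw [Wv_next hn] at h1
    exact absurd h1 (ne_of_gt (sin_theta_pos hn))
  · funext r
    rw [del_mulVec, ← extZ_sum, hext, pvec_ker hn]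
    rfl

/-- construction for (2,1) -/
lemma allows21 (hn : 3 ≤ n) (i : Fin n) :
    ∃ A : Matrix (Fin n) (Fin n) ℝ, InSG (SimpleGraph.cycleGraph n) A ∧
      nullity A = 2 ∧ nullity (deleteRC A i) = 1 := by
  set A := cyc (fun _ : Fin n => (1:ℝ)) (fun _ => -(2 * Real.cos (2 * π / n))) with hA
  have hinsg : InSG (SimpleGraph.cycleGraph n) A := cyc_insg hn (fun _ => one_ne_zero)
  have hdel := del_trig_null_one hn i
  rw [← hA] at hdel
  refine ⟨A, hinsg, ?_, hdel⟩
  apply Nat.le_antisymm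
  · have := null_le_del_add_one A i
    omega
  · apply nullity_two_le_of A (pvec i 0) (pvec i (-(π/2))) (pvec_ker hn i 0)
      (pvec_ker hn i _)
    rw [LinearIndependent.pair_iff' ?hx]
    case hx =>
      intro h0
      have := congrFun h0 i
      rw [Cv_base hn] at this
      norm_num at this
    intro a heq
    have h1 := congrFun heq i
    have h2 := congrFun heq (i + 1)
    simp only [Pi.smul_apply, smul_eq_mul] at h1 h2
    rw [Cv_base hn, Wv_base hn] at h1
    rw [Cv_next hn, Wv_next hn] at h2
    have ha : a = 0 := by linarith
    rw [ha] at h2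
    simp at h2
    exact absurd h2.symm (ne_of_gt (sin_theta_pos hn))

end ConsL
section Cons2L
variable {n : ℕ} [NeZero n]

/-- construction for (1,1) -/
lemma allows11 (hn : 3 ≤ n) (i : Fin n) :
    ∃ A : Matrix (Fin n) (Fin n) ℝ, InSG (SimpleGraph.cycleGraph n) A ∧
      nullity A = 1 ∧ nullity (deleteRC A i) = 1 := by
  set cθ : ℝ := Real.cos (2 * π / n) with hcθ
  set sθ : ℝ := Real.sin (2 * π / n) with hsθ
  have hsθ0 : sθ ≠ 0 := ne_of_gt (sin_theta_pos hn)
  set W : Fin n → ℝ := pvec i (-(π/2)) with hW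
  set C : Fin n → ℝ := pvec i 0 with hC
  set A := cyc (fun _ : Fin n => (1:ℝ)) (fun j => if j = i then 1 - 2*cθ else -(2*cθ)) with hA
  have hWrow : ∀ r : Fin n, W (r-1) + W (r+1) = 2 * cθ * W r := fun r => pvec_row hn i _ r
  have hCrow : ∀ r : Fin n, C (r-1) + C (r+1) = 2 * cθ * C r := fun r => pvec_row hn i _ r
  have hWb : W i = 0 := Wv_base hn i
  have hWn : W (i+1) = sθ := Wv_next hn i
  have hCb : C i = 1 := Cv_base hn i
  have hCn : C (i+1) = cθ := Cv_next hn i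
  have hWker : A.mulVec W = 0 := by
    funext r
    rw [cyc_mulVec hn]
    simp only [Pi.zero_apply]
    by_cases hr : r = i
    · rw [if_pos hr, hr]
      linear_combination hWrow i + hWb
    · rw [if_neg hr]
      linear_combination hWrow r
  have hCmul : ∀ r : Fin n, A.mulVec C r = if r = i then 1 else if r = i+1 then 0 else 0 := by
    intro r
    rw [cyc_mulVec hn]
    by_cases hr : r = i
    · rw [if_pos hr, if_pos hr, hr]
      linear_combination hCrow i + hCb
    · rw [if_neg hr, if_neg hr]
      have : (if r = i + 1 then (0:ℝ) else 0) = 0 := by split <;> rfl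
      rw [this]
      linear_combination hCrow r
  refine ⟨A, cyc_insg hn (fun _ => one_ne_zero), ?_, ?_⟩
  · apply nullity_one_of _ W
    · intro h0
      have := congrFun h0 (i+1)
      rw [hWn] at this
      exact hsθ0 this
    · exact hWker
    · intro y hy
      have hyi : y i = 0 := by
        have h1 : C ⬝ᵥ (A *ᵥ y) = 0 := by rw [hy]; simp
        rw [symm_dot A (cyc_symm hn) C y] at h1
        rw [dot_two_supp hn i 1 0 _ y hCmul] at h1
        linarith
      have hpy : ∀ r : Fin n, y (r-1) + y (r+1) = 2 * cθ * y r := by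
        intro r
        have h := congrFun hy r
        rw [cyc_mulVec hn] at h
        simp only [Pi.zero_apply] at h
        by_cases hr : r = i
        · subst hr
          rw [if_pos rfl] at h
          rw [hyi] at h ⊢
          linarith
        · rw [if_neg hr] at h
          linarith
      set c : ℝ := y (i+1) / sθ with hc
      set u : Fin n → ℝ := fun j => y j - c * W j with hu
      have hurow : ∀ r : Fin n, r ≠ i →
          (1:ℝ) * u (r-1) + (-(2*cθ)) * u r + 1 * u (r+1) = 0 := by
        intro r _
        simp only [hu]
        linear_combination hpy r - c * hWrow r
      have hu0 : u i = 0 := by simp only [hu]; rw [hWb, hyi]; ring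
      have hu1 : u (i+1) = 0 := by
        simp only [hu]
        rw [hWn, hc]
        field_simp
        ring
      have huz := prop_zero hn i i (fun _ => (1:ℝ)) (fun _ => -(2*cθ)) (fun _ => (1:ℝ)) u
        (fun _ _ => one_ne_zero) (fun _ _ => one_ne_zero) hurow hu0 hu1
      refine ⟨c, funext fun j => ?_⟩
      have := congrFun huz j
      simp only [hu, Pi.zero_apply] at this
      simp only [Pi.smul_apply, smul_eq_mul]
      linarith
  · rw [hA, cyc_del_congr hn i _ (fun _ => (1:ℝ)) _ (fun _ => -(2*cθ))
      (fun _ _ => rfl) (fun j hj => if_neg hj)]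
    exact del_trig_null_one hn i

/-- construction for (0,1) -/
lemma allows01 (hn : 3 ≤ n) (i : Fin n) :
    ∃ A : Matrix (Fin n) (Fin n) ℝ, InSG (SimpleGraph.cycleGraph n) A ∧
      nullity A = 0 ∧ nullity (deleteRC A i) = 1 := by
  set cθ : ℝ := Real.cos (2 * π / n) with hcθ
  set sθ : ℝ := Real.sin (2 * π / n) with hsθ
  have hsθ0 : sθ ≠ 0 := ne_of_gt (sin_theta_pos hn)
  set W : Fin n → ℝ := pvec i (-(π/2)) with hW
  set C : Fin n → ℝ := pvec i 0 with hC
  set g4 : Fin n → ℝ := fun j => if j = i then 2 else 1 with hg4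
  set A := cyc g4 (fun _ : Fin n => -(2*cθ)) with hA
  have hg4ne : ∀ j, g4 j ≠ 0 := by
    intro j
    simp only [hg4]
    split <;> norm_num
  have hWrow : ∀ r : Fin n, W (r-1) + W (r+1) = 2 * cθ * W r := fun r => pvec_row hn i _ r
  have hCrow : ∀ r : Fin n, C (r-1) + C (r+1) = 2 * cθ * C r := fun r => pvec_row hn i _ r
  have hWb : W i = 0 := Wv_base hn i
  have hWn : W (i+1) = sθ := Wv_next hn i
  have hCb : C i = 1 := Cv_base hn i
  have hCn : C (i+1) = cθ := Cv_next hn i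
  have hg4vals : ∀ r : Fin n, r ≠ i → r ≠ i + 1 → g4 (r - 1) = 1 ∧ g4 r = 1 := by
    intro r hr hr1
    constructor
    · have hne : r - 1 ≠ i := by
        intro hh
        exact hr1 (by rw [← hh]; ring)
      simp [hg4, hne]
    · simp [hg4, hr]
  have hmul : ∀ (x : Fin n → ℝ), (∀ r : Fin n, x (r-1) + x (r+1) = 2 * cθ * x r) →
      ∀ r : Fin n, A.mulVec x r =
        if r = i then x (i+1) else if r = i+1 then x i else 0 := by
    intro x hxrow r
    rw [cyc_mulVec hn]
    by_cases hr : r = i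
    · rw [if_pos hr, hr]
      rw [show g4 (i - 1) = 1 from by simp [hg4, sub_one_ne hn i],
        show g4 i = 2 from by simp [hg4]]
      linear_combination hxrow i
    · rw [if_neg hr]
      by_cases hr1 : r = i + 1
      · rw [if_pos hr1, hr1]
        simp only [add_sub_cancel_right]
        rw [show g4 i = 2 from by simp [hg4],
          show g4 (i+1) = 1 from by simp [hg4, add_one_ne hn i]]
        have hx1 := hxrow (i+1)
        rw [add_sub_cancel_right] at hx1
        linear_combination hx1
      · rw [if_neg hr1]
        obtain ⟨e1, e2⟩ := hg4vals r hr hr1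
        rw [e1, e2]
        linear_combination hxrow r
  have hWmul : ∀ r : Fin n, A.mulVec W r = if r = i then sθ else if r = i+1 then 0 else 0 := by
    intro r
    rw [hmul W hWrow r, hWn, hWb]
  have hCmul : ∀ r : Fin n, A.mulVec C r = if r = i then cθ else if r = i+1 then 1 else 0 := by
    intro r
    rw [hmul C hCrow r, hCn, hCb]
  refine ⟨A, cyc_insg hn hg4ne, ?_, ?_⟩
  · apply nullity_zero_of
    intro y hy
    have hyi : y i = 0 := by
      have h1 : W ⬝ᵥ (A *ᵥ y) = 0 := by rw [hy]; simp
      rw [symm_dot A (cyc_symm hn) W y, dot_two_supp hn i sθ 0 _ y hWmul] at h1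
      have h2 : sθ * y i = 0 := by linarith
      exact (mul_eq_zero.mp h2).resolve_left hsθ0
    have hyi1 : y (i+1) = 0 := by
      have h1 : C ⬝ᵥ (A *ᵥ y) = 0 := by rw [hy]; simp
      rw [symm_dot A (cyc_symm hn) C y, dot_two_supp hn i cθ 1 _ y hCmul] at h1
      rw [hyi] at h1
      linarith
    apply prop_zero hn i i (fun r => g4 (r-1)) (fun _ => -(2*cθ)) (fun r => g4 r) y
      (fun r _ => hg4ne _) (fun r _ => hg4ne _) ?_ hyi hyi1
    intro r hr
    have h := congrFun hy r
    rw [cyc_mulVec hn] at h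
    simpa using h
  · rw [hA, cyc_del_congr hn i g4 (fun _ => (1:ℝ)) (fun _ : Fin n => -(2*cθ)) (fun _ => -(2*cθ))
      (fun j hj => by simp [hg4, hj]) (fun _ _ => rfl)]
    exact del_trig_null_one hn i

end Cons2L
/-- for `n ≥ 3`, every matrix in `𝒮(C_n)` has the `i`-SNIP, and `(C_n,i)`
allows `(k,l)` with the SNIP iff `(k,l) ∈ {(0,0),(1,0),(0,1),(1,1),(2,1)}`. -/
theorem stmt12 {n : ℕ} (hn : 3 ≤ n) (i : Fin n) :
    (∀ A : Matrix (Fin n) (Fin n) ℝ, InSG (SimpleGraph.cycleGraph n) A → HasSNIP A i) ∧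
    (∀ k l : ℕ, AllowsSNIP (SimpleGraph.cycleGraph n) i k l ↔
      (k, l) ∈ ({(0,0), (1,0), (0,1), (1,1), (2,1)} : Set (ℕ × ℕ))) := by
  haveI : NeZero n := ⟨by omega⟩
  constructor
  · exact fun A hA => snip_all hn i A hA
  · intro k l
    constructor
    · intro hks
      obtain ⟨A, hA, hk, hl, -⟩ := hks
      have h1 : l ≤ 1 := by rw [← hl]; exact null_del_le_one hn i A hA
      have h2 : k ≤ l + 1 := by rw [← hk, ← hl]; exact null_le_del_add_one A i
      simp only [Set.mem_insert_iff, Set.mem_singleton_iff, Prod.mk.injEq]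
      omega
    · intro hmem
      simp only [Set.mem_insert_iff, Set.mem_singleton_iff, Prod.mk.injEq] at hmem
      rcases hmem with ⟨hk, hl⟩ | ⟨hk, hl⟩ | ⟨hk, hl⟩ | ⟨hk, hl⟩ | ⟨hk, hl⟩ <;>
        subst hk <;> subst hl
      · obtain ⟨A, hA, h1, h2⟩ := allows00 hn i
        exact ⟨A, hA, h1, h2, snip_all hn i A hA⟩
      · obtain ⟨A, hA, h1, h2⟩ := allows10 hn i
        exact ⟨A, hA, h1, h2, snip_all hn i A hA⟩
      · obtain ⟨A, hA, h1, h2⟩ := allows01 hn i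
        exact ⟨A, hA, h1, h2, snip_all hn i A hA⟩
      · obtain ⟨A, hA, h1, h2⟩ := allows11 hn i
        exact ⟨A, hA, h1, h2, snip_all hn i A hA⟩
      · obtain ⟨A, hA, h1, h2⟩ := allows21 hn i
        exact ⟨A, hA, h1, h2, snip_all hn i A hA⟩
end

section
/- Let n ≥ 2 and let P_n be the path graph on vertices 1,…,n. If i is a leaf of P_n (i.e., i = 1 or i = n), then (P_n,i) allows the nullity pair (k,ℓ) if and only if (k,ℓ) ∈ {(0,0),(1,0),(0,1)}. If i is not a leaf of P_n, then (P_n,i) allows the nullity pair (k,ℓ) if and only if (k,ℓ) ∈ {(0,0),(1,0),(0,1),(1,2)}. Moreover, for any vertex i, a matrix A ∈ 𝒮(P_n) has the i-SNIP if and only if its i-nullity pair lies in {(0,0),(1,0),(0,1)}. -/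
open Matrix

open Matrix Finset

section PathMatrix

variable {m : ℕ}

/-- tridiagonal support -/
def Band (A : Matrix (Fin m) (Fin m) ℝ) : Prop :=
  ∀ u v : Fin m, (u : ℕ) + 1 < (v : ℕ) ∨ (v : ℕ) + 1 < (u : ℕ) → A u v = 0

/-- nonzero on superdiagonal -/
def OffNZ (A : Matrix (Fin m) (Fin m) ℝ) : Prop :=
  ∀ u v : Fin m, (u : ℕ) + 1 = (v : ℕ) → A u v ≠ 0

def IsPathM (A : Matrix (Fin m) (Fin m) ℝ) : Prop := A.IsSymm ∧ Band A ∧ OffNZ A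

lemma band_row {A : Matrix (Fin m) (Fin m) ℝ} (hB : Band A) (x : Fin m → ℝ) (r : Fin m) :
    A.mulVec x r =
      (if h : 0 < (r : ℕ) then
         A r ⟨(r : ℕ) - 1, by have := r.isLt; omega⟩ * x ⟨(r : ℕ) - 1, by have := r.isLt; omega⟩ else 0)
      + A r r * x r
      + (if h : (r : ℕ) + 1 < m then
         A r ⟨(r : ℕ) + 1, h⟩ * x ⟨(r : ℕ) + 1, h⟩ else 0) := by
  classical
  set g : ℕ → ℝ := fun j => if h : j < m then A r ⟨j, h⟩ * x ⟨j, h⟩ else 0 with hg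
  have hsum : A.mulVec x r = ∑ j ∈ Finset.range m, g j := by
    rw [Matrix.mulVec, dotProduct, ← Fin.sum_univ_eq_sum_range]
    refine Finset.sum_congr rfl ?_
    intro s _
    simp [hg, s.isLt]
  have hfil : ∑ j ∈ Finset.range m, g j
      = ∑ j ∈ (Finset.range m).filter
          (fun j => j + 1 = (r : ℕ) ∨ j = (r : ℕ) ∨ j = (r : ℕ) + 1), g j := by
    refine (Finset.sum_filter_of_ne ?_).symm
    intro j hj hgj
    have hjm : j < m := Finset.mem_range.mp hj
    have hA : A r ⟨j, hjm⟩ ≠ 0 := by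
      intro h0
      apply hgj
      simp [hg, hjm, h0]
    by_contra hc
    push_neg at hc
    exact hA (hB r ⟨j, hjm⟩ (by simp at hc ⊢; omega))
  rw [hsum, hfil]
  have hrm := r.isLt
  by_cases h1 : 0 < (r : ℕ) <;> by_cases h2 : (r : ℕ) + 1 < m
  · have hset : (Finset.range m).filter
        (fun j => j + 1 = (r : ℕ) ∨ j = (r : ℕ) ∨ j = (r : ℕ) + 1)
        = {(r : ℕ) - 1, (r : ℕ), (r : ℕ) + 1} := by
      ext j; simp only [Finset.mem_filter, Finset.mem_range, Finset.mem_insert,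
        Finset.mem_singleton]; omega
    rw [hset, Finset.sum_insert (by simp only [Finset.mem_insert, Finset.mem_singleton]; omega), Finset.sum_insert (by simp only [Finset.mem_insert, Finset.mem_singleton]; omega),
      Finset.sum_singleton]
    simp only [hg, dif_pos h1, dif_pos h2, dif_pos hrm]
    rw [dif_pos (show (r : ℕ) - 1 < m by omega)]
    simp [Fin.eta]; ring
  · have hset : (Finset.range m).filter
        (fun j => j + 1 = (r : ℕ) ∨ j = (r : ℕ) ∨ j = (r : ℕ) + 1)
        = {(r : ℕ) - 1, (r : ℕ)} := by
      ext j; simp only [Finset.mem_filter, Finset.mem_range, Finset.mem_insert,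
        Finset.mem_singleton]; omega
    rw [hset, Finset.sum_insert (by simp only [Finset.mem_insert, Finset.mem_singleton]; omega), Finset.sum_singleton]
    simp only [hg, dif_pos h1, dif_neg h2, dif_pos hrm]
    rw [dif_pos (show (r : ℕ) - 1 < m by omega)]
    simp [Fin.eta]
  · have hr0 : (r : ℕ) = 0 := by omega
    have hset : (Finset.range m).filter
        (fun j => j + 1 = (r : ℕ) ∨ j = (r : ℕ) ∨ j = (r : ℕ) + 1)
        = {(r : ℕ), (r : ℕ) + 1} := by
      ext j; simp only [Finset.mem_filter, Finset.mem_range, Finset.mem_insert,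
        Finset.mem_singleton]; omega
    rw [hset, Finset.sum_insert (by simp), Finset.sum_singleton]
    simp only [hg, dif_neg h1, dif_pos h2, dif_pos hrm]
    simp [Fin.eta]
  · have hset : (Finset.range m).filter
        (fun j => j + 1 = (r : ℕ) ∨ j = (r : ℕ) ∨ j = (r : ℕ) + 1)
        = {(r : ℕ)} := by
      ext j; simp only [Finset.mem_filter, Finset.mem_range,
        Finset.mem_singleton]; omega
    rw [hset, Finset.sum_singleton]
    simp only [hg, dif_neg h1, dif_neg h2, dif_pos hrm]
    simp [Fin.eta]

lemma subdiag_ne {A : Matrix (Fin m) (Fin m) ℝ} (hP : IsPathM A)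
    (u v : Fin m) (h : (v : ℕ) + 1 = (u : ℕ)) : A u v ≠ 0 := by
  rw [hP.1.apply v u]
  exact hP.2.2 v u h

lemma prop_fwd {A : Matrix (Fin m) (Fin m) ℝ} (hP : IsPathM A)
    {x : Fin m → ℝ} {c : ℕ} (hm : 0 < m)
    (hrows : ∀ r : Fin m, (r : ℕ) < c → A.mulVec x r = 0)
    (h0 : x ⟨0, hm⟩ = 0) :
    ∀ j : Fin m, (j : ℕ) ≤ c → x j = 0 := by
  obtain ⟨hS, hB, hO⟩ := hP
  have key : ∀ jv : ℕ, ∀ (h : jv < m), jv ≤ c → x ⟨jv, h⟩ = 0 := by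
    intro jv
    induction jv using Nat.strong_induction_on with
    | _ jv IH =>
      intro h hjc
      match jv, h, hjc with
      | 0, h, hjc => exact h0
      | (t+1), h, hjc =>
        have ht : t < m := by omega
        have hrow := hrows ⟨t, ht⟩ (lt_of_lt_of_le (Nat.lt_succ_self t) hjc)
        rw [band_row hB x ⟨t, ht⟩] at hrow
        simp only [Fin.val_mk] at hrow
        rw [dif_pos (show t + 1 < m from h)] at hrow
        rw [IH t (Nat.lt_succ_self t) ht (by omega)] at hrow
        have hnz := hO ⟨t, ht⟩ ⟨t+1, h⟩ rfl
        by_cases ht0 : 0 < t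
        · rw [dif_pos ht0] at hrow
          rw [IH (t-1) (by omega) (by omega) (by omega)] at hrow
          simp only [mul_zero, zero_add, add_zero] at hrow
          exact ((mul_eq_zero.mp hrow).resolve_left hnz)
        · rw [dif_neg ht0] at hrow
          simp only [mul_zero, zero_add, add_zero] at hrow
          exact ((mul_eq_zero.mp hrow).resolve_left hnz)
  intro j hj
  exact key j.val j.isLt hj

lemma prop_bwd {A : Matrix (Fin m) (Fin m) ℝ} (hP : IsPathM A)
    {x : Fin m → ℝ} {c : ℕ} (hm : 0 < m)
    (hrows : ∀ r : Fin m, c < (r : ℕ) → A.mulVec x r = 0)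
    (hend : x ⟨m - 1, by omega⟩ = 0) :
    ∀ j : Fin m, c ≤ (j : ℕ) → x j = 0 := by
  obtain ⟨hS, hB, hO⟩ := hP
  have key : ∀ d : ℕ, ∀ (jv : ℕ) (h : jv < m), m - 1 - jv = d → c ≤ jv → x ⟨jv, h⟩ = 0 := by
    intro d
    induction d using Nat.strong_induction_on with
    | _ d IH =>
      intro jv h hd hc
      by_cases hlast : jv = m - 1
      · subst hlast; exact hend
      · have h1 : jv + 1 < m := by omega
        have hrow := hrows ⟨jv + 1, h1⟩ (Nat.lt_succ_of_le hc)
        rw [band_row hB x ⟨jv + 1, h1⟩] at hrow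
        simp only [Fin.val_mk] at hrow
        rw [dif_pos (show 0 < jv + 1 by omega)] at hrow
        have hmid : x ⟨jv + 1, h1⟩ = 0 := by
          have hd1 : d - 1 < d := by omega
          have he : m - 1 - (jv + 1) = d - 1 := by omega
          exact IH (d-1) hd1 (jv+1) h1 he (by omega)
        rw [hmid] at hrow
        have hnz : A ⟨jv+1, h1⟩ ⟨jv+1-1, by omega⟩ ≠ 0 := by
          rw [← hS.apply ⟨jv+1, h1⟩ ⟨jv+1-1, by omega⟩]
          exact hO ⟨jv+1-1, by omega⟩ ⟨jv+1, h1⟩ (by omega : jv + 1 - 1 + 1 = jv + 1)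
        by_cases h2 : jv + 1 + 1 < m
        · rw [dif_pos h2] at hrow
          have hnx : x ⟨jv + 1 + 1, h2⟩ = 0 := by
            have hd2 : d - 2 < d := by omega
            have he : m - 1 - (jv + 1 + 1) = d - 2 := by omega
            exact IH (d-2) hd2 (jv+1+1) h2 he (by omega)
          rw [hnx] at hrow
          simp only [mul_zero, zero_add, add_zero] at hrow
          exact (mul_eq_zero.mp hrow).resolve_left hnz
        · rw [dif_neg h2] at hrow
          simp only [mul_zero, zero_add, add_zero] at hrow
          exact (mul_eq_zero.mp hrow).resolve_left hnz
  intro j hj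
  exact key (m - 1 - j.val) j.val j.isLt rfl hj

end PathMatrix
set_option linter.unusedSectionVars false
section NullBasics
variable {V : Type*} [Fintype V] [DecidableEq V]

lemma mem_ker_iff {A : Matrix V V ℝ} {x : V → ℝ} :
    x ∈ LinearMap.ker A.mulVecLin ↔ A.mulVec x = 0 := by
  simp [LinearMap.mem_ker, Matrix.mulVecLin_apply]

lemma nullity_eq_zero {A : Matrix V V ℝ} :
    nullity A = 0 ↔ ∀ x, A.mulVec x = 0 → x = 0 := by
  rw [nullity, Submodule.finrank_eq_zero]
  constructor
  · intro h x hx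
    have : x ∈ (⊥ : Submodule ℝ (V → ℝ)) := h ▸ mem_ker_iff.mpr hx
    simpa using this
  · intro h
    rw [eq_bot_iff]
    intro x hx
    simpa using h x (mem_ker_iff.mp hx)

lemma nullity_pos_wit {A : Matrix V V ℝ} (h : nullity A ≠ 0) :
    ∃ x : V → ℝ, A.mulVec x = 0 ∧ x ≠ 0 := by
  by_contra hc
  push_neg at hc
  exact h (nullity_eq_zero.mpr hc)

lemma nullity_eq_one {A : Matrix V V ℝ} (hle : nullity A ≤ 1) {x : V → ℝ}
    (hx : A.mulVec x = 0) (hx0 : x ≠ 0) : nullity A = 1 := by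
  have h0 : nullity A ≠ 0 := fun h => hx0 (nullity_eq_zero.mp h x hx)
  omega

lemma ker_span {A : Matrix V V ℝ} (h1 : nullity A ≤ 1) {x y : V → ℝ}
    (hx : A.mulVec x = 0) (hx0 : x ≠ 0) (hy : A.mulVec y = 0) : ∃ t : ℝ, y = t • x := by
  have hsp : Submodule.span ℝ {x} ≤ LinearMap.ker A.mulVecLin := by
    rw [Submodule.span_le, Set.singleton_subset_iff]
    exact mem_ker_iff.mpr hx
  have hfr : Module.finrank ℝ (LinearMap.ker A.mulVecLin) ≤
      Module.finrank ℝ (Submodule.span ℝ ({x} : Set (V → ℝ))) := by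
    rw [finrank_span_singleton hx0]
    exact h1
  have := Submodule.eq_of_le_of_finrank_le hsp hfr
  have hmem : y ∈ Submodule.span ℝ ({x} : Set (V → ℝ)) := this ▸ mem_ker_iff.mpr hy
  rcases Submodule.mem_span_singleton.mp hmem with ⟨t, ht⟩
  exact ⟨t, ht.symm⟩

/-- The kernel of `A(i)`, realized as vectors on all of `V` vanishing at `i`
with all rows of `A *ᵥ x` other than row `i` vanishing. -/
def Kspace (A : Matrix V V ℝ) (i : V) : Submodule ℝ (V → ℝ) where
  carrier := {x | x i = 0 ∧ ∀ r, r ≠ i → A.mulVec x r = 0}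
  add_mem' := by
    rintro a b ⟨ha1, ha2⟩ ⟨hb1, hb2⟩
    refine ⟨by simp [ha1, hb1], fun r hr => ?_⟩
    rw [Matrix.mulVec_add]
    simp [ha2 r hr, hb2 r hr]
  zero_mem' := by
    refine ⟨rfl, fun r hr => ?_⟩
    simp [Matrix.mulVec_zero]
  smul_mem' := by
    rintro c a ⟨ha1, ha2⟩
    refine ⟨by simp [ha1], fun r hr => ?_⟩
    rw [Matrix.mulVec_smul]
    simp [ha2 r hr]

lemma mem_Kspace {A : Matrix V V ℝ} {i : V} {x : V → ℝ} :
    x ∈ Kspace A i ↔ x i = 0 ∧ ∀ r, r ≠ i → A.mulVec x r = 0 := Iff.rfl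

/-- extension by zero -/
def extz (i : V) : ({v : V // v ≠ i} → ℝ) →ₗ[ℝ] (V → ℝ) where
  toFun y := fun v => if h : v = i then 0 else y ⟨v, h⟩
  map_add' a b := by
    funext v
    by_cases h : v = i <;> simp [h]
  map_smul' c a := by
    funext v
    by_cases h : v = i <;> simp [h]

lemma extz_apply_ne {i : V} (y : {v : V // v ≠ i} → ℝ) (v : {v : V // v ≠ i}) :
    extz i y (v : V) = y v := by
  simp [extz, v.2]

lemma extz_apply_i {i : V} (y : {v : V // v ≠ i} → ℝ) : extz i y i = 0 := by
  simp [extz]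

lemma mulVec_extz (A : Matrix V V ℝ) (i : V) (y : {v : V // v ≠ i} → ℝ)
    (r : {v : V // v ≠ i}) :
    A.mulVec (extz i y) (r : V) = (deleteRC A i).mulVec y r := by
  rw [Matrix.mulVec, Matrix.mulVec, dotProduct, dotProduct]
  have h1 : ∑ v : V, A r v * extz i y v
      = A r i * extz i y i + ∑ v ∈ Finset.univ.erase i, A r v * extz i y v :=
    (Finset.add_sum_erase _ _ (Finset.mem_univ i)).symm
  rw [h1, extz_apply_i, mul_zero, zero_add]
  rw [Finset.sum_subtype (p := fun v => v ≠ i) (Finset.univ.erase i)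
    (fun x => by simp) (fun v => A r v * extz i y v)]
  refine Finset.sum_congr rfl (fun s _ => ?_)
  rw [extz_apply_ne]
  rfl

lemma nullity_deleteRC_eq (A : Matrix V V ℝ) (i : V) :
    nullity (deleteRC A i) = Module.finrank ℝ (Kspace A i) := by
  have hmem : ∀ y : {v : V // v ≠ i} → ℝ,
      y ∈ LinearMap.ker (deleteRC A i).mulVecLin → extz i y ∈ Kspace A i := by
    intro y hy
    refine ⟨extz_apply_i y, fun r hr => ?_⟩
    have := mulVec_extz A i y ⟨r, hr⟩
    rw [show ((⟨r, hr⟩ : {v : V // v ≠ i}) : V) = r from rfl] at this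
    rw [this]
    have h0 := mem_ker_iff.mp hy
    exact congrFun h0 ⟨r, hr⟩
  let f : LinearMap.ker (deleteRC A i).mulVecLin →ₗ[ℝ] Kspace A i :=
    LinearMap.codRestrict (Kspace A i)
      ((extz i).comp (LinearMap.ker (deleteRC A i).mulVecLin).subtype)
      (fun y => hmem y.1 y.2)
  have hbij : Function.Bijective f := by
    constructor
    · intro a b hab
      have : extz i a.1 = extz i b.1 := congrArg Subtype.val hab
      ext v
      have := congrFun this (v : V)
      rwa [extz_apply_ne, extz_apply_ne] at this
    · rintro ⟨x, hx1, hx2⟩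
      have hker : (fun v : {v : V // v ≠ i} => x v) ∈
          LinearMap.ker (deleteRC A i).mulVecLin := by
        rw [mem_ker_iff]
        funext r
        have hE : extz i (fun v : {v : V // v ≠ i} => x (v : V)) = x := by
          funext v
          by_cases h : v = i
          · subst h; rw [extz_apply_i, hx1]
          · exact extz_apply_ne _ ⟨v, h⟩
        have := mulVec_extz A i (fun v : {v : V // v ≠ i} => x (v : V)) r
        rw [hE] at this
        rw [Pi.zero_apply, ← this]
        exact hx2 r r.2
      refine ⟨⟨fun v => x v, hker⟩, ?_⟩
      apply Subtype.ext
      show extz i (fun v : {v : V // v ≠ i} => x (v : V)) = x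
      funext v
      by_cases h : v = i
      · subst h; rw [extz_apply_i, hx1]
      · exact extz_apply_ne _ ⟨v, h⟩
  exact (LinearEquiv.ofBijective f hbij).finrank_eq

lemma pair_zero {A : Matrix V V ℝ} (hS : A.IsSymm) {x : V → ℝ}
    (hx : A.mulVec x = 0) (y : V → ℝ) : x ⬝ᵥ A.mulVec y = 0 := by
  rw [Matrix.dotProduct_mulVec]
  have : x ᵥ* A = 0 := by
    rw [← hS, Matrix.vecMul_transpose, hx]
  rw [this]
  simp

lemma Kspace_mulVec {A : Matrix V V ℝ} {i : V} {x : V → ℝ} (hx : x ∈ Kspace A i) :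
    A.mulVec x = (A.mulVec x i) • (Pi.single i 1 : V → ℝ) := by
  funext r
  by_cases h : r = i
  · subst h; simp
  · rw [hx.2 r h]
    simp [Pi.single_apply, h]

lemma Kspace_eq_bot {A : Matrix V V ℝ} (hS : A.IsSymm) {i : V} {x : V → ℝ}
    (hx : A.mulVec x = 0) (hx0 : x ≠ 0) (hxi : x i ≠ 0) (h1 : nullity A ≤ 1) :
    Kspace A i = ⊥ := by
  rw [eq_bot_iff]
  intro y hy
  have hpz := pair_zero hS hx y
  rw [Kspace_mulVec hy] at hpz
  have hxi' : x ⬝ᵥ ((A.mulVec y i) • (Pi.single i 1 : V → ℝ)) = A.mulVec y i * x i := by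
    simp [dotProduct, Pi.single_apply, mul_comm]
  rw [hxi'] at hpz
  have hc : A.mulVec y i = 0 := by
    rcases mul_eq_zero.mp hpz with h | h
    · exact h
    · exact absurd h hxi
  have hyk : A.mulVec y = 0 := by
    rw [Kspace_mulVec hy, hc, zero_smul]
  rcases ker_span h1 hx hx0 hyk with ⟨t, ht⟩
  have hti : t * x i = 0 := by
    have h2 := congrFun ht i
    rw [hy.1] at h2
    simpa using h2.symm
  have ht0 : t = 0 := by
    rcases mul_eq_zero.mp hti with h | h
    · exact h
    · exact absurd h hxi
  rw [Submodule.mem_bot, ht, ht0, zero_smul]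

end NullBasics
section PathNull
variable {m : ℕ} {A : Matrix (Fin m) (Fin m) ℝ}

lemma mem_span_of_finrank_le_one {M : Type*} [AddCommGroup M] [Module ℝ M]
    {W : Submodule ℝ M} [FiniteDimensional ℝ W] (h1 : Module.finrank ℝ W ≤ 1)
    {x y : M} (hx : x ∈ W) (hx0 : x ≠ 0) (hy : y ∈ W) : ∃ t : ℝ, y = t • x := by
  have hsp : Submodule.span ℝ {x} ≤ W := by
    rw [Submodule.span_le, Set.singleton_subset_iff]; exact hx
  have hfr : Module.finrank ℝ W ≤ Module.finrank ℝ (Submodule.span ℝ ({x} : Set M)) := by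
    rw [finrank_span_singleton hx0]; exact h1
  have heq := Submodule.eq_of_le_of_finrank_le hsp hfr
  rcases Submodule.mem_span_singleton.mp (heq ▸ hy) with ⟨t, ht⟩
  exact ⟨t, ht.symm⟩

lemma ker_zero_of_first (hP : IsPathM A) (hm : 0 < m) {x : Fin m → ℝ}
    (hx : A.mulVec x = 0) (h0 : x ⟨0, hm⟩ = 0) : x = 0 := by
  funext j
  exact prop_fwd hP hm (c := m) (fun r _ => by rw [hx]; rfl) h0 j (le_of_lt j.isLt)

lemma ker_zero_of_last (hP : IsPathM A) (hm : 0 < m) {x : Fin m → ℝ}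
    (hx : A.mulVec x = 0) (h0 : x ⟨m - 1, by omega⟩ = 0) : x = 0 := by
  funext j
  exact prop_bwd hP hm (c := 0) (fun r _ => by rw [hx]; rfl) h0 j (Nat.zero_le _)

lemma ker_first_ne (hP : IsPathM A) (hm : 0 < m) {x : Fin m → ℝ}
    (hx : A.mulVec x = 0) (hx0 : x ≠ 0) : x ⟨0, hm⟩ ≠ 0 :=
  fun h => hx0 (ker_zero_of_first hP hm hx h)

lemma ker_last_ne (hP : IsPathM A) (hm : 0 < m) {x : Fin m → ℝ}
    (hx : A.mulVec x = 0) (hx0 : x ≠ 0) : x ⟨m - 1, by omega⟩ ≠ 0 :=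
  fun h => hx0 (ker_zero_of_last hP hm hx h)

lemma nullity_le_one (hP : IsPathM A) (hm : 0 < m) : nullity A ≤ 1 := by
  let φ : LinearMap.ker A.mulVecLin →ₗ[ℝ] ℝ :=
    (LinearMap.proj (⟨0, hm⟩ : Fin m)).comp (LinearMap.ker A.mulVecLin).subtype
  have hinj : Function.Injective φ := by
    rw [← LinearMap.ker_eq_bot, eq_bot_iff]
    rintro ⟨x, hx⟩ hφ
    have h0 : x ⟨0, hm⟩ = 0 := hφ
    rw [Submodule.mem_bot]
    exact Subtype.ext (ker_zero_of_first hP hm (mem_ker_iff.mp hx) h0)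
  calc nullity A ≤ Module.finrank ℝ ℝ := LinearMap.finrank_le_finrank_of_injective hinj
    _ = 1 := Module.finrank_self ℝ

lemma Kspace_left_zero (hP : IsPathM A) (hm : 0 < m) {i : Fin m} {x : Fin m → ℝ}
    (hx : x ∈ Kspace A i) (h0 : x ⟨0, hm⟩ = 0) :
    ∀ j : Fin m, (j : ℕ) ≤ (i : ℕ) → x j = 0 :=
  prop_fwd hP hm (c := (i : ℕ))
    (fun r hr => hx.2 r (Fin.ne_of_val_ne (Nat.ne_of_lt hr))) h0

lemma Kspace_right_zero (hP : IsPathM A) (hm : 0 < m) {i : Fin m} {x : Fin m → ℝ}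
    (hx : x ∈ Kspace A i) (h0 : x ⟨m - 1, by omega⟩ = 0) :
    ∀ j : Fin m, (i : ℕ) ≤ (j : ℕ) → x j = 0 :=
  prop_bwd hP hm (c := (i : ℕ))
    (fun r hr => hx.2 r (Fin.ne_of_val_ne (Nat.ne_of_gt hr))) h0

private noncomputable def φ2 (A : Matrix (Fin m) (Fin m) ℝ) (i : Fin m) (hm : 0 < m) :
    Kspace A i →ₗ[ℝ] ℝ × ℝ :=
  LinearMap.prod
    ((LinearMap.proj (⟨0, hm⟩ : Fin m)).comp (Kspace A i).subtype)
    ((LinearMap.proj (⟨m - 1, by omega⟩ : Fin m)).comp (Kspace A i).subtype)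

lemma φ2_inj (hP : IsPathM A) (hm : 0 < m) (i : Fin m) :
    Function.Injective (φ2 A i hm) := by
  rw [← LinearMap.ker_eq_bot, eq_bot_iff]
  rintro ⟨x, hx⟩ hφ
  have h0 : x ⟨0, hm⟩ = 0 ∧ x ⟨m - 1, by omega⟩ = 0 := by
    have := (LinearMap.mem_ker.mp hφ)
    exact ⟨congrArg Prod.fst this, congrArg Prod.snd this⟩
  rw [Submodule.mem_bot]
  apply Subtype.ext
  funext j
  rcases le_or_gt (j : ℕ) (i : ℕ) with h | h
  · exact Kspace_left_zero hP hm hx h0.1 j h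
  · exact Kspace_right_zero hP hm hx h0.2 j (le_of_lt h)

lemma Kspace_finrank_le_two (hP : IsPathM A) (hm : 0 < m) (i : Fin m) :
    Module.finrank ℝ (Kspace A i) ≤ 2 := by
  calc Module.finrank ℝ (Kspace A i) ≤ Module.finrank ℝ (ℝ × ℝ) :=
      LinearMap.finrank_le_finrank_of_injective (φ2_inj hP hm i)
    _ = 2 := by simp

lemma Kspace_finrank_le_one_left (hP : IsPathM A) (hm : 0 < m) {i : Fin m}
    (hi : (i : ℕ) = 0) : Module.finrank ℝ (Kspace A i) ≤ 1 := by
  let φ : Kspace A i →ₗ[ℝ] ℝ :=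
    (LinearMap.proj (⟨m - 1, by omega⟩ : Fin m)).comp (Kspace A i).subtype
  have hinj : Function.Injective φ := by
    rw [← LinearMap.ker_eq_bot, eq_bot_iff]
    rintro ⟨x, hx⟩ hφ
    have h0 : x ⟨m - 1, by omega⟩ = 0 := hφ
    rw [Submodule.mem_bot]
    apply Subtype.ext
    funext j
    exact Kspace_right_zero hP hm hx h0 j (by omega)
  calc Module.finrank ℝ (Kspace A i) ≤ Module.finrank ℝ ℝ :=
      LinearMap.finrank_le_finrank_of_injective hinj
    _ = 1 := Module.finrank_self ℝ

lemma Kspace_finrank_le_one_right (hP : IsPathM A) (hm : 0 < m) {i : Fin m}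
    (hi : (i : ℕ) = m - 1) : Module.finrank ℝ (Kspace A i) ≤ 1 := by
  let φ : Kspace A i →ₗ[ℝ] ℝ :=
    (LinearMap.proj (⟨0, hm⟩ : Fin m)).comp (Kspace A i).subtype
  have hinj : Function.Injective φ := by
    rw [← LinearMap.ker_eq_bot, eq_bot_iff]
    rintro ⟨x, hx⟩ hφ
    have h0 : x ⟨0, hm⟩ = 0 := hφ
    rw [Submodule.mem_bot]
    apply Subtype.ext
    funext j
    exact Kspace_left_zero hP hm hx h0 j (by omega)
  calc Module.finrank ℝ (Kspace A i) ≤ Module.finrank ℝ ℝ :=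
      LinearMap.finrank_le_finrank_of_injective hinj
    _ = 1 := Module.finrank_self ℝ

lemma maskL_mem (hB : Band A) {i : Fin m} {x : Fin m → ℝ} (hx : x ∈ Kspace A i) :
    (fun j : Fin m => if (j : ℕ) < (i : ℕ) then x j else 0) ∈ Kspace A i := by
  refine ⟨by simp, fun r hr => ?_⟩
  rcases lt_trichotomy ((r : ℕ)) ((i : ℕ)) with hri | hri | hri
  · have : A.mulVec (fun j : Fin m => if (j : ℕ) < (i : ℕ) then x j else 0) r
        = A.mulVec x r := by
      rw [Matrix.mulVec, Matrix.mulVec, dotProduct, dotProduct]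
      refine Finset.sum_congr rfl (fun s _ => ?_)
      by_cases hs : (s : ℕ) < (i : ℕ)
      · simp [hs]
      · simp only [if_neg hs, mul_zero]
        rcases Nat.lt_or_ge ((i : ℕ)) ((s : ℕ)) with h' | h'
        · rw [hB r s (Or.inl (by omega)), zero_mul]
        · have hsi : s = i := Fin.ext (by omega)
          rw [hsi, hx.1, mul_zero]
    rw [this]
    exact hx.2 r hr
  · exact absurd (Fin.ext hri) hr
  · have : A.mulVec (fun j : Fin m => if (j : ℕ) < (i : ℕ) then x j else 0) r = 0 := by
      rw [Matrix.mulVec, dotProduct]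
      refine Finset.sum_eq_zero (fun s _ => ?_)
      by_cases hs : (s : ℕ) < (i : ℕ)
      · rw [hB r s (Or.inr (by omega)), zero_mul]
      · simp [hs]
    rw [this]
end PathNull
section PathNull2
variable {m : ℕ} {A : Matrix (Fin m) (Fin m) ℝ}

lemma exc (hP : IsPathM A) (hm : 0 < m) {i : Fin m}
    (hA1 : nullity A = 1) (hK1 : Module.finrank ℝ (Kspace A i) = 1) : False := by
  obtain ⟨x, hx, hx0⟩ := nullity_pos_wit (by omega : nullity A ≠ 0)
  have hxf := ker_first_ne hP hm hx hx0
  have hxl := ker_last_ne hP hm hx hx0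
  by_cases hxi : x i = 0
  · have hxK : x ∈ Kspace A i := ⟨hxi, fun r _ => by rw [hx]; rfl⟩
    have hxLK := maskL_mem hP.2.1 hxK
    obtain ⟨t, ht⟩ := mem_span_of_finrank_le_one (le_of_eq hK1) hxK hx0 hxLK
    have h1 := congrFun ht ⟨m-1, by omega⟩
    simp only [Pi.smul_apply, smul_eq_mul] at h1
    rw [if_neg (show ¬(m - 1 < (i:ℕ)) by have := i.isLt; omega)] at h1
    have ht0 : t = 0 := by
      rcases mul_eq_zero.mp h1.symm with h | h
      · exact h
      · exact absurd h hxl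
    rw [ht0, zero_smul] at ht
    by_cases hi0 : (i : ℕ) = 0
    · exact hxf (by rw [← hxi]; congr 1; exact (Fin.ext hi0.symm))
    · have := congrFun ht ⟨0, hm⟩
      simp only at this
      rw [if_pos (by simpa using Nat.pos_of_ne_zero hi0)] at this
      exact hxf this
  · have hbot := Kspace_eq_bot hP.1 hx hx0 hxi (hA1 ▸ le_rfl)
    rw [hbot] at hK1
    simpa using hK1

lemma ell2_wit (hP : IsPathM A) (hm : 0 < m) {i : Fin m}
    (hK2 : Module.finrank ℝ (Kspace A i) = 2) :
    ∃ y z : Fin m → ℝ, y ∈ Kspace A i ∧ z ∈ Kspace A i ∧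
      (∀ j : Fin m, (i : ℕ) ≤ (j : ℕ) → y j = 0) ∧
      (∀ j : Fin m, (j : ℕ) ≤ (i : ℕ) → z j = 0) ∧
      y ⟨0, hm⟩ = 1 ∧ z ⟨m - 1, by omega⟩ = 1 := by
  have hrange : LinearMap.range (φ2 A i hm) = ⊤ := by
    apply Submodule.eq_top_of_finrank_eq
    rw [LinearMap.finrank_range_of_inj (φ2_inj hP hm i), hK2]
    simp
  obtain ⟨⟨y, hy⟩, hy2⟩ := (LinearMap.range_eq_top.mp hrange) ((1:ℝ), (0:ℝ))
  obtain ⟨⟨z, hz⟩, hz2⟩ := (LinearMap.range_eq_top.mp hrange) ((0:ℝ), (1:ℝ))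
  have hy0 : y ⟨0, hm⟩ = 1 := congrArg Prod.fst hy2
  have hyl : y ⟨m-1, by omega⟩ = 0 := congrArg Prod.snd hy2
  have hz0 : z ⟨0, hm⟩ = 0 := congrArg Prod.fst hz2
  have hzl : z ⟨m-1, by omega⟩ = 1 := congrArg Prod.snd hz2
  exact ⟨y, z, hy, hz, Kspace_right_zero hP hm hy hyl,
    Kspace_left_zero hP hm hz hz0, hy0, hzl⟩

lemma ell2_k1 (hP : IsPathM A) (hm : 0 < m) {i : Fin m}
    (hK2 : Module.finrank ℝ (Kspace A i) = 2) : nullity A = 1 := by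
  obtain ⟨y, z, hyK, hzK, hyR, hzL, hy0, hz1⟩ := ell2_wit hP hm hK2
  have hy' := Kspace_mulVec hyK
  have hz' := Kspace_mulVec hzK
  set a := A.mulVec y i with hadef
  set b := A.mulVec z i with hbdef
  by_cases ha : a = 0
  · have hky : A.mulVec y = 0 := by rw [hy', ha, zero_smul]
    have hyne : y ≠ 0 := fun h => by rw [h] at hy0; simp at hy0
    exact nullity_eq_one (nullity_le_one hP hm) hky hyne
  · have hker : A.mulVec (b • y - a • z) = 0 := by
      rw [Matrix.mulVec_sub, Matrix.mulVec_smul, Matrix.mulVec_smul, hy', hz',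
        smul_smul, smul_smul, mul_comm b a, sub_self]
    have hne : (b • y - a • z) ≠ 0 := by
      intro h
      have h3 := congrFun h ⟨m-1, by omega⟩
      simp only [Pi.sub_apply, Pi.smul_apply, smul_eq_mul, Pi.zero_apply] at h3
      rw [hyR ⟨m-1, by omega⟩ (show (i:ℕ) ≤ m - 1 by have := i.isLt; omega),
        hz1, mul_zero, mul_one] at h3
      exact ha (by linarith)
    exact nullity_eq_one (nullity_le_one hP hm) hker hne
end PathNull2
section SNIP
variable {V : Type*} [Fintype V] [DecidableEq V]

lemma colX (A X : Matrix V V ℝ) (i : V)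
    (hrows : ∀ r, r ≠ i → ∀ c, (A * X) r c = 0) (c : V) :
    A.mulVec (fun s => X s c) = ((A * X) i c) • (Pi.single i 1 : V → ℝ) := by
  funext r
  have h1 : A.mulVec (fun s => X s c) r = (A * X) r c := by
    rw [Matrix.mul_apply, Matrix.mulVec, dotProduct]
  by_cases h : r = i
  · subst h; rw [h1]; simp
  · rw [h1, hrows r h c]
    simp [Pi.single_apply, h]

lemma snip_of_invertible {A : Matrix V V ℝ} (i : V) (h0 : nullity A = 0) :
    HasSNIP A i := by
  intro X hsym hAX hIX hrows
  have hinj : Function.Injective A.mulVecLin := by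
    rw [← LinearMap.ker_eq_bot, eq_bot_iff]
    intro w hw
    rw [Submodule.mem_bot]
    exact nullity_eq_zero.mp h0 w (mem_ker_iff.mp hw)
  obtain ⟨u, hu⟩ := (LinearMap.injective_iff_surjective.mp hinj) (Pi.single i 1 : V → ℝ)
  rw [Matrix.mulVecLin_apply] at hu
  set v : V → ℝ := fun c => (A * X) i c with hv
  have hcol : ∀ s c, X s c = v c * u s := by
    intro s c
    have h2 : A.mulVec ((fun s => X s c) - v c • u) = 0 := by
      rw [Matrix.mulVec_sub, Matrix.mulVec_smul, colX A X i hrows c, hu, sub_self]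
    have h3 := nullity_eq_zero.mp h0 _ h2
    have := congrFun h3 s
    simp only [Pi.sub_apply, Pi.smul_apply, smul_eq_mul, Pi.zero_apply] at this
    linarith
  have hdiag : ∀ c, v c * u c = 0 := by
    intro c
    have := congrFun (congrFun hIX c) c
    simp only [Matrix.hadamard_apply, Matrix.one_apply_eq, one_mul, Matrix.zero_apply] at this
    rw [hcol c c] at this
    exact this
  have hune : u ≠ 0 := by
    intro h
    rw [h, Matrix.mulVec_zero] at hu
    have := congrFun hu i
    simp at this
  by_cases hvz : ∀ c, v c = 0
  · ext s c
    rw [hcol s c, hvz c, zero_mul]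
    rfl
  · exfalso
    push_neg at hvz
    obtain ⟨c₀, hc₀⟩ := hvz
    have huc₀ : u c₀ = 0 := by
      rcases mul_eq_zero.mp (hdiag c₀) with h | h
      · exact absurd h hc₀
      · exact h
    apply hune
    funext s
    have hsymm : X s c₀ = X c₀ s := by
      have := congrFun (congrFun hsym c₀) s
      simpa [Matrix.transpose_apply] using this
    rw [hcol s c₀, hcol c₀ s, huc₀, mul_zero] at hsymm
    rcases mul_eq_zero.mp hsymm with h | h
    · exact absurd h hc₀
    · simpa using h

lemma snip_of_10 {A : Matrix V V ℝ} (hS : A.IsSymm) (i : V)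
    (h1 : nullity A = 1) (hl : Module.finrank ℝ (Kspace A i) = 0) :
    HasSNIP A i := by
  intro X hsym hAX hIX hrows
  have hKbot : Kspace A i = ⊥ := Submodule.finrank_eq_zero.mp hl
  obtain ⟨x, hx, hx0⟩ := nullity_pos_wit (by omega : nullity A ≠ 0)
  have hxi : x i ≠ 0 := by
    intro h
    have : x ∈ Kspace A i := ⟨h, fun r _ => by rw [hx]; rfl⟩
    rw [hKbot] at this
    exact hx0 (by simpa using this)
  have hv : ∀ c, (A * X) i c = 0 := by
    intro c
    have hpz := pair_zero hS hx (fun s => X s c)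
    rw [colX A X i hrows c] at hpz
    have hxi' : x ⬝ᵥ (((A * X) i c) • (Pi.single i 1 : V → ℝ)) = (A * X) i c * x i := by
      simp [dotProduct, Pi.single_apply, mul_comm]
    rw [hxi'] at hpz
    rcases mul_eq_zero.mp hpz with h | h
    · exact h
    · exact absurd h hxi
  have hcol : ∀ c, ∃ t : ℝ, (fun s => X s c) = t • x := by
    intro c
    apply ker_span (le_of_eq h1) hx hx0
    rw [colX A X i hrows c, hv c, zero_smul]
  choose t ht using hcol
  have hXsc : ∀ s c, X s c = t c * x s := by
    intro s c
    have := congrFun (ht c) s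
    simpa using this
  have hti : t i = 0 := by
    have hd := congrFun (congrFun hIX i) i
    simp only [Matrix.hadamard_apply, Matrix.one_apply_eq, one_mul, Matrix.zero_apply] at hd
    rw [hXsc i i] at hd
    rcases mul_eq_zero.mp hd with h | h
    · exact h
    · exact absurd h hxi
  ext s c
  have hsymm : X i c = X c i := by
    have := congrFun (congrFun hsym c) i
    simpa [Matrix.transpose_apply] using this
  rw [hXsc i c, hXsc c i, hti, zero_mul] at hsymm
  have htc : t c = 0 := by
    rcases mul_eq_zero.mp hsymm with h | h
    · exact h
    · exact absurd h hxi
  rw [hXsc s c, htc, zero_mul]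
  rfl
end SNIP
section SNIP3
variable {m : ℕ} {A : Matrix (Fin m) (Fin m) ℝ}

lemma not_snip_of_12 (hP : IsPathM A) (hm : 0 < m) {i : Fin m}
    (hK2 : Module.finrank ℝ (Kspace A i) = 2) : ¬ HasSNIP A i := by
  intro hsnip
  have hi0 : (i : ℕ) ≠ 0 := by
    intro h
    have := Kspace_finrank_le_one_left hP hm h
    omega
  have hil : (i : ℕ) ≠ m - 1 := by
    intro h
    have := Kspace_finrank_le_one_right hP hm h
    omega
  have him := i.isLt
  obtain ⟨y, z, hyK, hzK, hyR, hzL, hy0, hz1⟩ := ell2_wit hP hm hK2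
  have hyne : y ≠ 0 := fun h => by rw [h] at hy0; simp at hy0
  have hzne : z ≠ 0 := fun h => by rw [h] at hz1; simp at hz1
  -- y (i-1) ≠ 0
  have hyim : y ⟨(i : ℕ) - 1, by omega⟩ ≠ 0 := by
    intro h
    have hAyi : A.mulVec y i = 0 := by
      rw [band_row hP.2.1 y i]
      rw [dif_pos (Nat.pos_of_ne_zero hi0), h, mul_zero]
      rw [hyR i le_rfl, mul_zero]
      by_cases h2 : (i : ℕ) + 1 < m
      · rw [dif_pos h2, hyR ⟨(i:ℕ)+1, h2⟩ (Nat.le_succ _), mul_zero]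
        ring
      · rw [dif_neg h2]; ring
    have hky : A.mulVec y = 0 := by rw [Kspace_mulVec hyK, hAyi, zero_smul]
    exact ker_last_ne hP hm hky hyne
      (hyR ⟨m-1, by omega⟩ (show (i:ℕ) ≤ m - 1 by omega))
  have hzip : z ⟨(i : ℕ) + 1, by omega⟩ ≠ 0 := by
    intro h
    have hAzi : A.mulVec z i = 0 := by
      rw [band_row hP.2.1 z i]
      rw [dif_pos (Nat.pos_of_ne_zero hi0),
        hzL ⟨(i:ℕ)-1, by omega⟩ (show (i:ℕ) - 1 ≤ i by omega), mul_zero]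
      rw [hzL i le_rfl, mul_zero]
      rw [dif_pos (show (i:ℕ)+1 < m by omega), h, mul_zero]
      ring
    have hkz : A.mulVec z = 0 := by rw [Kspace_mulVec hzK, hAzi, zero_smul]
    exact ker_first_ne hP hm hkz hzne (hzL ⟨0, hm⟩ (Nat.zero_le _))
  set X : Matrix (Fin m) (Fin m) ℝ := Matrix.of (fun s c => y s * z c + z s * y c) with hX
  have hsupp : ∀ u v : Fin m, X u v ≠ 0 → ((u:ℕ)+1 < (v:ℕ) ∨ (v:ℕ)+1 < (u:ℕ)) := by
    intro u v huv
    have : y u * z v ≠ 0 ∨ z u * y v ≠ 0 := by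
      by_contra hc
      push_neg at hc
      exact huv (by simp [hX, hc.1, hc.2])
    rcases this with h | h
    · have hyu : ¬ ((i:ℕ) ≤ (u:ℕ)) := fun hh => (mul_ne_zero_iff.mp h).1 (hyR u hh)
      have hzv : ¬ ((v:ℕ) ≤ (i:ℕ)) := fun hh => (mul_ne_zero_iff.mp h).2 (hzL v hh)
      omega
    · have hzu : ¬ ((u:ℕ) ≤ (i:ℕ)) := fun hh => (mul_ne_zero_iff.mp h).1 (hzL u hh)
      have hyv : ¬ ((i:ℕ) ≤ (v:ℕ)) := fun hh => (mul_ne_zero_iff.mp h).2 (hyR v hh)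
      omega
  have hXsym : X.IsSymm := by
    apply Matrix.IsSymm.ext
    intro u v
    simp [hX]
    ring
  have hAX : A.hadamard X = 0 := by
    ext u v
    by_cases h : X u v = 0
    · simp [Matrix.hadamard_apply, h]
    · simp [Matrix.hadamard_apply, hP.2.1 u v (hsupp u v h)]
  have hIX : (1 : Matrix (Fin m) (Fin m) ℝ).hadamard X = 0 := by
    ext u v
    by_cases h : u = v
    · subst h
      by_cases h2 : X u u = 0
      · simp [Matrix.hadamard_apply, h2]
      · rcases hsupp u u h2 with h3 | h3 <;> omega
    · simp [Matrix.hadamard_apply, Matrix.one_apply_ne h]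
  have hrows : ∀ r, r ≠ i → ∀ c, (A * X) r c = 0 := by
    intro r hr c
    have hexp : (A * X) r c = A.mulVec y r * z c + A.mulVec z r * y c := by
      rw [Matrix.mul_apply]
      simp only [hX, Matrix.of_apply]
      rw [Matrix.mulVec, Matrix.mulVec, dotProduct, dotProduct, Finset.sum_mul,
        Finset.sum_mul, ← Finset.sum_add_distrib]
      refine Finset.sum_congr rfl (fun s _ => ?_)
      ring
    rw [hexp, hyK.2 r hr, hzK.2 r hr, zero_mul, zero_mul, add_zero]
  have hX0 := hsnip X hXsym hAX hIX hrows
  have := congrFun (congrFun hX0 ⟨(i:ℕ)-1, by omega⟩) ⟨(i:ℕ)+1, by omega⟩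
  simp only [hX, Matrix.of_apply, Matrix.zero_apply] at this
  rw [hzL ⟨(i:ℕ)-1, by omega⟩ (show (i:ℕ)-1 ≤ (i:ℕ) by omega), zero_mul, add_zero] at this
  rcases mul_eq_zero.mp this with h | h
  · exact hyim h
  · exact hzip h
end SNIP3
section Constructions
variable {m : ℕ}

lemma neg_one_pow_pred {r : ℕ} (hr : 0 < r) : (-1:ℝ)^(r-1) = -((-1:ℝ)^r) := by
  conv_rhs => rw [show r = (r-1)+1 from by omega]
  rw [pow_succ]; ring

lemma finrank_le_one_pt {V : Type*} [Fintype V] [DecidableEq V]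
    {W : Submodule ℝ (V → ℝ)} (v : V)
    (h : ∀ x ∈ W, x v = 0 → x = 0) : Module.finrank ℝ W ≤ 1 := by
  let φ : W →ₗ[ℝ] ℝ := (LinearMap.proj v).comp W.subtype
  have hinj : Function.Injective φ := by
    rw [← LinearMap.ker_eq_bot, eq_bot_iff]
    rintro ⟨x, hx⟩ hφ
    rw [Submodule.mem_bot]
    exact Subtype.ext (h x hx hφ)
  calc Module.finrank ℝ W ≤ Module.finrank ℝ ℝ :=
      LinearMap.finrank_le_finrank_of_injective hinj
    _ = 1 := Module.finrank_self ℝ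

lemma finrank_eq_one_of {M : Type*} [AddCommGroup M] [Module ℝ M]
    {W : Submodule ℝ M} [FiniteDimensional ℝ W]
    (hle : Module.finrank ℝ W ≤ 1) {x : M} (hx : x ∈ W) (hx0 : x ≠ 0) :
    Module.finrank ℝ W = 1 := by
  have : Module.finrank ℝ W ≠ 0 := by
    intro h
    rw [Submodule.finrank_eq_zero.mp h] at hx
    exact hx0 (by simpa using hx)
  omega

/-- the family of path matrices used in all constructions: `1` on the off-diagonals,
`d` on the diagonal -/
def pathMat (m : ℕ) (d : ℕ → ℝ) : Matrix (Fin m) (Fin m) ℝ :=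
  Matrix.of fun u v => if (u:ℕ) = (v:ℕ) then d u else
    if (u:ℕ)+1 = (v:ℕ) ∨ (v:ℕ)+1 = (u:ℕ) then 1 else 0

lemma pathMat_isPathM (d : ℕ → ℝ) : IsPathM (pathMat m d) := by
  refine ⟨?_, ?_, ?_⟩
  · apply Matrix.IsSymm.ext
    intro u v
    simp only [pathMat, Matrix.of_apply]
    by_cases h : (u:ℕ) = (v:ℕ)
    · rw [if_pos h, if_pos h.symm, h]
    · rw [if_neg h, if_neg (fun hh => h hh.symm)]
      by_cases h2 : (u:ℕ)+1 = (v:ℕ) ∨ (v:ℕ)+1 = (u:ℕ)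
      · rw [if_pos h2, if_pos (Or.symm h2)]
      · rw [if_neg h2, if_neg (fun hh => h2 (Or.symm hh))]
  · intro u v huv
    simp only [pathMat, Matrix.of_apply]
    rw [if_neg (by omega), if_neg (by omega)]
  · intro u v huv
    simp only [pathMat, Matrix.of_apply]
    rw [if_neg (by omega), if_pos (Or.inl huv)]
    norm_num

lemma pathMat_inSG (d : ℕ → ℝ) : InSG (SimpleGraph.pathGraph m) (pathMat m d) := by
  refine ⟨(pathMat_isPathM d).1, ?_⟩
  intro u v huv
  have hne : (u:ℕ) ≠ (v:ℕ) := fun h => huv (Fin.ext h)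
  rw [SimpleGraph.pathGraph_adj]
  simp only [pathMat, Matrix.of_apply, if_neg hne]
  by_cases h2 : (u:ℕ)+1 = (v:ℕ) ∨ (v:ℕ)+1 = (u:ℕ)
  · rw [if_pos h2]
    simpa using h2
  · rw [if_neg h2]
    simpa using h2

/-- maximum principle for diagonally dominant rows -/
lemma maxp {A : Matrix (Fin m) (Fin m) ℝ} (hB : Band A)
    (hoff : ∀ u v : Fin m, u ≠ v → |A u v| ≤ 1) (hm : 0 < m) {x : Fin m → ℝ}
    (h : ∀ r, x r ≠ 0 → (A.mulVec x r = 0 ∧ 3 ≤ |A r r|)) : x = 0 := by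
  by_contra hx
  obtain ⟨r0, -, hr0⟩ := Finset.exists_max_image Finset.univ (fun r => |x r|)
    ⟨⟨0, hm⟩, Finset.mem_univ _⟩
  have hr0max : ∀ a : Fin m, |x a| ≤ |x r0| := fun a => hr0 a (Finset.mem_univ a)
  have hx0 : x r0 ≠ 0 := by
    intro h0
    apply hx
    funext j
    have := hr0max j
    rw [h0] at this
    simp only [abs_zero] at this
    exact abs_nonpos_iff.mp this
  obtain ⟨hrow, hdiag⟩ := h r0 hx0
  rw [band_row hB] at hrow
  have hM : 0 < |x r0| := abs_pos.mpr hx0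
  have hprev : |(if h : 0 < (r0 : ℕ) then
      A r0 ⟨(r0 : ℕ) - 1, by have := r0.isLt; omega⟩ * x ⟨(r0 : ℕ) - 1, by have := r0.isLt; omega⟩ else 0)| ≤ |x r0| := by
    split_ifs with hc
    · rw [abs_mul]
      calc |A r0 ⟨(r0:ℕ)-1, _⟩| * |x ⟨(r0:ℕ)-1, _⟩| ≤ 1 * |x r0| := by
            apply mul_le_mul (hoff _ _ (by intro hh; have := congrArg Fin.val hh; simp at this; omega))
              (hr0max _) (abs_nonneg _) (by norm_num)
        _ = |x r0| := one_mul _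
    · simpa using abs_nonneg (x r0)
  have hnext : |(if h : (r0 : ℕ) + 1 < m then
      A r0 ⟨(r0 : ℕ) + 1, h⟩ * x ⟨(r0 : ℕ) + 1, h⟩ else 0)| ≤ |x r0| := by
    split_ifs with hc
    · rw [abs_mul]
      calc |A r0 ⟨(r0:ℕ)+1, _⟩| * |x ⟨(r0:ℕ)+1, _⟩| ≤ 1 * |x r0| := by
            apply mul_le_mul (hoff _ _ (by intro hh; have := congrArg Fin.val hh; simp at this))
              (hr0max _) (abs_nonneg _) (by norm_num)
        _ = |x r0| := one_mul _
    · simpa using abs_nonneg (x r0)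
  have heq : A r0 r0 * x r0 = -((if h : 0 < (r0 : ℕ) then
      A r0 ⟨(r0 : ℕ) - 1, by have := r0.isLt; omega⟩ * x ⟨(r0 : ℕ) - 1, by have := r0.isLt; omega⟩ else 0)
      + (if h : (r0 : ℕ) + 1 < m then
      A r0 ⟨(r0 : ℕ) + 1, h⟩ * x ⟨(r0 : ℕ) + 1, h⟩ else 0)) := by
    linarith [hrow]
  have habs : |A r0 r0| * |x r0| ≤ 2 * |x r0| := by
    rw [← abs_mul, heq, abs_neg]
    calc |_ + _| ≤ _ + _ := abs_add_le _ _
      _ ≤ |x r0| + |x r0| := add_le_add hprev hnext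
      _ = 2 * |x r0| := by ring
  nlinarith
end Constructions
section Constructions2
variable {m : ℕ}

/-- block diagonal pattern `(…,1,2,2,…,2,1,…)` on the window `[a,b]` -/
def bpat (a b : ℕ) : ℕ → ℝ := fun j => (if j = a then 0 else 1) + (if j = b then 0 else 1)

/-- alternating sign vector supported on the window `[a,b]` -/
def yw (m a b : ℕ) : Fin m → ℝ := fun j => if a ≤ (j:ℕ) ∧ (j:ℕ) ≤ b then (-1:ℝ)^(j:ℕ) else 0

lemma pathMat_diag (d : ℕ → ℝ) (r : Fin m) : pathMat m d r r = d r := by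
  simp [pathMat]

lemma pathMat_adj (d : ℕ → ℝ) (u v : Fin m)
    (h : (u:ℕ)+1 = (v:ℕ) ∨ (v:ℕ)+1 = (u:ℕ)) : pathMat m d u v = 1 := by
  simp only [pathMat, Matrix.of_apply]
  rw [if_neg (by omega), if_pos h]

lemma yw_row (d : ℕ → ℝ) (a b : ℕ) (hab : a ≤ b) (hbm : b < m)
    (hd : ∀ j, a ≤ j → j ≤ b → d j = bpat a b j)
    (r : Fin m) (hr1 : (r:ℕ) + 1 ≠ a) (hr2 : (r:ℕ) ≠ b + 1) :
    (pathMat m d).mulVec (yw m a b) r = 0 := by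
  have hrm := r.isLt
  rw [band_row (pathMat_isPathM d).2.1]
  rcases Nat.lt_or_ge (r:ℕ) a with hlt | hge
  · -- r < a, in fact r + 1 < a
    have h1 : (r:ℕ) + 1 < a := by omega
    have hy : yw m a b r = 0 := by
      simp only [yw]; rw [if_neg (by omega)]
    rw [hy, mul_zero]
    have hprev : ∀ (h : 0 < (r:ℕ)), yw m a b ⟨(r:ℕ)-1, by omega⟩ = 0 := by
      intro h; simp only [yw]; rw [if_neg (by first | omega | (simp only [Fin.val_mk]; omega))]
    have hnext : ∀ (h : (r:ℕ)+1 < m), yw m a b ⟨(r:ℕ)+1, h⟩ = 0 := by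
      intro h; simp only [yw]; rw [if_neg (by first | omega | (simp only [Fin.val_mk]; omega))]
    split_ifs with h1' h2' h2'
    · rw [hprev h1', hnext h2', mul_zero, mul_zero]; ring
    · rw [hprev h1', mul_zero]; ring
    · rw [hnext h2', mul_zero]; ring
    · ring
  rcases Nat.lt_or_ge b (r:ℕ) with hgt | hle
  · -- b + 1 < r
    have h1 : b + 1 < (r:ℕ) := by omega
    have hy : yw m a b r = 0 := by
      simp only [yw]; rw [if_neg (by omega)]
    rw [hy, mul_zero]
    have hprev : ∀ (h : 0 < (r:ℕ)), yw m a b ⟨(r:ℕ)-1, by omega⟩ = 0 := by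
      intro h; simp only [yw]; rw [if_neg (by first | omega | (simp only [Fin.val_mk]; omega))]
    have hnext : ∀ (h : (r:ℕ)+1 < m), yw m a b ⟨(r:ℕ)+1, h⟩ = 0 := by
      intro h; simp only [yw]; rw [if_neg (by first | omega | (simp only [Fin.val_mk]; omega))]
    split_ifs with h1' h2' h2'
    · rw [hprev h1', hnext h2', mul_zero, mul_zero]; ring
    · rw [hprev h1', mul_zero]; ring
    · rw [hnext h2', mul_zero]; ring
    · ring
  · -- a ≤ r ≤ b
    have hyr : yw m a b r = (-1:ℝ)^(r:ℕ) := by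
      simp only [yw]; rw [if_pos ⟨hge, hle⟩]
    rw [hyr, pathMat_diag, hd (r:ℕ) hge hle]
    by_cases hra : (r:ℕ) = a
    · by_cases hrb : (r:ℕ) = b
      · -- a = r = b : diagonal coefficient 0; neighbours outside window
        have hd0 : bpat a b (r:ℕ) = 0 := by
          simp only [bpat]; rw [if_pos hra, if_pos hrb]; norm_num
        rw [hd0, zero_mul]
        have hprev : ∀ (h : 0 < (r:ℕ)), yw m a b ⟨(r:ℕ)-1, by omega⟩ = 0 := by
          intro h; simp only [yw]; rw [if_neg (by first | omega | (simp only [Fin.val_mk]; omega))]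
        have hnext : ∀ (h : (r:ℕ)+1 < m), yw m a b ⟨(r:ℕ)+1, h⟩ = 0 := by
          intro h; simp only [yw]; rw [if_neg (by first | omega | (simp only [Fin.val_mk]; omega))]
        split_ifs with h1' h2' h2'
        · rw [hprev h1', hnext h2', mul_zero, mul_zero]; ring
        · rw [hprev h1', mul_zero]; ring
        · rw [hnext h2', mul_zero]; ring
        · ring
      · -- r = a < b : no active prev, diag 1, next = (-1)^(r+1)
        have hd1 : bpat a b (r:ℕ) = 1 := by
          simp only [bpat]; rw [if_pos hra, if_neg (by omega : ¬ (r:ℕ) = b)]; norm_num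
        rw [hd1, one_mul]
        have h2' : (r:ℕ)+1 < m := by omega
        rw [dif_pos h2']
        have hnext : yw m a b ⟨(r:ℕ)+1, h2'⟩ = (-1:ℝ)^((r:ℕ)+1) := by
          simp only [yw]; rw [if_pos (by first | omega | (simp only [Fin.val_mk]; omega))]
        rw [hnext, pathMat_adj _ _ _ (Or.inl (by simp only [Fin.val_mk]))]
        have hprev0 : (if h : 0 < (r:ℕ) then
            pathMat m d r ⟨(r:ℕ)-1, by omega⟩ * yw m a b ⟨(r:ℕ)-1, by omega⟩ else 0) = 0 := by
          split_ifs with h1'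
          · have : yw m a b ⟨(r:ℕ)-1, by omega⟩ = 0 := by
              simp only [yw]; rw [if_neg (by first | omega | (simp only [Fin.val_mk]; omega))]
            rw [this, mul_zero]
          · rfl
        rw [hprev0]
        rw [pow_succ]
        ring
    · by_cases hrb : (r:ℕ) = b
      · -- a < r = b : prev = (-1)^(r-1), diag 1, no active next
        have hd1 : bpat a b (r:ℕ) = 1 := by
          simp only [bpat]; rw [if_neg hra, if_pos hrb]; norm_num
        rw [hd1, one_mul]
        have h1' : 0 < (r:ℕ) := by omega
        rw [dif_pos h1']
        have hprev : yw m a b ⟨(r:ℕ)-1, by omega⟩ = (-1:ℝ)^((r:ℕ)-1) := by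
          simp only [yw]; rw [if_pos (by first | omega | (simp only [Fin.val_mk]; omega))]
        rw [hprev, pathMat_adj _ _ _ (Or.inr (by first | omega | (simp only [Fin.val_mk]; omega)))]
        have hnext0 : (if h : (r:ℕ)+1 < m then
            pathMat m d r ⟨(r:ℕ)+1, h⟩ * yw m a b ⟨(r:ℕ)+1, h⟩ else 0) = 0 := by
          split_ifs with h2'
          · have : yw m a b ⟨(r:ℕ)+1, h2'⟩ = 0 := by
              simp only [yw]; rw [if_neg (by first | omega | (simp only [Fin.val_mk]; omega))]
            rw [this, mul_zero]
          · rfl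
        rw [hnext0]
        rw [neg_one_pow_pred h1']
        ring
      · -- a < r < b : prev + 2 diag + next
        have hd2 : bpat a b (r:ℕ) = 2 := by
          simp only [bpat]; rw [if_neg hra, if_neg hrb]; norm_num
        rw [hd2]
        have h1' : 0 < (r:ℕ) := by omega
        have h2' : (r:ℕ)+1 < m := by omega
        rw [dif_pos h1', dif_pos h2']
        have hprev : yw m a b ⟨(r:ℕ)-1, by omega⟩ = (-1:ℝ)^((r:ℕ)-1) := by
          simp only [yw]; rw [if_pos (by first | omega | (simp only [Fin.val_mk]; omega))]
        have hnext : yw m a b ⟨(r:ℕ)+1, h2'⟩ = (-1:ℝ)^((r:ℕ)+1) := by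
          simp only [yw]; rw [if_pos (by first | omega | (simp only [Fin.val_mk]; omega))]
        rw [hprev, hnext, pathMat_adj _ _ _ (Or.inr (by first | omega | (simp only [Fin.val_mk]; omega))),
          pathMat_adj _ _ _ (Or.inl (by simp only [Fin.val_mk]))]
        rw [neg_one_pow_pred h1', pow_succ]
        ring

lemma yw_row_succ (d : ℕ → ℝ) (a b : ℕ) (hab : a ≤ b) (hbm : b + 1 < m) :
    (pathMat m d).mulVec (yw m a b) ⟨b+1, hbm⟩ = (-1:ℝ)^b := by
  rw [band_row (pathMat_isPathM d).2.1]
  simp only [Fin.val_mk]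
  rw [dif_pos (by omega : 0 < b + 1)]
  have hyr : yw m a b ⟨b+1, hbm⟩ = 0 := by
    simp only [yw]; rw [if_neg (by first | omega | (simp only [Fin.val_mk]; omega))]
  have hprev : yw m a b ⟨b+1-1, by omega⟩ = (-1:ℝ)^b := by
    simp only [yw]
    rw [if_pos (by first | omega | (simp only [Fin.val_mk]; omega))]
    congr 1 <;> omega
  rw [hyr, mul_zero, hprev,
    pathMat_adj _ _ _ (Or.inr (by first | omega | (simp only [Fin.val_mk]; omega)))]
  have hnext0 : (if h : b+1+1 < m then
      pathMat m d ⟨b+1, hbm⟩ ⟨b+1+1, h⟩ * yw m a b ⟨b+1+1, h⟩ else 0) = 0 := by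
    split_ifs with h2'
    · have : yw m a b ⟨b+1+1, h2'⟩ = 0 := by
        simp only [yw]; rw [if_neg (by first | omega | (simp only [Fin.val_mk]; omega))]
      rw [this, mul_zero]
    · rfl
  rw [hnext0]
  ring

lemma yw_row_pred (d : ℕ → ℝ) (a b : ℕ) (hab : a ≤ b) (hbm : b < m) (ha : 0 < a) :
    (pathMat m d).mulVec (yw m a b) ⟨a-1, by omega⟩ = (-1:ℝ)^a := by
  rw [band_row (pathMat_isPathM d).2.1]
  simp only [Fin.val_mk]
  have hyr : yw m a b ⟨a-1, by omega⟩ = 0 := by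
    simp only [yw]; rw [if_neg (by first | omega | (simp only [Fin.val_mk]; omega))]
  rw [hyr, mul_zero]
  have h2' : (a-1)+1 < m := by omega
  rw [dif_pos h2']
  have hnext : yw m a b ⟨(a-1)+1, h2'⟩ = (-1:ℝ)^a := by
    simp only [yw]
    rw [if_pos (by first | omega | (simp only [Fin.val_mk]; omega))]
    congr 1 <;> omega
  rw [hnext, pathMat_adj _ _ _ (Or.inl (by simp only [Fin.val_mk]))]
  have hprev0 : (if h : 0 < a-1 then
      pathMat m d ⟨a-1, by omega⟩ ⟨a-1-1, by omega⟩ * yw m a b ⟨a-1-1, by omega⟩ else 0) = 0 := by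
    split_ifs with h1'
    · have : yw m a b ⟨a-1-1, by omega⟩ = 0 := by
        simp only [yw]; rw [if_neg (by first | omega | (simp only [Fin.val_mk]; omega))]
      rw [this, mul_zero]
    · rfl
  rw [hprev0]
  ring

lemma c00 (hm : 0 < m) (i : Fin m) :
    nullity (pathMat m (fun _ => 3)) = 0 ∧
    Module.finrank ℝ (Kspace (pathMat m (fun _ => 3)) i) = 0 := by
  have hP := pathMat_isPathM (m := m) (fun _ => 3)
  have hoff : ∀ u v : Fin m, u ≠ v → |pathMat m (fun _ => 3) u v| ≤ 1 := by
    intro u v huv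
    simp only [pathMat, Matrix.of_apply]
    rw [if_neg (fun h => huv (Fin.ext h))]
    split_ifs <;> norm_num
  have hdiag : ∀ r : Fin m, (3:ℝ) ≤ |pathMat m (fun _ => 3) r r| := by
    intro r
    rw [pathMat_diag]
    norm_num
  constructor
  · rw [nullity_eq_zero]
    intro x hx
    exact maxp hP.2.1 hoff hm (fun r _ => ⟨by rw [hx]; rfl, hdiag r⟩)
  · have hbot : Kspace (pathMat m (fun _ => 3)) i = ⊥ := by
      rw [eq_bot_iff]; intro x hxK
      rw [Submodule.mem_bot]
      apply maxp hP.2.1 hoff hm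
      intro r hr
      exact ⟨hxK.2 r (fun h => hr (by rw [h]; exact hxK.1)), hdiag r⟩
    rw [hbot]; exact finrank_bot ℝ _

lemma c10 (hm : 0 < m) (i : Fin m) :
    nullity (pathMat m (bpat 0 (m-1))) = 1 ∧
    Module.finrank ℝ (Kspace (pathMat m (bpat 0 (m-1))) i) = 0 := by
  have hP := pathMat_isPathM (m := m) (bpat 0 (m-1))
  have hker : (pathMat m (bpat 0 (m-1))).mulVec (yw m 0 (m-1)) = 0 := by
    funext r
    rw [yw_row _ 0 (m-1) (Nat.zero_le _) (by omega) (fun j _ _ => rfl) r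
      (Nat.succ_ne_zero _) (by have := r.isLt; omega)]
    rfl
  have hgne : yw m 0 (m-1) ≠ 0 := by
    intro h
    have := congrFun h ⟨0, hm⟩
    simp only [yw, Pi.zero_apply] at this
    rw [if_pos (by first | omega | (simp only [Fin.val_mk]; omega))] at this
    simp at this
  have hgi : yw m 0 (m-1) i ≠ 0 := by
    simp only [yw]
    rw [if_pos (by have := i.isLt; omega)]
    exact pow_ne_zero _ (by norm_num)
  refine ⟨nullity_eq_one (nullity_le_one hP hm) hker hgne, ?_⟩
  have hbot := Kspace_eq_bot hP.1 hker hgne hgi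
    (le_of_eq (nullity_eq_one (nullity_le_one hP hm) hker hgne))
  rw [hbot]; exact finrank_bot ℝ _
end Constructions2
section Constructions3
variable {m : ℕ}

lemma pair_Kspace {V : Type*} [Fintype V] [DecidableEq V] {A : Matrix V V ℝ}
    (hS : A.IsSymm) {i : V} {x y : V → ℝ} (hx : A.mulVec x = 0) (hy : y ∈ Kspace A i) :
    A.mulVec y i * x i = 0 := by
  have hpz := pair_zero hS hx y
  rw [Kspace_mulVec hy] at hpz
  have hd : x ⬝ᵥ ((A.mulVec y i) • (Pi.single i 1 : V → ℝ)) = A.mulVec y i * x i := by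
    simp [dotProduct, Pi.single_apply, mul_comm]
  rw [hd] at hpz
  exact hpz

lemma fin_eq {m : ℕ} (i : Fin m) (t : ℕ) (h : t < m) (hv : (i:ℕ) = t) : i = ⟨t, h⟩ :=
  Fin.ext hv

lemma pathMat_off_le_one (d : ℕ → ℝ) : ∀ u v : Fin m, u ≠ v → |pathMat m d u v| ≤ 1 := by
  intro u v huv
  simp only [pathMat, Matrix.of_apply]
  rw [if_neg (fun h => huv (Fin.ext h))]
  split_ifs <;> norm_num

/-- diagonal for the (0,1) construction rooted at an internal-or-right vertex `i ≥ 1` -/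
def d01 (i : ℕ) : ℕ → ℝ := fun j => if j < i then bpat 0 (i-1) j else if j = i then 0 else 3

lemma c01 (hm : 0 < m) (i : Fin m) (hi : 0 < (i:ℕ)) :
    nullity (pathMat m (d01 i)) = 0 ∧
    Module.finrank ℝ (Kspace (pathMat m (d01 i)) i) = 1 := by
  set A := pathMat m (d01 i) with hA
  have hP := pathMat_isPathM (m := m) (d01 i)
  have him := i.isLt
  set y := yw m 0 ((i:ℕ)-1) with hy
  have hyK : y ∈ Kspace A i := by
    refine ⟨?_, ?_⟩
    · simp only [hy, yw]; rw [if_neg (by omega)]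
    · intro r hr
      exact yw_row _ 0 ((i:ℕ)-1) (Nat.zero_le _) (by omega)
        (fun j _ hj => by simp only [d01]; rw [if_pos (by omega)])
        r (Nat.succ_ne_zero _)
        (fun h => hr (Fin.ext (by omega)))
  have hy0 : y ⟨0, hm⟩ = 1 := by
    simp only [hy, yw]; rw [if_pos (by omega)]; norm_num
  have hyne : y ≠ 0 := fun h => by
    have := congrFun h ⟨0, hm⟩; rw [hy0] at this; simp at this
  have hz0 : ∀ z ∈ Kspace A i, z ⟨0, hm⟩ = 0 → z = 0 := by
    intro z hzK hz
    have hleft := Kspace_left_zero hP hm hzK hz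
    apply maxp hP.2.1 (pathMat_off_le_one _) hm
    intro r hrne
    have hri : ¬ ((r:ℕ) ≤ (i:ℕ)) := fun h => hrne (hleft r h)
    refine ⟨hzK.2 r (fun h => hri (by rw [h])), ?_⟩
    have hd3 : d01 (i:ℕ) (r:ℕ) = 3 := by
      have hc1 : ¬ ((r:ℕ) < (i:ℕ)) := by omega
      have hc2 : ¬ ((r:ℕ) = (i:ℕ)) := by omega
      simp only [d01]
      rw [if_neg hc1, if_neg hc2]
    have hArr : pathMat m (d01 (i:ℕ)) r r = 3 := by
      calc pathMat m (d01 (i:ℕ)) r r = d01 (i:ℕ) (r:ℕ) := pathMat_diag _ r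
        _ = 3 := hd3
    rw [hArr]; norm_num
  have hAyi : A.mulVec y i = (-1:ℝ)^((i:ℕ)-1) := by
    have hieq : i = (⟨((i:ℕ)-1)+1, by omega⟩ : Fin m) := fin_eq i _ (by omega) (by omega)
    rw [hieq]
    exact yw_row_succ _ 0 ((i:ℕ)-1) (Nat.zero_le _) (by omega)
  have hcne : A.mulVec y i ≠ 0 := by
    rw [hAyi]; exact pow_ne_zero _ (by norm_num)
  constructor
  · rw [nullity_eq_zero]
    intro x hx
    have hxi : x i = 0 := by
      rcases mul_eq_zero.mp (pair_Kspace hP.1 hx hyK) with h | h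
      · exact absurd h hcne
      · exact h
    have hxK : x ∈ Kspace A i := ⟨hxi, fun r _ => by rw [hx]; rfl⟩
    have hzK : x - x ⟨0, hm⟩ • y ∈ Kspace A i :=
      Submodule.sub_mem _ hxK (Submodule.smul_mem _ _ hyK)
    have hzz : (x - x ⟨0, hm⟩ • y) ⟨0, hm⟩ = 0 := by
      simp [hy0]
    have hzeq := hz0 _ hzK hzz
    have hxy : x = x ⟨0, hm⟩ • y := by
      have := sub_eq_zero.mp hzeq
      exact this
    have hrow : A.mulVec x i = 0 := by rw [hx]; rfl
    rw [hxy, Matrix.mulVec_smul] at hrow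
    have : x ⟨0, hm⟩ * A.mulVec y i = 0 := hrow
    have hx0 : x ⟨0, hm⟩ = 0 := by
      rcases mul_eq_zero.mp this with h | h
      · exact h
      · exact absurd h hcne
    rw [hxy, hx0, zero_smul]
  · exact finrank_eq_one_of (finrank_le_one_pt ⟨0, hm⟩ hz0) hyK hyne

/-- diagonal for the (0,1) construction rooted at the left leaf -/
def dL0 (m : ℕ) : ℕ → ℝ := fun j => if j = 0 then 0 else bpat 1 (m-1) j

lemma c01L (hm2 : 2 ≤ m) (i : Fin m) (hi : (i:ℕ) = 0) :
    nullity (pathMat m (dL0 m)) = 0 ∧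
    Module.finrank ℝ (Kspace (pathMat m (dL0 m)) i) = 1 := by
  have hm : 0 < m := by omega
  set A := pathMat m (dL0 m) with hA
  have hP := pathMat_isPathM (m := m) (dL0 m)
  set y := yw m 1 (m-1) with hy
  have hyK : y ∈ Kspace A i := by
    refine ⟨?_, ?_⟩
    · simp only [hy, yw]; rw [if_neg (by omega)]
    · intro r hr
      have hrv : (r:ℕ) ≠ 0 := fun h => hr (Fin.ext (by omega))
      exact yw_row _ 1 (m-1) (by omega) (by omega)
        (fun j hj _ => by simp only [dL0]; rw [if_neg (by omega)])
        r (by omega) (by have := r.isLt; omega)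
  have hyl : y ⟨m-1, by omega⟩ = (-1:ℝ)^(m-1) := by
    simp only [hy, yw]; rw [if_pos (by omega)]
  have hyne : y ≠ 0 := by
    intro h
    have h2 := congrFun h ⟨m-1, by omega⟩
    rw [hyl] at h2
    simp only [Pi.zero_apply] at h2
    exact pow_ne_zero _ (by norm_num : (-1:ℝ) ≠ 0) h2
  have hAyi : A.mulVec y i = (-1:ℝ)^1 := by
    have hieq : i = (⟨1-1, by omega⟩ : Fin m) := fin_eq i _ (by omega) (by omega)
    rw [hieq]
    exact yw_row_pred _ 1 (m-1) (by omega) (by omega) (by omega)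
  have hcne : A.mulVec y i ≠ 0 := by
    rw [hAyi]; norm_num
  constructor
  · rw [nullity_eq_zero]
    intro x hx
    have hxi : x i = 0 := by
      rcases mul_eq_zero.mp (pair_Kspace hP.1 hx hyK) with h | h
      · exact absurd h hcne
      · exact h
    have h0 : x ⟨0, hm⟩ = 0 := by
      rw [show (⟨0, hm⟩ : Fin m) = i from (fin_eq i 0 hm hi).symm]
      exact hxi
    exact ker_zero_of_first hP hm hx h0
  · exact finrank_eq_one_of (Kspace_finrank_le_one_left hP hm hi) hyK hyne

/-- diagonal for the (1,2) construction at an internal vertex -/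
def d12 (i m : ℕ) : ℕ → ℝ := fun j =>
  if j < i then bpat 0 (i-1) j else if j = i then 0 else bpat (i+1) (m-1) j

lemma c12 (hm : 0 < m) (i : Fin m) (hi0 : 0 < (i:ℕ)) (hil : (i:ℕ) + 1 < m) :
    nullity (pathMat m (d12 i m)) = 1 ∧
    Module.finrank ℝ (Kspace (pathMat m (d12 i m)) i) = 2 := by
  set A := pathMat m (d12 i m) with hA
  have hP := pathMat_isPathM (m := m) (d12 i m)
  have him := i.isLt
  set yL := yw m 0 ((i:ℕ)-1) with hyL
  set yR := yw m ((i:ℕ)+1) (m-1) with hyR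
  have hyLK : yL ∈ Kspace A i := by
    refine ⟨?_, ?_⟩
    · simp only [hyL, yw]; rw [if_neg (by omega)]
    · intro r hr
      exact yw_row _ 0 ((i:ℕ)-1) (Nat.zero_le _) (by omega)
        (fun j _ hj => by simp only [d12]; rw [if_pos (by omega)])
        r (Nat.succ_ne_zero _)
        (fun h => hr (Fin.ext (by omega)))
  have hyRK : yR ∈ Kspace A i := by
    refine ⟨?_, ?_⟩
    · simp only [hyR, yw]; rw [if_neg (by omega)]
    · intro r hr
      have hrv : (r:ℕ) ≠ (i:ℕ) := fun h => hr (Fin.ext h)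
      exact yw_row _ ((i:ℕ)+1) (m-1) (by omega) (by omega)
        (fun j hj _ => by simp only [d12]; rw [if_neg (by omega), if_neg (by omega)])
        r (by omega) (by have := r.isLt; omega)
  have hyL0 : yL ⟨0, hm⟩ = 1 := by
    simp only [hyL, yw]; rw [if_pos (by omega)]; norm_num
  have hyLne : yL ≠ 0 := fun h => by
    have := congrFun h ⟨0, hm⟩; rw [hyL0] at this; simp at this
  have hK2 : Module.finrank ℝ (Kspace A i) = 2 := by
    have hle2 : Module.finrank ℝ (Kspace A i) ≤ 2 := Kspace_finrank_le_two hP hm i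
    by_contra hne
    have hle1 : Module.finrank ℝ (Kspace A i) ≤ 1 := by omega
    obtain ⟨t, ht⟩ := mem_span_of_finrank_le_one hle1 hyLK hyLne hyRK
    have h1 := congrFun ht ⟨m-1, by omega⟩
    have h2 : yR ⟨m-1, by omega⟩ = (-1:ℝ)^(m-1) := by
      simp only [hyR, yw]; rw [if_pos (by omega)]
    have h3 : yL ⟨m-1, by omega⟩ = 0 := by
      simp only [hyL, yw]; rw [if_neg (by omega)]
    rw [h2] at h1
    simp only [Pi.smul_apply, smul_eq_mul] at h1
    rw [h3, mul_zero] at h1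
    exact pow_ne_zero _ (by norm_num : (-1:ℝ) ≠ 0) h1
  exact ⟨ell2_k1 hP hm hK2, hK2⟩
end Constructions3
section Assembly

lemma inSG_isPathM {n : ℕ} {A : Matrix (Fin n) (Fin n) ℝ}
    (hA : InSG (SimpleGraph.pathGraph n) A) : IsPathM A := by
  obtain ⟨hS, hadj⟩ := hA
  refine ⟨hS, ?_, ?_⟩
  · intro u v h
    by_contra h0
    have h2 := (hadj u v (fun hh => by rw [hh] at h; omega)).mp h0
    rw [SimpleGraph.pathGraph_adj] at h2
    omega
  · intro u v h
    exact (hadj u v (fun hh => by rw [hh] at h; omega)).mpr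
      (SimpleGraph.pathGraph_adj.mpr (Or.inl h))

theorem stmt13' {n : ℕ} (hn : 2 ≤ n) :
    (∀ i : Fin n, ((i : ℕ) = 0 ∨ (i : ℕ) = n - 1) →
      ∀ k l : ℕ, Allows (SimpleGraph.pathGraph n) i k l ↔
        (k, l) ∈ ({(0,0), (1,0), (0,1)} : Set (ℕ × ℕ))) ∧
    (∀ i : Fin n, ¬ ((i : ℕ) = 0 ∨ (i : ℕ) = n - 1) →
      ∀ k l : ℕ, Allows (SimpleGraph.pathGraph n) i k l ↔
        (k, l) ∈ ({(0,0), (1,0), (0,1), (1,2)} : Set (ℕ × ℕ))) ∧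
    (∀ i : Fin n, ∀ A : Matrix (Fin n) (Fin n) ℝ, InSG (SimpleGraph.pathGraph n) A →
      (HasSNIP A i ↔
        (nullity A, nullity (deleteRC A i)) ∈ ({(0,0), (1,0), (0,1)} : Set (ℕ × ℕ)))) := by
  have hm : 0 < n := by omega
  refine ⟨?_, ?_, ?_⟩
  · -- leaf case
    intro i hi k l
    constructor
    · rintro ⟨A, hin, hk, hl⟩
      have hP := inSG_isPathM hin
      rw [nullity_deleteRC_eq] at hl
      have h1 : k ≤ 1 := hk ▸ nullity_le_one hP hm
      have h2 : l ≤ 1 := by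
        rcases hi with hi | hi
        · exact hl ▸ Kspace_finrank_le_one_left hP hm hi
        · exact hl ▸ Kspace_finrank_le_one_right hP hm hi
      have h3 : ¬ (k = 1 ∧ l = 1) := by
        rintro ⟨hk1, hl1⟩
        exact exc hP hm (hk ▸ hk1) (hl ▸ hl1)
      simp only [Set.mem_insert_iff, Set.mem_singleton_iff, Prod.mk.injEq]
      omega
    · intro hmem
      simp only [Set.mem_insert_iff, Set.mem_singleton_iff, Prod.mk.injEq] at hmem
      rcases hmem with ⟨hk, hl⟩ | ⟨hk, hl⟩ | ⟨hk, hl⟩ <;> subst hk <;> subst hl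
      · exact ⟨pathMat n (fun _ => 3), pathMat_inSG _, (c00 hm i).1,
          by rw [nullity_deleteRC_eq]; exact (c00 hm i).2⟩
      · exact ⟨pathMat n (bpat 0 (n-1)), pathMat_inSG _, (c10 hm i).1,
          by rw [nullity_deleteRC_eq]; exact (c10 hm i).2⟩
      · rcases hi with hi | hi
        · exact ⟨pathMat n (dL0 n), pathMat_inSG _, (c01L hn i hi).1,
            by rw [nullity_deleteRC_eq]; exact (c01L hn i hi).2⟩
        · have hi' : 0 < (i:ℕ) := by omega
          exact ⟨pathMat n (d01 i), pathMat_inSG _, (c01 hm i hi').1,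
            by rw [nullity_deleteRC_eq]; exact (c01 hm i hi').2⟩
  · -- internal case
    intro i hi k l
    push_neg at hi
    have hi0 : 0 < (i:ℕ) := Nat.pos_of_ne_zero hi.1
    have hil : (i:ℕ) + 1 < n := by have := i.isLt; omega
    constructor
    · rintro ⟨A, hin, hk, hl⟩
      have hP := inSG_isPathM hin
      rw [nullity_deleteRC_eq] at hl
      have h1 : k ≤ 1 := hk ▸ nullity_le_one hP hm
      have h2 : l ≤ 2 := hl ▸ Kspace_finrank_le_two hP hm i
      have h3 : ¬ (k = 1 ∧ l = 1) := by
        rintro ⟨hk1, hl1⟩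
        exact exc hP hm (hk ▸ hk1) (hl ▸ hl1)
      have h4 : l = 2 → k = 1 := by
        intro hl2
        rw [← hk]
        exact ell2_k1 hP hm (hl ▸ hl2)
      simp only [Set.mem_insert_iff, Set.mem_singleton_iff, Prod.mk.injEq]
      omega
    · intro hmem
      simp only [Set.mem_insert_iff, Set.mem_singleton_iff, Prod.mk.injEq] at hmem
      rcases hmem with ⟨hk, hl⟩ | ⟨hk, hl⟩ | ⟨hk, hl⟩ | ⟨hk, hl⟩ <;> subst hk <;> subst hl
      · exact ⟨pathMat n (fun _ => 3), pathMat_inSG _, (c00 hm i).1,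
          by rw [nullity_deleteRC_eq]; exact (c00 hm i).2⟩
      · exact ⟨pathMat n (bpat 0 (n-1)), pathMat_inSG _, (c10 hm i).1,
          by rw [nullity_deleteRC_eq]; exact (c10 hm i).2⟩
      · exact ⟨pathMat n (d01 i), pathMat_inSG _, (c01 hm i hi0).1,
          by rw [nullity_deleteRC_eq]; exact (c01 hm i hi0).2⟩
      · exact ⟨pathMat n (d12 i n), pathMat_inSG _, (c12 hm i hi0 hil).1,
          by rw [nullity_deleteRC_eq]; exact (c12 hm i hi0 hil).2⟩
  · -- SNIP characterization
    intro i A hin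
    have hP := inSG_isPathM hin
    rw [nullity_deleteRC_eq]
    constructor
    · intro hsnip
      by_contra hmem
      simp only [Set.mem_insert_iff, Set.mem_singleton_iff, Prod.mk.injEq] at hmem
      push_neg at hmem
      have h1 := nullity_le_one hP hm
      have h2 := Kspace_finrank_le_two hP hm i
      have h3 : ¬ (nullity A = 1 ∧ Module.finrank ℝ (Kspace A i) = 1) := by
        rintro ⟨hk1, hl1⟩
        exact exc hP hm hk1 hl1
      have h4 : Module.finrank ℝ (Kspace A i) = 2 → nullity A = 1 :=
        fun h => ell2_k1 hP hm h
      have hK2 : Module.finrank ℝ (Kspace A i) = 2 := by omega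
      exact not_snip_of_12 hP hm hK2 hsnip
    · intro hmem
      simp only [Set.mem_insert_iff, Set.mem_singleton_iff, Prod.mk.injEq] at hmem
      rcases hmem with ⟨hk, hl⟩ | ⟨hk, hl⟩ | ⟨hk, hl⟩
      · exact snip_of_invertible i hk
      · exact snip_of_10 hP.1 i hk hl
      · exact snip_of_invertible i hk
end Assembly

/-- nullity pairs of the path graph `P_n`, rooted at a leaf or at an
internal vertex, and the characterization of the matrices in `𝒮(P_n)` with the `i`-SNIP. -/
theorem stmt13 {n : ℕ} (hn : 2 ≤ n) :
    (∀ i : Fin n, ((i : ℕ) = 0 ∨ (i : ℕ) = n - 1) →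
      ∀ k l : ℕ, Allows (SimpleGraph.pathGraph n) i k l ↔
        (k, l) ∈ ({(0,0), (1,0), (0,1)} : Set (ℕ × ℕ))) ∧
    (∀ i : Fin n, ¬ ((i : ℕ) = 0 ∨ (i : ℕ) = n - 1) →
      ∀ k l : ℕ, Allows (SimpleGraph.pathGraph n) i k l ↔
        (k, l) ∈ ({(0,0), (1,0), (0,1), (1,2)} : Set (ℕ × ℕ))) ∧
    (∀ i : Fin n, ∀ A : Matrix (Fin n) (Fin n) ℝ, InSG (SimpleGraph.pathGraph n) A →
      (HasSNIP A i ↔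
        (nullity A, nullity (deleteRC A i)) ∈ ({(0,0), (1,0), (0,1)} : Set (ℕ × ℕ)))) :=
  stmt13' hn
end

section
/- Let n ≥ 3 and let K_{1,n} be the star graph with one center vertex adjacent to n leaves. If i is the center vertex, then (K_{1,n},i) allows the nullity pair (k,ℓ) if and only if (k,ℓ) ∈ {(0,0),(1,0),(0,1)} or (k,ℓ) = (ℓ−1,ℓ) for some ℓ with 2 ≤ ℓ ≤ n. If i is a leaf, then (K_{1,n},i) allows the nullity pair (k,ℓ) if and only if (k,ℓ) ∈ {(0,0),(1,0),(0,1)} or (k,ℓ) ∈ {(ℓ,ℓ), (ℓ+1,ℓ)} for some ℓ with 1 ≤ ℓ ≤ n−2. -/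
open Matrix

set_option linter.unusedSectionVars false
set_option maxHeartbeats 1000000

namespace St

lemma rank_add_nullity {V : Type*} [Fintype V] (A : Matrix V V ℝ) :
    A.rank + nullity A = Fintype.card V := by
  have := LinearMap.finrank_range_add_finrank_ker A.mulVecLin
  rwa [Module.finrank_pi] at this

lemma nullity_eq_card_sub_rank {V : Type*} [Fintype V] (A : Matrix V V ℝ) :
    nullity A = Fintype.card V - A.rank := by
  have := rank_add_nullity A; omega

lemma nullity_submatrix {V W : Type*} [Fintype V] [Fintype W] (A : Matrix V V ℝ)
    (e : W ≃ V) : nullity (A.submatrix e e) = nullity A := by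
  rw [nullity_eq_card_sub_rank, nullity_eq_card_sub_rank, Matrix.rank_submatrix,
    Fintype.card_congr e]

lemma nullity_diag {V : Type*} [Fintype V] [DecidableEq V] (A : Matrix V V ℝ)
    (h : ∀ u v : V, u ≠ v → A u v = 0) :
    nullity A = Fintype.card {v // A v v = 0} := by
  have hA : A = Matrix.diagonal (fun v => A v v) := by
    ext u v
    by_cases huv : u = v
    · subst huv; simp
    · rw [Matrix.diagonal_apply_ne _ huv]; exact h u v huv
  have hr : A.rank = Fintype.card {i // A i i ≠ 0} := by
    conv_lhs => rw [hA]
    exact Matrix.rank_diagonal _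
  rw [nullity_eq_card_sub_rank, hr]
  have h2 := Fintype.card_subtype_compl (fun v => A v v = 0)
  have h3 : Fintype.card {v // A v v = 0} ≤ Fintype.card V := Fintype.card_subtype_le _
  simp only [ne_eq] at *
  omega





variable {ι : Type*} [Fintype ι] [DecidableEq ι]

def StarM (c : ℝ) (b d : ι → ℝ) : Matrix (Fin 1 ⊕ ι) (Fin 1 ⊕ ι) ℝ :=
  Matrix.of fun u v => match u, v with
    | Sum.inl _, Sum.inl _ => c
    | Sum.inl _, Sum.inr j => b j
    | Sum.inr j, Sum.inl _ => b j
    | Sum.inr j, Sum.inr j' => if j = j' then d j else 0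

@[simp] lemma starM_ll (c : ℝ) (b d : ι → ℝ) (a a' : Fin 1) :
    StarM c b d (Sum.inl a) (Sum.inl a') = c := rfl
@[simp] lemma starM_lr (c : ℝ) (b d : ι → ℝ) (a : Fin 1) (j : ι) :
    StarM c b d (Sum.inl a) (Sum.inr j) = b j := rfl
@[simp] lemma starM_rl (c : ℝ) (b d : ι → ℝ) (a : Fin 1) (j : ι) :
    StarM c b d (Sum.inr j) (Sum.inl a) = b j := rfl
lemma starM_rr (c : ℝ) (b d : ι → ℝ) (j j' : ι) :
    StarM c b d (Sum.inr j) (Sum.inr j') = if j = j' then d j else 0 := rfl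

lemma starM_mulVec_inl (c : ℝ) (b d : ι → ℝ) (x : Fin 1 ⊕ ι → ℝ) (a : Fin 1) :
    (StarM c b d).mulVec x (Sum.inl a) = c * x (Sum.inl 0) + ∑ j, b j * x (Sum.inr j) := by
  simp [Matrix.mulVec, dotProduct, Fintype.sum_sum_type, Subsingleton.elim (0 : Fin 1)]

lemma starM_mulVec_inr (c : ℝ) (b d : ι → ℝ) (x : Fin 1 ⊕ ι → ℝ) (j : ι) :
    (StarM c b d).mulVec x (Sum.inr j) = b j * x (Sum.inl 0) + d j * x (Sum.inr j) := by
  simp [Matrix.mulVec, dotProduct, Fintype.sum_sum_type, starM_rr, ite_mul,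
    Subsingleton.elim (0 : Fin 1)]



variable {ι : Type*} [Fintype ι] [DecidableEq ι]

def sumF (w : ι → ℝ) : (ι → ℝ) →ₗ[ℝ] ℝ where
  toFun y := ∑ j, w j * y j
  map_add' y z := by simp [mul_add, Finset.sum_add_distrib]
  map_smul' r y := by
    simp only [Pi.smul_apply, smul_eq_mul, RingHom.id_apply, Finset.mul_sum]
    exact Finset.sum_congr rfl fun j _ => by ring

lemma sumF_apply (w y : ι → ℝ) : sumF w y = ∑ j, w j * y j := rfl

lemma finrank_ker_sumF (w : ι → ℝ) (j0 : ι) (h : w j0 ≠ 0) :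
    Module.finrank ℝ (LinearMap.ker (sumF w)) = Fintype.card ι - 1 := by
  have hsurj : Function.Surjective (sumF w) := by
    intro r
    refine ⟨Pi.single j0 (r / w j0), ?_⟩
    rw [sumF_apply]
    rw [Finset.sum_eq_single j0]
    · simp [Pi.single_apply]; field_simp
    · intro i _ hi; simp [Pi.single_apply, hi]
    · simp
  have hr : LinearMap.range (sumF w) = ⊤ := LinearMap.range_eq_top.mpr hsurj
  have := LinearMap.finrank_range_add_finrank_ker (sumF w)
  rw [hr] at this
  simp only [finrank_top, Module.finrank_self, Module.finrank_pi] at this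
  omega

noncomputable def extZ (d : ι → ℝ) : ({j : ι // d j = 0} → ℝ) →ₗ[ℝ] (Fin 1 ⊕ ι → ℝ) where
  toFun y := Sum.elim 0 fun j => if h : d j = 0 then y ⟨j, h⟩ else 0
  map_add' y z := by
    funext v
    cases v with
    | inl a => simp
    | inr j => by_cases h : d j = 0 <;> simp [h]
  map_smul' r y := by
    funext v
    cases v with
    | inl a => simp
    | inr j => by_cases h : d j = 0 <;> simp [h]

lemma extZ_inl (d : ι → ℝ) (y) (a : Fin 1) : extZ d y (Sum.inl a) = 0 := rfl
lemma extZ_inr (d : ι → ℝ) (y) (j : ι) :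
    extZ d y (Sum.inr j) = if h : d j = 0 then y ⟨j, h⟩ else 0 := rfl

lemma extZ_injective (d : ι → ℝ) : Function.Injective (extZ d) := by
  intro y z h
  funext p
  have := congrFun h (Sum.inr p.val)
  rw [extZ_inr, extZ_inr, dif_pos p.2, dif_pos p.2] at this
  simpa using this

lemma sum_eq_sum_zeros (d : ι → ℝ) (g : ι → ℝ) (hg : ∀ j, d j ≠ 0 → g j = 0) :
    ∑ j, g j = ∑ p : {j : ι // d j = 0}, g p.val := by
  calc ∑ j, g j = ∑ j ∈ Finset.univ.filter (fun j => d j = 0), g j := by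
        refine (Finset.sum_subset (Finset.filter_subset _ _) fun j _ hj => ?_).symm
        exact hg j (by simpa using hj)
    _ = ∑ p : {j : ι // d j = 0}, g p.val :=
        Finset.sum_subtype _ (by simp) g

lemma sum_dite_zeros (d : ι → ℝ) (f : ι → ℝ) (y : {j : ι // d j = 0} → ℝ) :
    ∑ j, f j * (if h : d j = 0 then y ⟨j, h⟩ else 0)
      = ∑ p : {j : ι // d j = 0}, f p.val * y p := by
  rw [sum_eq_sum_zeros d _ (fun j hj => by simp [hj])]
  exact Finset.sum_congr rfl fun p _ => by rw [dif_pos p.2]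

lemma sum_vanish_zeros (d : ι → ℝ) (f : ι → ℝ) (x : ι → ℝ)
    (hx : ∀ j, d j ≠ 0 → x j = 0) :
    ∑ j, f j * x j = ∑ p : {j : ι // d j = 0}, f p.val * x p.val :=
  sum_eq_sum_zeros d _ (fun j hj => by simp [hx j hj])


lemma mem_ker_iff {V : Type*} [Fintype V] (A : Matrix V V ℝ) (x : V → ℝ) :
    x ∈ LinearMap.ker A.mulVecLin ↔ ∀ v, A.mulVec x v = 0 := by
  rw [LinearMap.mem_ker, Matrix.mulVecLin_apply]
  constructor
  · intro h v; rw [h]; rfl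
  · intro h; funext v; exact h v


section StarNullity
variable {ι : Type*} [Fintype ι] [DecidableEq ι] {c : ℝ} {b d : ι → ℝ}

lemma nullity_starM_of_exists (hb : ∀ j, b j ≠ 0) {j0 : ι} (h0 : d j0 = 0) :
    nullity (StarM c b d) = Fintype.card {j : ι // d j = 0} - 1 := by
  have hker : LinearMap.ker (StarM c b d).mulVecLin
      = Submodule.map (extZ d)
          (LinearMap.ker (sumF (fun p : {j : ι // d j = 0} => b p.val))) := by
    ext x
    rw [mem_ker_iff, Submodule.mem_map]
    constructor
    · intro hx
      have hx0 : x (Sum.inl 0) = 0 := by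
        have h1 := hx (Sum.inr j0)
        rw [starM_mulVec_inr, h0, zero_mul, add_zero] at h1
        exact (mul_eq_zero.mp h1).resolve_left (hb j0)
      have hxz : ∀ j, d j ≠ 0 → x (Sum.inr j) = 0 := by
        intro j hj
        have h1 := hx (Sum.inr j)
        rw [starM_mulVec_inr, hx0, mul_zero, zero_add] at h1
        exact (mul_eq_zero.mp h1).resolve_left hj
      refine ⟨fun p => x (Sum.inr p.val), ?_, ?_⟩
      · rw [LinearMap.mem_ker, sumF_apply]
        have h1 := hx (Sum.inl 0)
        rw [starM_mulVec_inl, hx0, mul_zero, zero_add] at h1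
        rw [← sum_vanish_zeros d b _ hxz]
        exact h1
      · funext v
        cases v with
        | inl a =>
          rw [extZ_inl]
          have ha : a = 0 := Subsingleton.elim a 0
          rw [ha]; exact hx0.symm
        | inr j =>
          rw [extZ_inr]
          by_cases h : d j = 0
          · rw [dif_pos h]
          · rw [dif_neg h]; exact (hxz j h).symm
    · rintro ⟨y, hy, rfl⟩
      rw [LinearMap.mem_ker, sumF_apply] at hy
      intro v
      cases v with
      | inl a =>
        rw [starM_mulVec_inl, extZ_inl, mul_zero, zero_add]
        simp only [extZ_inr]
        rw [sum_dite_zeros]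
        exact hy
      | inr j =>
        rw [starM_mulVec_inr, extZ_inl, mul_zero, zero_add, extZ_inr]
        by_cases h : d j = 0
        · simp [h]
        · rw [dif_neg h, mul_zero]
  rw [nullity, hker,
    ← LinearEquiv.finrank_eq (Submodule.equivMapOfInjective _ (extZ_injective d) _)]
  exact finrank_ker_sumF _ ⟨j0, h0⟩ (hb j0)

lemma nullity_starM_of_ne (hd : ∀ j, d j ≠ 0) (hc : c ≠ ∑ j, b j ^ 2 / d j) :
    nullity (StarM c b d) = 0 := by
  have hker : LinearMap.ker (StarM c b d).mulVecLin = ⊥ := by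
    refine (Submodule.eq_bot_iff _).mpr fun x hx => ?_
    rw [mem_ker_iff] at hx
    have hx0 : x (Sum.inl 0) = 0 := by
      have hrow : ∀ j, x (Sum.inr j) = -(b j * x (Sum.inl 0)) / d j := by
        intro j
        have h1 := hx (Sum.inr j)
        rw [starM_mulVec_inr] at h1
        rw [eq_div_iff (hd j)]
        linear_combination h1
      have h1 := hx (Sum.inl 0)
      rw [starM_mulVec_inl] at h1
      have h2 : ∑ j, b j * x (Sum.inr j)
          = -(x (Sum.inl 0) * ∑ j, b j ^ 2 / d j) := by
        rw [Finset.mul_sum, ← Finset.sum_neg_distrib]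
        refine Finset.sum_congr rfl fun j _ => ?_
        rw [hrow j]; ring
      have h3 : x (Sum.inl 0) * (c - ∑ j, b j ^ 2 / d j) = 0 := by
        rw [mul_sub]; rw [h2] at h1; linarith
      rcases mul_eq_zero.mp h3 with h | h
      · exact h
      · exact absurd (sub_eq_zero.mp h) hc
    funext v
    cases v with
    | inl a =>
      have ha : a = 0 := Subsingleton.elim a 0
      rw [ha]; exact hx0
    | inr j =>
      have h1 := hx (Sum.inr j)
      rw [starM_mulVec_inr, hx0, mul_zero, zero_add] at h1
      exact (mul_eq_zero.mp h1).resolve_left (hd j)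
  rw [nullity, hker]
  exact finrank_bot ℝ _

lemma nullity_starM_of_eq (hd : ∀ j, d j ≠ 0) (hc : c = ∑ j, b j ^ 2 / d j) :
    nullity (StarM c b d) = 1 := by
  set w : Fin 1 ⊕ ι → ℝ := Sum.elim 1 (fun j => -(b j) / d j) with hw
  have hker : LinearMap.ker (StarM c b d).mulVecLin = Submodule.span ℝ {w} := by
    apply le_antisymm
    · intro x hx
      rw [mem_ker_iff] at hx
      rw [Submodule.mem_span_singleton]
      refine ⟨x (Sum.inl 0), ?_⟩
      funext u
      cases u with
      | inl a =>
        have ha : a = 0 := Subsingleton.elim a 0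
        rw [ha]
        simp [hw]
      | inr j =>
        have h1 := hx (Sum.inr j)
        rw [starM_mulVec_inr] at h1
        simp only [hw, Pi.smul_apply, Sum.elim_inr, smul_eq_mul]
        have hdj := hd j
        rw [← mul_div_assoc, div_eq_iff hdj]
        linear_combination -h1
    · rw [Submodule.span_le, Set.singleton_subset_iff, SetLike.mem_coe, mem_ker_iff]
      intro u
      cases u with
      | inl a =>
        rw [starM_mulVec_inl]
        simp only [hw, Sum.elim_inl, Sum.elim_inr, Pi.one_apply, mul_one]
        rw [hc, ← Finset.sum_add_distrib]
        refine Finset.sum_eq_zero fun j _ => ?_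
        ring
      | inr j =>
        rw [starM_mulVec_inr]
        simp only [hw, Sum.elim_inl, Sum.elim_inr, Pi.one_apply, mul_one]
        have hdj := hd j
        field_simp
        ring
  rw [nullity, hker]
  refine finrank_span_singleton ?_
  intro h
  have := congrFun h (Sum.inl 0)
  simp [hw] at this

end StarNullity

section Struct
variable {ι : Type*} [Fintype ι] [DecidableEq ι]

def eCenter : ι ≃ {v : Fin 1 ⊕ ι // v ≠ Sum.inl 0} where
  toFun j := ⟨Sum.inr j, by simp⟩
  invFun v := match v with
    | ⟨Sum.inl a, h⟩ => absurd (by rw [Subsingleton.elim a (0 : Fin 1)]) h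
    | ⟨Sum.inr j, _⟩ => j
  left_inv j := rfl
  right_inv v := match v with
    | ⟨Sum.inl a, h⟩ => absurd (by rw [Subsingleton.elim a (0 : Fin 1)]) h
    | ⟨Sum.inr j, _⟩ => rfl

def eLeaf (j : ι) : (Fin 1 ⊕ {p : ι // p ≠ j}) ≃ {v : Fin 1 ⊕ ι // v ≠ Sum.inr j} where
  toFun u := match u with
    | Sum.inl a => ⟨Sum.inl a, by simp⟩
    | Sum.inr p => ⟨Sum.inr p.val, by simp [p.2]⟩
  invFun v := match v with
    | ⟨Sum.inl a, _⟩ => Sum.inl a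
    | ⟨Sum.inr q, h⟩ => Sum.inr ⟨q, fun e => h (by rw [e])⟩
  left_inv u := by cases u <;> rfl
  right_inv v := by obtain ⟨v, h⟩ := v; cases v <;> rfl

lemma nullity_diagonal (d : ι → ℝ) :
    nullity (Matrix.diagonal d) = Fintype.card {j // d j = 0} := by
  rw [nullity_diag (Matrix.diagonal d) (fun u v h => Matrix.diagonal_apply_ne d h)]
  exact Fintype.card_congr (Equiv.subtypeEquivRight (by simp))

lemma delete_center_eq (c : ℝ) (b d : ι → ℝ) :
    (deleteRC (StarM c b d) (Sum.inl 0)).submatrix eCenter eCenter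
      = Matrix.diagonal d := by
  ext u v
  rw [Matrix.diagonal_apply]
  exact starM_rr c b d u v

lemma delete_leaf_eq (c : ℝ) (b d : ι → ℝ) (j : ι) :
    (deleteRC (StarM c b d) (Sum.inr j)).submatrix (eLeaf j) (eLeaf j)
      = StarM c (fun p : {p : ι // p ≠ j} => b p.val) (fun p => d p.val) := by
  ext u v
  cases u with
  | inl a =>
    cases v with
    | inl a' => rfl
    | inr q => rfl
  | inr p =>
    cases v with
    | inl a => rfl
    | inr q =>
      show (if p.val = q.val then d p.val else 0) = (if p = q then d p.val else 0)
      simp [Subtype.ext_iff]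

lemma nullity_delete_center (c : ℝ) (b d : ι → ℝ) :
    nullity (deleteRC (StarM c b d) (Sum.inl 0)) = Fintype.card {j : ι // d j = 0} := by
  rw [← nullity_submatrix _ eCenter, delete_center_eq, nullity_diagonal]

lemma nullity_delete_leaf (c : ℝ) (b d : ι → ℝ) (j : ι) :
    nullity (deleteRC (StarM c b d) (Sum.inr j))
      = nullity (StarM c (fun p : {p : ι // p ≠ j} => b p.val) (fun p => d p.val)) := by
  rw [← nullity_submatrix _ (eLeaf j), delete_leaf_eq]


end Struct

lemma cbg_adj {V W : Type*} (u v : V ⊕ W) :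
    (completeBipartiteGraph V W).Adj u v ↔
      (u.isLeft ∧ v.isRight ∨ u.isRight ∧ v.isLeft) := Iff.rfl

lemma inSG_starM {n : ℕ} (c : ℝ) (b d : Fin n → ℝ) (hb : ∀ j, b j ≠ 0) :
    InSG (completeBipartiteGraph (Fin 1) (Fin n)) (StarM c b d) := by
  constructor
  · apply Matrix.IsSymm.ext
    intro u v
    cases u with
    | inl a => cases v with
      | inl a' => rfl
      | inr q => rfl
    | inr p => cases v with
      | inl a => rfl
      | inr q =>
        show (if q = p then d q else 0) = (if p = q then d p else 0)
        by_cases h : p = q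
        · subst h; rfl
        · rw [if_neg h, if_neg (Ne.symm h)]
  · intro u v huv
    cases u with
    | inl a => cases v with
      | inl a' => exact absurd (congrArg Sum.inl (Subsingleton.elim a a')) huv
      | inr q => simpa [cbg_adj] using hb q
    | inr p => cases v with
      | inl a => simpa [cbg_adj] using hb p
      | inr q =>
        have hpq : p ≠ q := fun e => huv (by rw [e])
        rw [starM_rr, if_neg hpq]
        simp [cbg_adj]

lemma inSG_eq_starM {n : ℕ} {A : Matrix (Fin 1 ⊕ Fin n) (Fin 1 ⊕ Fin n) ℝ}
    (hA : InSG (completeBipartiteGraph (Fin 1) (Fin n)) A) :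
    A = StarM (A (Sum.inl 0) (Sum.inl 0)) (fun j => A (Sum.inl 0) (Sum.inr j))
        (fun j => A (Sum.inr j) (Sum.inr j))
    ∧ ∀ j, A (Sum.inl 0) (Sum.inr j) ≠ 0 := by
  obtain ⟨hs, ha⟩ := hA
  constructor
  · ext u v
    cases u with
    | inl a => cases v with
      | inl a' =>
        have h1 : a = 0 := Subsingleton.elim a 0
        have h2 : a' = 0 := Subsingleton.elim a' 0
        rw [h1, h2]; rfl
      | inr q =>
        have h1 : a = 0 := Subsingleton.elim a 0
        rw [h1]; rfl
    | inr p => cases v with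
      | inl a =>
        have h1 : a = 0 := Subsingleton.elim a 0
        rw [h1]
        exact hs.apply (Sum.inl 0) (Sum.inr p)
      | inr q =>
        rw [starM_rr]
        by_cases h : p = q
        · subst h; rw [if_pos rfl]
        · rw [if_neg h]
          by_contra hne
          have hpq : (Sum.inr p : Fin 1 ⊕ Fin n) ≠ Sum.inr q := fun e => h (by injection e)
          have := (ha _ _ hpq).mp hne
          simp [cbg_adj] at this
  · intro j
    refine (ha _ _ (by simp)).mpr ?_
    simp [cbg_adj]

section Counting
variable {ι : Type*} [Fintype ι] [DecidableEq ι]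

lemma card_restrict (j : ι) (d : ι → ℝ) :
    Fintype.card {p : {p : ι // p ≠ j} // d p.val = 0}
      = Fintype.card {p : ι // p ≠ j ∧ d p = 0} :=
  Fintype.card_congr (Equiv.subtypeSubtypeEquivSubtypeInter (fun p : ι => p ≠ j) (fun p => d p = 0))

lemma count_rel (j : ι) (d : ι → ℝ) :
    Fintype.card {p : ι // d p = 0}
      = Fintype.card {p : ι // p ≠ j ∧ d p = 0} + (if d j = 0 then 1 else 0) := by
  rw [Fintype.card_subtype, Fintype.card_subtype]
  by_cases h : d j = 0
  · rw [if_pos h]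
    have he : Finset.univ.filter (fun p : ι => p ≠ j ∧ d p = 0)
        = (Finset.univ.filter (fun p : ι => d p = 0)).erase j := by
      ext p
      simp [Finset.mem_erase, and_comm]
    rw [he, Finset.card_erase_of_mem (by simp [h])]
    have hmem : j ∈ Finset.univ.filter (fun p : ι => d p = 0) := by simp [h]
    have := Finset.card_pos.mpr ⟨j, hmem⟩
    omega
  · rw [if_neg h, add_zero]
    congr 1
    ext p
    simp only [Finset.mem_filter, Finset.mem_univ, true_and]
    exact ⟨fun hp => ⟨fun e => h (e ▸ hp), hp⟩, fun hp => hp.2⟩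

lemma card_ne (j : ι) : Fintype.card {p : ι // p ≠ j} = Fintype.card ι - 1 := by
  have := Fintype.card_subtype_compl (fun p : ι => p = j)
  rw [Fintype.card_subtype_eq] at this
  simpa [ne_eq] using this

lemma sum_split (j : ι) (f : ι → ℝ) :
    ∑ p : ι, f p = f j + ∑ p : {p : ι // p ≠ j}, f p.val := by
  rw [← Finset.sum_subtype (Finset.univ.erase j) (p := fun p => p ≠ j) (by simp) f]
  exact (Finset.add_sum_erase _ f (Finset.mem_univ j)).symm

end Counting

lemma mem3 {k l : ℕ} {a b c d e f : ℕ} :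
    ((k, l) ∈ ({(a,b),(c,d),(e,f)} : Set (ℕ × ℕ))) ↔
      ((k = a ∧ l = b) ∨ (k = c ∧ l = d) ∨ (k = e ∧ l = f)) := by
  simp [Prod.ext_iff]

lemma card_zeros_ite {m : ℕ} (S : Finset (Fin m)) :
    Fintype.card {j : Fin m // (if j ∈ S then (0:ℝ) else 1) = 0} = S.card := by
  rw [Fintype.card_subtype]
  congr 1
  ext j
  by_cases h : j ∈ S <;> simp [h]

lemma center_construct {n : ℕ} (l : ℕ) (h1 : 1 ≤ l) (h2 : l ≤ n) :
    Allows (completeBipartiteGraph (Fin 1) (Fin n)) (Sum.inl 0) (l - 1) l := by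
  obtain ⟨S, -, hS⟩ := Finset.exists_subset_card_eq
    (s := (Finset.univ : Finset (Fin n))) (n := l) (by simpa using h2)
  refine ⟨StarM 0 (fun _ => 1) (fun j => if j ∈ S then 0 else 1),
    inSG_starM _ _ _ (fun _ => one_ne_zero), ?_, ?_⟩
  · obtain ⟨j0, hj0⟩ := Finset.card_pos.mp (by omega : 0 < S.card)
    rw [nullity_starM_of_exists (fun _ => one_ne_zero) (j0 := j0) (by simp [hj0])]
    rw [card_zeros_ite, hS]
  · rw [nullity_delete_center, card_zeros_ite, hS]

lemma center_part {n : ℕ} (hn : 3 ≤ n) (k l : ℕ) :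
    Allows (completeBipartiteGraph (Fin 1) (Fin n)) (Sum.inl 0) k l ↔
      ((k, l) ∈ ({(0,0), (1,0), (0,1)} : Set (ℕ × ℕ)) ∨
        (2 ≤ l ∧ l ≤ n ∧ k = l - 1)) := by
  constructor
  · rintro ⟨A, hA, hk, hl⟩
    obtain ⟨hAeq, hb⟩ := inSG_eq_starM hA
    rw [hAeq] at hk hl
    rw [nullity_delete_center] at hl
    by_cases hz : ∃ j0, A (Sum.inr j0) (Sum.inr j0) = 0
    · obtain ⟨j0, hj0⟩ := hz
      rw [nullity_starM_of_exists hb hj0] at hk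
      have h1 : 1 ≤ Fintype.card
          {p : Fin n // A (Sum.inr p) (Sum.inr p) = 0} :=
        Fintype.card_pos_iff.mpr ⟨⟨j0, hj0⟩⟩
      have h2 : Fintype.card
          {p : Fin n // A (Sum.inr p) (Sum.inr p) = 0} ≤ n := by
        have := Fintype.card_subtype_le
          (fun p : Fin n => A (Sum.inr p) (Sum.inr p) = 0)
        simpa using this
      rw [mem3]
      omega
    · push_neg at hz
      have h0 : Fintype.card {p : Fin n // A (Sum.inr p) (Sum.inr p) = 0} = 0 :=
        Fintype.card_eq_zero_iff.mpr ⟨fun p => hz p.val p.2⟩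
      by_cases hc : A (Sum.inl 0) (Sum.inl 0)
          = ∑ j, A (Sum.inl 0) (Sum.inr j) ^ 2 / A (Sum.inr j) (Sum.inr j)
      · rw [nullity_starM_of_eq hz hc] at hk
        rw [mem3]; omega
      · rw [nullity_starM_of_ne hz hc] at hk
        rw [mem3]; omega
  · intro h
    rw [mem3] at h
    rcases h with (⟨hk, hl⟩ | ⟨hk, hl⟩ | ⟨hk, hl⟩) | ⟨h2, hln, hk⟩
    · subst hk hl
      have hs : ∑ _j : Fin n, ((1:ℝ) ^ 2 / (1:ℝ)) = n := by simp
      refine ⟨StarM ((n:ℝ)+1) (fun _ => 1) (fun _ => 1),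
        inSG_starM _ _ _ (fun _ => one_ne_zero), ?_, ?_⟩
      · rw [nullity_starM_of_ne (fun _ => one_ne_zero)
          (by rw [hs]; intro he; norm_num at he)]
      · rw [nullity_delete_center]
        exact Fintype.card_eq_zero_iff.mpr ⟨fun p => one_ne_zero p.2⟩
    · subst hk hl
      have hs : ∑ _j : Fin n, ((1:ℝ) ^ 2 / (1:ℝ)) = n := by simp
      refine ⟨StarM (n:ℝ) (fun _ => 1) (fun _ => 1),
        inSG_starM _ _ _ (fun _ => one_ne_zero), ?_, ?_⟩
      · rw [nullity_starM_of_eq (fun _ => one_ne_zero) (by rw [hs])]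
      · rw [nullity_delete_center]
        exact Fintype.card_eq_zero_iff.mpr ⟨fun p => one_ne_zero p.2⟩
    · subst hk hl
      exact center_construct 1 le_rfl (by omega)
    · have := center_construct l (by omega) hln
      rwa [← hk] at this
section Leaf
variable {n : ℕ}

lemma sum_one_restrict (j : Fin n) :
    ∑ _p : {p : Fin n // p ≠ j}, ((1:ℝ) ^ 2 / (1:ℝ)) = ((n - 1 : ℕ) : ℝ) := by
  rw [Finset.sum_const]
  simp only [Finset.card_univ, nsmul_eq_mul, one_pow, div_one, mul_one]
  rw [card_ne, Fintype.card_fin]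

lemma card_erase_univ (j : Fin n) :
    ((Finset.univ : Finset (Fin n)).erase j).card = n - 1 := by
  rw [Finset.card_erase_of_mem (Finset.mem_univ j), Finset.card_univ, Fintype.card_fin]

lemma leaf_construct (hn : 3 ≤ n) (j : Fin n) (l : ℕ) (h1 : 1 ≤ l) (h2 : l ≤ n - 2)
    (extra : Bool) :
    Allows (completeBipartiteGraph (Fin 1) (Fin n)) (Sum.inr j)
      (if extra then l + 1 else l) l := by
  obtain ⟨S, hSsub, hS⟩ := Finset.exists_subset_card_eq
    (s := (Finset.univ : Finset (Fin n)).erase j) (n := l + 1)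
    (by rw [card_erase_univ]; omega)
  have hjS : j ∉ S := fun h => (Finset.notMem_erase j _) (hSsub h)
  set T : Finset (Fin n) := if extra then insert j S else S with hT
  have hjT : j ∈ T ↔ extra := by
    cases extra <;> simp [hT, hjS, Finset.mem_insert]
  have hTcard : T.card = if extra then l + 2 else l + 1 := by
    cases extra <;> simp [hT, Finset.card_insert_of_notMem hjS, hS]
  set d : Fin n → ℝ := fun p => if p ∈ T then 0 else 1 with hd
  have hd0 : ∀ p, d p = 0 ↔ p ∈ T := by
    intro p; by_cases h : p ∈ T <;> simp [hd, h]
  obtain ⟨j0, hj0S⟩ := Finset.card_pos.mp (by omega : 0 < S.card)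
  have hj0T : j0 ∈ T := by cases extra <;> simp [hT, hj0S, Finset.mem_insert]
  have hj0ne : j0 ≠ j := Finset.ne_of_mem_erase (hSsub hj0S)
  refine ⟨StarM 0 (fun _ => 1) d, inSG_starM _ _ _ (fun _ => one_ne_zero), ?_, ?_⟩
  · rw [nullity_starM_of_exists (fun _ => one_ne_zero) (j0 := j0)
      ((hd0 j0).mpr hj0T)]
    rw [hd, card_zeros_ite, hTcard]
    cases extra <;> simp
  · rw [nullity_delete_leaf]
    rw [nullity_starM_of_exists (b := fun p : {p : Fin n // p ≠ j} => (1:ℝ))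
      (fun _ => one_ne_zero) (j0 := ⟨j0, hj0ne⟩) ((hd0 j0).mpr hj0T)]
    have hcr := card_restrict j d
    have hrel := count_rel j d
    have hcz : Fintype.card {p : Fin n // d p = 0}
        = if extra then l + 2 else l + 1 := by
      rw [hd, card_zeros_ite, hTcard]
    rw [hcr]
    cases extra with
    | false =>
      simp only [Bool.false_eq_true, if_false, iff_false] at hcz hjT
      have hdj : d j ≠ 0 := fun h => hjT ((hd0 j).mp h)
      rw [if_neg hdj] at hrel
      omega
    | true =>
      simp only [if_true, iff_true] at hcz hjT
      rw [if_pos ((hd0 j).mpr hjT)] at hrel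
      omega


lemma cast_sub_one_lt (hn : 3 ≤ n) : ((n - 1 : ℕ) : ℝ) < (n : ℝ) := by
  have h1 : n - 1 < n := by omega
  exact_mod_cast Nat.cast_lt.mpr h1

lemma leaf_special (hn : 3 ≤ n) (j : Fin n) (c : ℝ) :
    InSG (completeBipartiteGraph (Fin 1) (Fin n))
      (StarM c (fun _ => (1:ℝ)) (fun _ => (1:ℝ))) :=
  inSG_starM _ _ _ (fun _ => one_ne_zero)

lemma leaf_part (hn : 3 ≤ n) (j : Fin n) (k l : ℕ) :
    Allows (completeBipartiteGraph (Fin 1) (Fin n)) (Sum.inr j) k l ↔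
      ((k, l) ∈ ({(0,0), (1,0), (0,1)} : Set (ℕ × ℕ)) ∨
        (1 ≤ l ∧ l ≤ n - 2 ∧ (k = l ∨ k = l + 1))) := by
  constructor
  · rintro ⟨A, hA, hk, hl⟩
    obtain ⟨hAeq, hb⟩ := inSG_eq_starM hA
    rw [hAeq] at hk hl
    rw [nullity_delete_leaf] at hl
    set c := A (Sum.inl 0) (Sum.inl 0) with hc0
    set b := fun p : Fin n => A (Sum.inl 0) (Sum.inr p) with hbd
    set d := fun p : Fin n => A (Sum.inr p) (Sum.inr p) with hdd
    have hb' : ∀ p : {p : Fin n // p ≠ j}, b p.val ≠ 0 := fun p => hb p.val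
    have hcr := card_restrict j d
    have hrel := count_rel j d
    by_cases hz' : ∃ p : {p : Fin n // p ≠ j}, d p.val = 0
    · obtain ⟨p0, hp0⟩ := hz'
      rw [nullity_starM_of_exists hb' hp0] at hl
      rw [nullity_starM_of_exists hb (j0 := p0.val) hp0] at hk
      replace hl : Fintype.card {p : {p : Fin n // p ≠ j} // d p.val = 0} - 1 = l := hl
      replace hk : Fintype.card {p : Fin n // d p = 0} - 1 = k := hk
      have h1 : 1 ≤ Fintype.card {p : {p : Fin n // p ≠ j} // d p.val = 0} :=
        Fintype.card_pos_iff.mpr ⟨⟨p0, hp0⟩⟩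
      have h2 : Fintype.card {p : {p : Fin n // p ≠ j} // d p.val = 0} ≤ n - 1 := by
        have h3 := Fintype.card_subtype_le (fun p : {p : Fin n // p ≠ j} => d p.val = 0)
        rw [card_ne, Fintype.card_fin] at h3
        exact h3
      rw [mem3]
      by_cases hdj : d j = 0
      · rw [if_pos hdj] at hrel; omega
      · rw [if_neg hdj] at hrel; omega
    · push_neg at hz'
      have hm0 : Fintype.card {p : {p : Fin n // p ≠ j} // d p.val = 0} = 0 :=
        Fintype.card_eq_zero_iff.mpr ⟨fun p => hz' p.val p.2⟩
      by_cases hdj : d j = 0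
      · rw [if_pos hdj] at hrel
        rw [nullity_starM_of_exists hb hdj] at hk
        by_cases hc' : c = ∑ p : {p : Fin n // p ≠ j}, b p.val ^ 2 / d p.val
        · rw [nullity_starM_of_eq hz' hc'] at hl
          rw [mem3]; omega
        · rw [nullity_starM_of_ne hz' hc'] at hl
          rw [mem3]; omega
      · rw [if_neg hdj] at hrel
        have hdall : ∀ p, d p ≠ 0 := by
          intro p
          by_cases hp : p = j
          · rw [hp]; exact hdj
          · exact hz' ⟨p, hp⟩
        have hsplit := sum_split j (fun p => b p ^ 2 / d p)
        have hbj : b j ^ 2 / d j ≠ 0 := div_ne_zero (pow_ne_zero _ (hb j)) hdj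
        by_cases hc : c = ∑ p, b p ^ 2 / d p
        · rw [nullity_starM_of_eq hdall hc] at hk
          have hc' : c ≠ ∑ p : {p : Fin n // p ≠ j}, b p.val ^ 2 / d p.val := by
            rw [hc, hsplit]
            intro he
            exact hbj (by linarith)
          rw [nullity_starM_of_ne hz' hc'] at hl
          rw [mem3]; omega
        · rw [nullity_starM_of_ne hdall hc] at hk
          by_cases hc' : c = ∑ p : {p : Fin n // p ≠ j}, b p.val ^ 2 / d p.val
          · rw [nullity_starM_of_eq hz' hc'] at hl
            rw [mem3]; omega
          · rw [nullity_starM_of_ne hz' hc'] at hl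
            rw [mem3]; omega
  · intro h
    rw [mem3] at h
    have hs : ∑ _p : Fin n, ((1:ℝ) ^ 2 / (1:ℝ)) = n := by simp
    have hs' := sum_one_restrict j
    have hlt := cast_sub_one_lt hn
    rcases h with (⟨hk, hl⟩ | ⟨hk, hl⟩ | ⟨hk, hl⟩) | ⟨h1, h2, hk | hk⟩
    · subst hk hl
      refine ⟨StarM ((n:ℝ)+1) (fun _ => 1) (fun _ => 1),
        inSG_starM _ _ _ (fun _ => one_ne_zero), ?_, ?_⟩
      · rw [nullity_starM_of_ne (fun _ => one_ne_zero)
          (by rw [hs]; intro he; norm_num at he)]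
      · rw [nullity_delete_leaf]
        rw [nullity_starM_of_ne (fun _ => one_ne_zero)
          (by rw [hs']; intro he; linarith)]
    · subst hk hl
      refine ⟨StarM (n:ℝ) (fun _ => 1) (fun _ => 1),
        inSG_starM _ _ _ (fun _ => one_ne_zero), ?_, ?_⟩
      · rw [nullity_starM_of_eq (fun _ => one_ne_zero) (by rw [hs])]
      · rw [nullity_delete_leaf]
        rw [nullity_starM_of_ne (fun _ => one_ne_zero)
          (by rw [hs']; intro he; linarith)]
    · subst hk hl
      refine ⟨StarM ((n - 1 : ℕ) : ℝ) (fun _ => 1) (fun _ => 1),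
        inSG_starM _ _ _ (fun _ => one_ne_zero), ?_, ?_⟩
      · rw [nullity_starM_of_ne (fun _ => one_ne_zero)
          (by rw [hs]; intro he; linarith)]
      · rw [nullity_delete_leaf]
        rw [nullity_starM_of_eq (fun _ => one_ne_zero) (by rw [hs'])]
    · rw [hk]
      simpa using leaf_construct hn j l h1 h2 false
    · rw [hk]
      simpa using leaf_construct hn j l h1 h2 true

end Leaf
end St

/-- nullity pairs of the star graph `K_{1,n}` rooted at the center and
rooted at a leaf.  The star is realized as the complete bipartite graph on `Fin 1 ⊕ Fin n`,
with center `Sum.inl 0` and leaves `Sum.inr j`. -/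
theorem stmt14 {n : ℕ} (hn : 3 ≤ n) :
    (∀ k l : ℕ, Allows (completeBipartiteGraph (Fin 1) (Fin n)) (Sum.inl 0) k l ↔
      ((k, l) ∈ ({(0,0), (1,0), (0,1)} : Set (ℕ × ℕ)) ∨
        (2 ≤ l ∧ l ≤ n ∧ k = l - 1))) ∧
    (∀ j : Fin n, ∀ k l : ℕ,
      Allows (completeBipartiteGraph (Fin 1) (Fin n)) (Sum.inr j) k l ↔
      ((k, l) ∈ ({(0,0), (1,0), (0,1)} : Set (ℕ × ℕ)) ∨
        (1 ≤ l ∧ l ≤ n - 2 ∧ (k = l ∨ k = l + 1)))) :=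
  ⟨fun k l => St.center_part hn k l, fun j k l => St.leaf_part hn j k l⟩
end

section
/- Let G be a generalized star (a tree with exactly one vertex of degree at least 3, called its center) and let i be its center. Then there is no matrix A ∈ 𝒮(G) with null(A) = 2 and null(A(i)) = 1; that is, (G,i) does not allow the nullity pair (2,1). -/
open Matrix

/-! As `null(A) = 2`, some nonzero `x ∈ ker A` has `x i = 0`. It also lies in the kernel of `A(i)`,
and so does its restriction to any branch of `G - i`. If `x` is nonzero at two neighbours of the
center `i`, these lie in different branches, giving two independent kernel vectors of `A(i)`. If
`x` is nonzero at exactly one neighbour `n`, row `i` of `A x = 0` reads `A i n * x n = 0`. If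
`x` vanishes on all neighbours of `i`, then, since the branches are paths, row `b` of `A x = 0`
propagates the zeros outwards one vertex at a time, so `x = 0`. -/

namespace SimpleGraph

variable {V : Type*} {G : SimpleGraph V}

lemma eq_or_eq_of_adj_of_degree_le_two [Fintype V] [DecidableEq V] [DecidableRel G.Adj]
    {b v t k : V} (hb : G.degree b ≤ 2) (hv : G.Adj b v) (ht : G.Adj b t) (hvt : v ≠ t)
    (hk : G.Adj b k) : k = v ∨ k = t := by
  by_contra! h
  have hsub : ({k, v, t} : Finset V) ⊆ G.neighborFinset b := by
    intro w hw
    simp only [Finset.mem_insert, Finset.mem_singleton] at hw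
    rcases hw with rfl | rfl | rfl <;> simpa
  have := Finset.card_le_card hsub
  rw [Finset.card_insert_of_notMem (by simp [h.1, h.2]), Finset.card_pair hvt,
    card_neighborFinset_eq_degree] at this
  omega

lemma IsAcyclic.not_reachable_comap_of_adj (hG : G.IsAcyclic) {i n₁ n₂ : V} (h₁ : G.Adj i n₁)
    (h₂ : G.Adj i n₂) (hne : n₁ ≠ n₂) :
    ¬ (G.comap (Subtype.val : {v // v ≠ i} → V)).Reachable ⟨n₁, h₁.ne'⟩ ⟨n₂, h₂.ne'⟩ := by
  classical
  rintro ⟨w⟩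
  let q : G.Path n₁ n₂ := (w.map (Hom.comap _ G)).toPath
  have hi : i ∉ q.1.support := fun hi => by
    obtain ⟨v, -, hv⟩ := List.mem_map.1 <|
      (Walk.support_map _ _ ▸ Walk.support_toPath_subset_support _ hi :)
    exact v.2 hv
  have := hG.mem_support_of_ne_mem_support_of_adj_of_isPath
    (p := Walk.cons h₁.symm .nil) (by simp [h₁.ne']) q.2 h₂ hi
  simp only [Walk.support_cons, Walk.support_nil, List.mem_cons, List.not_mem_nil,
    or_false] at this
  exact this.elim (fun h => hne h.symm) h₂.ne'

end SimpleGraph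

section Nullity

variable {W : Type*} [Fintype W]

lemma exists_mulVec_eq_zero_apply_eq_zero {B : Matrix W W ℝ} (h : 2 ≤ nullity B) (i : W) :
    ∃ x : W → ℝ, B *ᵥ x = 0 ∧ x i = 0 ∧ x ≠ 0 := by
  let eval : LinearMap.ker B.mulVecLin →ₗ[ℝ] ℝ :=
    (LinearMap.proj i).comp (LinearMap.ker B.mulVecLin).subtype
  have hnot_inj : ¬ Function.Injective eval := fun hinj => by
    have : nullity B ≤ 1 := by
      simpa [nullity] using LinearMap.finrank_le_finrank_of_injective hinj
    omega
  obtain ⟨x, hxi, hx0⟩ :=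
    (Submodule.ne_bot_iff _).1 fun h => hnot_inj (LinearMap.ker_eq_bot.1 h)
  exact ⟨x, x.2, hxi, fun h => hx0 (Subtype.ext h)⟩

lemma mulVec_indicator_reachable_eq_zero {H : SimpleGraph W} {B : Matrix W W ℝ}
    (hB : ∀ u v, u ≠ v → B u v ≠ 0 → H.Adj u v) {y : W → ℝ} (hy : B *ᵥ y = 0) (p : W) :
    B *ᵥ {v | H.Reachable p v}.indicator y = 0 := by
  have hsame : ∀ u v, B u v ≠ 0 → (H.Reachable p u ↔ H.Reachable p v) := by
    intro u v huv
    rcases eq_or_ne u v with rfl | hne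
    · rfl
    · have := (hB u v hne huv).reachable
      exact ⟨fun h => h.trans this, fun h => h.trans this.symm⟩
  funext u
  by_cases hu : H.Reachable p u
  · rw [← congrFun hy u]
    refine Finset.sum_congr rfl fun v _ => ?_
    by_cases huv : B u v = 0
    · simp [huv]
    · simp [Set.indicator_of_mem (show v ∈ {v | H.Reachable p v} from (hsame u v huv).1 hu)]
  · refine Finset.sum_eq_zero fun v _ => ?_
    by_cases huv : B u v = 0
    · simp [huv]
    · simp [Set.indicator_of_notMem (show v ∉ {v | H.Reachable p v} from
        fun hv => hu ((hsame u v huv).2 hv))]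

/-- The restriction of `y` to the branch of `p` is a second kernel vector, vanishing at `q`. -/
lemma two_le_nullity_of_not_reachable {H : SimpleGraph W} {B : Matrix W W ℝ}
    (hB : ∀ u v, u ≠ v → B u v ≠ 0 → H.Adj u v) {y : W → ℝ} (hy : B *ᵥ y = 0) {p q : W}
    (hp : y p ≠ 0) (hq : y q ≠ 0) (hpq : ¬ H.Reachable p q) : 2 ≤ nullity B := by
  set z := {v | H.Reachable p v}.indicator y
  have hz : B *ᵥ z = 0 := mulVec_indicator_reachable_eq_zero hB hy p
  have hzp : z p = y p := Set.indicator_of_mem (show p ∈ {v | H.Reachable p v} from .refl p) y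
  have hzq : z q = 0 := Set.indicator_of_notMem (s := {v | H.Reachable p v}) hpq y
  have hli : LinearIndependent ℝ
      ![(⟨y, hy⟩ : LinearMap.ker B.mulVecLin), (⟨z, hz⟩ : LinearMap.ker B.mulVecLin)] := by
    rw [LinearIndependent.pair_iff]
    intro s t hst
    have h := congrArg Subtype.val hst
    have hs : s = 0 := by simpa [hzq, hq] using congrFun h q
    subst hs
    exact ⟨rfl, by simpa [hzp, hp] using congrFun h p⟩
  simpa [nullity] using hli.fintype_card_le_finrank

end Nullity

section GraphPattern

open SimpleGraph

variable {V : Type*} [Fintype V] [DecidableEq V] {G : SimpleGraph V} {A : Matrix V V ℝ}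
  {x : V → ℝ}

lemma deleteRC_mulVec_eq_zero {i : V} (hx : A *ᵥ x = 0) (hxi : x i = 0) :
    deleteRC A i *ᵥ (fun v => x v) = 0 := by
  funext u
  rw [Pi.zero_apply, ← show (A *ᵥ x) u = 0 from congrFun hx u]
  simp only [mulVec, dotProduct, deleteRC, submatrix_apply]
  rw [← Finset.sum_subtype (Finset.univ.filter (· ≠ i)) (by simp) (fun v => A u v * x v)]
  exact Finset.sum_filter_of_ne fun v _ hv hvi => hv (by simp [hvi, hxi])

variable (hA : ∀ u v : V, u ≠ v → (A u v ≠ 0 ↔ G.Adj u v))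
include hA

lemma apply_eq_zero_of_mulVec_eq_zero (hx : A *ᵥ x = 0) {b u : V} (hbu : G.Adj b u)
    (hxb : x b = 0) (hnbr : ∀ k, G.Adj b k → k ≠ u → x k = 0) : x u = 0 := by
  have hrow : A b u * x u = 0 := by
    rw [← show (A *ᵥ x) b = 0 from congrFun hx b, mulVec, dotProduct,
      Finset.sum_eq_single u _ (by simp)]
    intro k _ hku
    by_cases hkb : k = b
    · simp [hkb, hxb]
    by_cases hbk : G.Adj b k
    · simp [hnbr k hbk hku]
    · simp [not_not.1 (mt (hA b k (Ne.symm hkb)).1 hbk)]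
  exact (mul_eq_zero.1 hrow).resolve_left ((hA b u hbu.ne).2 hbu)

variable [DecidableRel G.Adj] {i : V} (hdeg : ∀ u, u ≠ i → G.degree u ≤ 2)
  (hx : A *ᵥ x = 0) (hxi : x i = 0) (hnbr : ∀ n, G.Adj i n → x n = 0)
include hdeg hx hxi hnbr

lemma forall_mem_support_eq_zero {a c : V} (w : G.Walk a c) (hc : c = i) (hw : w.IsPath) :
    ∀ u ∈ w.support, x u = 0 := by
  induction w with
  | nil => rintro u hu; simp_all
  | @cons u b c hub w ih =>
    have hw' := ih hc hw.of_cons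
    intro v hv
    rcases List.mem_cons.1 (Walk.support_cons _ _ ▸ hv) with rfl | hv
    · cases w with
      | nil => exact hnbr v (hc ▸ hub.symm)
      | @cons _ t _ hbt w =>
        have hb : b ≠ i := by
          rintro rfl
          exact (List.nodup_cons.1 hw.of_cons.support_nodup).1 (hc ▸ w.end_mem_support)
        have hvt : v ≠ t := fun hvt =>
          (Walk.cons_isPath_iff _ _).1 hw |>.2 (by simp [hvt])
        refine apply_eq_zero_of_mulVec_eq_zero hA hx hub.symm (hw' b (by simp)) fun k hbk hkv => ?_
        obtain rfl | rfl :=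
          eq_or_eq_of_adj_of_degree_le_two (hdeg b hb) hub.symm hbt hvt hbk
        · exact (hkv rfl).elim
        · exact hw' k (by simp)
    · exact hw' v hv

lemma eq_zero_of_forall_adj_eq_zero (hG : G.Connected) : x = 0 := by
  funext v
  let p := (hG v i).some.toPath
  exact forall_mem_support_eq_zero hA hdeg hx hxi hnbr p.1 rfl p.2 v p.1.start_mem_support

end GraphPattern

theorem stmt15_general {V : Type*} [Fintype V] [DecidableEq V] (G : SimpleGraph V)
    [DecidableRel G.Adj] (i : V) (htree : G.IsTree)
    (huniq : ∀ v : V, 3 ≤ G.degree v → v = i) :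
    ¬ Allows G i 2 1 := by
  rintro ⟨A, ⟨-, hA⟩, hnull, hnull_i⟩
  have hdeg : ∀ u, u ≠ i → G.degree u ≤ 2 := fun u hu => by
    by_contra h
    exact hu (huniq u (by omega))
  obtain ⟨x, hx, hxi, hx0⟩ := exists_mulVec_eq_zero_apply_eq_zero hnull.ge i
  by_cases htwo : ∃ n₁ n₂, G.Adj i n₁ ∧ G.Adj i n₂ ∧ n₁ ≠ n₂ ∧ x n₁ ≠ 0 ∧ x n₂ ≠ 0
  · obtain ⟨n₁, n₂, h₁, h₂, hne, hx₁, hx₂⟩ := htwo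
    have := two_le_nullity_of_not_reachable (H := G.comap Subtype.val)
      (fun u v huv h => SimpleGraph.comap_adj.2 ((hA u v (Subtype.coe_ne_coe.2 huv)).1 h))
      (deleteRC_mulVec_eq_zero hx hxi) hx₁ hx₂
      (htree.isAcyclic.not_reachable_comap_of_adj h₁ h₂ hne)
    omega
  · push Not at htwo
    have hnbr : ∀ n, G.Adj i n → x n = 0 := fun n hn => by
      by_contra hxn
      exact hxn <| apply_eq_zero_of_mulVec_eq_zero hA hx hn hxi fun k hk hkn =>
        htwo n k hn hk (Ne.symm hkn) hxn
    exact hx0 (eq_zero_of_forall_adj_eq_zero hA hdeg hx hxi hnbr htree.connected)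

/-- a generalized star rooted at its center does not allow the
nullity pair `(2,1)`. -/
theorem stmt15 {V : Type*} [Fintype V] [DecidableEq V] (G : SimpleGraph V)
    [DecidableRel G.Adj] (i : V) (htree : G.IsTree) (hdeg : 3 ≤ G.degree i)
    (huniq : ∀ v : V, 3 ≤ G.degree v → v = i) :
    ¬ Allows G i 2 1 :=
  stmt15_general G i htree huniq
end

section
/- Let G be a generalized star (a tree with exactly one vertex of degree at least 3) with center i. If B ∈ 𝒮(G) has nullity at least 2, then every vector x in the kernel of B has its i-th coordinate equal to 0. -/
open Matrix

section Aux
set_option linter.unusedSectionVars false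


variable {V : Type*} [DecidableEq V] {G : SimpleGraph V}

lemma aux_dist_lt_of_mem_support {a i y : V} (P : G.Walk a i) (hP : P.length = G.dist a i)
    (hy : y ∈ P.support) (hne : y ≠ a) : G.dist y i < G.dist a i := by
  have hspec := P.take_spec hy
  have hlen : (P.takeUntil y hy).length + (P.dropUntil y hy).length = P.length := by
    conv_rhs => rw [← hspec]
    rw [SimpleGraph.Walk.length_append]
  have hd : G.dist y i ≤ (P.dropUntil y hy).length := SimpleGraph.dist_le _
  have hpos : 0 < (P.takeUntil y hy).length := by
    rcases Nat.eq_zero_or_pos (P.takeUntil y hy).length with h0 | h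
    · exact absurd (SimpleGraph.Walk.eq_of_length_eq_zero h0).symm hne
    · exact h
  omega

lemma aux_exists_closer (hc : G.Connected) {u i : V} (h : u ≠ i) :
    ∃ p, G.Adj u p ∧ G.dist p i + 1 = G.dist u i := by
  obtain ⟨W, hW⟩ := hc.exists_walk_length_eq_dist u i
  cases W with
  | nil => exact absurd rfl h
  | @cons _ b _ hadj W' =>
    refine ⟨b, hadj, ?_⟩
    have h1 : G.dist b i ≤ W'.length := SimpleGraph.dist_le _
    have h2 : G.dist u i ≤ G.dist u b + G.dist b i := hc.dist_triangle
    have h3 : G.dist u b = 1 := SimpleGraph.dist_eq_one_iff_adj.mpr hadj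
    rw [SimpleGraph.Walk.length_cons] at hW
    omega

lemma aux_adj_dist (ht : G.IsTree) {u w i : V} (h : G.Adj u w) :
    G.dist w i + 1 = G.dist u i ∨ G.dist u i + 1 = G.dist w i := by
  have hc := ht.isConnected
  have h1 : G.dist u i ≤ G.dist u w + G.dist w i := hc.dist_triangle
  have h2 : G.dist w i ≤ G.dist w u + G.dist u i := hc.dist_triangle
  have h3 : G.dist u w = 1 := SimpleGraph.dist_eq_one_iff_adj.mpr h
  have h4 : G.dist w u = 1 := SimpleGraph.dist_eq_one_iff_adj.mpr h.symm
  by_contra hcon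
  push_neg at hcon
  have heq : G.dist u i = G.dist w i := by omega
  have hne0 : G.dist u i ≠ 0 := by
    intro h0
    have hu : u = i := hc.dist_eq_zero_iff.mp h0
    have hw : w = i := hc.dist_eq_zero_iff.mp (by omega)
    exact G.irrefl (hu ▸ hw ▸ h)
  obtain ⟨P, hPp, hPl⟩ := hc.exists_path_of_dist u i
  have hwn : w ∉ P.support := by
    intro hmem
    have hne : w ≠ u := fun he => G.irrefl (he ▸ h)
    have := aux_dist_lt_of_mem_support P hPl hmem hne
    omega
  have hpath2 : (SimpleGraph.Walk.cons h.symm P).IsPath := hPp.cons hwn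
  obtain ⟨Q, hQp, hQl⟩ := hc.exists_path_of_dist w i
  have huniq := (ht.existsUnique_path w i).unique hpath2 hQp
  have hlen := congrArg SimpleGraph.Walk.length huniq
  rw [SimpleGraph.Walk.length_cons, hPl, hQl] at hlen
  omega

lemma aux_closer_unique (ht : G.IsTree) {u p q i : V} (hp : G.Adj u p) (hq : G.Adj u q)
    (hdp : G.dist p i + 1 = G.dist u i) (hdq : G.dist q i + 1 = G.dist u i) : p = q := by
  have hc := ht.isConnected
  obtain ⟨P, hPp, hPl⟩ := hc.exists_path_of_dist p i
  obtain ⟨Q, hQp, hQl⟩ := hc.exists_path_of_dist q i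
  have hun : u ∉ P.support := by
    intro hmem
    have hne : u ≠ p := fun he => G.irrefl (he ▸ hp)
    have := aux_dist_lt_of_mem_support P hPl hmem hne
    omega
  have hun' : u ∉ Q.support := by
    intro hmem
    have hne : u ≠ q := fun he => G.irrefl (he ▸ hq)
    have := aux_dist_lt_of_mem_support Q hQl hmem hne
    omega
  have h1 : (SimpleGraph.Walk.cons hp P).IsPath := hPp.cons hun
  have h2 : (SimpleGraph.Walk.cons hq Q).IsPath := hQp.cons hun'
  have heq := (ht.existsUnique_path u i).unique h1 h2
  have hs := congrArg SimpleGraph.Walk.support heq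
  rw [SimpleGraph.Walk.support_cons, SimpleGraph.Walk.support_cons] at hs
  have hs' : P.support = Q.support := by injection hs
  rw [P.support_eq_cons, Q.support_eq_cons] at hs'
  injection hs'

end Aux

/-- if `G` is a generalized star with center `i` and `B ∈ 𝒮(G)` has
nullity at least `2`, then every kernel vector of `B` has `i`-th coordinate `0`. -/
theorem stmt16 {V : Type*} [Fintype V] [DecidableEq V] (G : SimpleGraph V)
    [DecidableRel G.Adj] (i : V) (htree : G.IsTree) (hdeg : 3 ≤ G.degree i)
    (huniq : ∀ v : V, 3 ≤ G.degree v → v = i)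
    (B : Matrix V V ℝ) (hB : InSG G B) (hnull : 2 ≤ nullity B)
    (x : V → ℝ) (hx : B.mulVec x = 0) : x i = 0 := by
  classical
  by_contra hxi
  have hc : G.Connected := htree.isConnected
  have hBne : ∀ u v : V, G.Adj u v → B u v ≠ 0 := fun u v h => (hB.2 u v h.ne).mpr h
  have hBzero : ∀ u v : V, u ≠ v → ¬ G.Adj u v → B u v = 0 := by
    intro u v h1 h2
    by_contra h3
    exact h2 ((hB.2 u v h1).mp h3)
  -- obtain a nonzero kernel vector vanishing at i
  set K := LinearMap.ker B.mulVecLin with hK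
  let f : K →ₗ[ℝ] ℝ := (LinearMap.proj i).comp K.subtype
  have hsum := LinearMap.finrank_range_add_finrank_ker f
  have hrangele : Module.finrank ℝ (LinearMap.range f) ≤ 1 := by
    have h1 := Submodule.finrank_le (LinearMap.range f)
    simpa using h1
  have hpos : 0 < Module.finrank ℝ (LinearMap.ker f) := by
    have h2 : 2 ≤ Module.finrank ℝ K := hnull
    omega
  have hnt : Nontrivial (LinearMap.ker f) := Module.nontrivial_of_finrank_pos hpos
  obtain ⟨z0, hz0⟩ := exists_ne (0 : LinearMap.ker f)
  set z : V → ℝ := ((z0 : K) : V → ℝ) with hzdef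
  have hzker : B.mulVec z = 0 := by
    have h1 : B.mulVecLin z = 0 := (z0 : K).2
    simpa [Matrix.mulVecLin_apply] using h1
  have hzi : z i = 0 := z0.2
  have hzne : z ≠ 0 := by
    intro h
    apply hz0
    apply Subtype.ext
    apply Subtype.ext
    exact h
  -- row equations
  have hsingle : ∀ (m : V → ℝ) (u p : V), B.mulVec m = 0 → G.Adj u p →
      (∀ w, w ≠ p → B u w * m w = 0) → m p = 0 := by
    intro m u p hm hadj hzero
    have h0 : ∑ w, B u w * m w = 0 := by
      have := congrFun hm u
      simpa [Matrix.mulVec, dotProduct] using this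
    have h1 : ∑ w, B u w * m w = B u p * m p :=
      Finset.sum_eq_single p (fun w _ hw => hzero w hw) (by simp)
    have hBup : B u p ≠ 0 := hBne u p hadj
    rcases mul_eq_zero.mp (h1 ▸ h0) with h | h
    · exact absurd h hBup
    · exact h
  -- support max
  have hsne : (Finset.univ.filter (fun w => z w ≠ 0)).Nonempty := by
    obtain ⟨w, hw⟩ : ∃ w, z w ≠ 0 := by
      by_contra hall; push_neg at hall; exact hzne (funext fun w => hall w)
    exact ⟨w, by simp [hw]⟩
  obtain ⟨v, hvmem, hvmax⟩ := Finset.exists_max_image _ (fun w => G.dist w i) hsne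
  have hzv : z v ≠ 0 := by simpa using hvmem
  have hmax : ∀ w, z w ≠ 0 → G.dist w i ≤ G.dist v i := fun w hw => hvmax w (by simp [hw])
  have hvne : v ≠ i := fun h => hzv (h ▸ hzi)
  -- v is a leaf
  have hleaf : ∀ w, G.Adj v w → G.dist w i + 1 = G.dist v i := by
    intro w hvw
    rcases aux_adj_dist (i := i) htree hvw with h | h
    · exact h
    · exfalso
      have hwv : G.dist w i = G.dist v i + 1 := by omega
      have hzw : z w = 0 := by
        by_contra h0; have := hmax w h0; omega
      apply hzv
      apply hsingle z w v hzker hvw.symm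
      intro y hy
      rcases eq_or_ne y w with rfl | hyw
      · simp [hzw]
      · by_cases hadj : G.Adj w y
        · rcases aux_adj_dist (i := i) htree hadj with h1 | h1
          · exact absurd (aux_closer_unique (i := i) htree hadj hvw.symm h1 (by omega)) hy
          · have hzy : z y = 0 := by by_contra h0; have := hmax y h0; omega
            simp [hzy]
        · simp [hBzero w y (Ne.symm hyw) hadj]
  -- the combined kernel vector
  set m : V → ℝ := fun w => x v * z w - z v * x w with hmdef
  have hmker : B.mulVec m = 0 := by
    have hfun : m = x v • z - z v • x := by funext w; simp [hmdef]
    rw [hfun, Matrix.mulVec_sub, Matrix.mulVec_smul, Matrix.mulVec_smul, hzker, hx]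
    simp
  have hmv : m v = 0 := by simp [hmdef]; ring
  have hmi : m i ≠ 0 := by
    simp only [hmdef, hzi, mul_zero, zero_sub, neg_ne_zero]
    exact mul_ne_zero hzv hxi
  -- zero propagation inward
  have ZP : ∀ n : ℕ, ∀ u : V, G.dist u i = n → m u = 0 →
      (∀ w, G.Adj u w → G.dist w i = n + 1 → m w = 0) → m i = 0 := by
    intro n
    induction n using Nat.strong_induction_on with
    | _ n IH =>
      intro u hdu hmu hfar
      rcases Nat.eq_zero_or_pos n with rfl | hnpos
      · have hui : u = i := hc.dist_eq_zero_iff.mp hdu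
        rwa [← hui]
      · have hune : u ≠ i := by
          intro h; rw [h, SimpleGraph.dist_self] at hdu; omega
        obtain ⟨p, hup, hdp⟩ := aux_exists_closer hc hune
        have hmp : m p = 0 := by
          apply hsingle m u p hmker hup
          intro y hy
          rcases eq_or_ne y u with rfl | hyu
          · simp [hmu]
          · by_cases hadj : G.Adj u y
            · rcases aux_adj_dist (i := i) htree hadj with h1 | h1
              · exact absurd (aux_closer_unique (i := i) htree hadj hup h1 hdp) hy
              · have : m y = 0 := hfar y hadj (by omega)
                simp [this]
            · simp [hBzero u y (Ne.symm hyu) hadj]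
        rcases Nat.lt_or_ge 1 n with h2 | h2
        · -- n ≥ 2
          have hdpn : G.dist p i = n - 1 := by omega
          have hpne : p ≠ i := by
            intro h; rw [h, SimpleGraph.dist_self] at hdpn; omega
          apply IH (n - 1) (by omega) p hdpn hmp
          intro w hpw hdw
          rcases eq_or_ne w u with rfl | hwu
          · exact hmu
          · exfalso
            obtain ⟨q, hpq, hdq⟩ := aux_exists_closer hc hpne
            have hq_u : q ≠ u := by intro h; rw [h] at hdq; omega
            have hq_w : q ≠ w := by intro h; rw [h, hdw] at hdq; omega
            have hsub : {q, u, w} ⊆ G.neighborFinset p := by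
              intro y hy
              simp only [Finset.mem_insert, Finset.mem_singleton] at hy
              rcases hy with rfl | rfl | rfl
              · exact (SimpleGraph.mem_neighborFinset G p y).mpr hpq
              · exact (SimpleGraph.mem_neighborFinset G p y).mpr hup.symm
              · exact (SimpleGraph.mem_neighborFinset G p y).mpr hpw
            have hcard : ({q, u, w} : Finset V).card = 3 := by
              rw [Finset.card_insert_of_notMem (by simp [hq_u, hq_w]),
                Finset.card_insert_of_notMem (by simp [Ne.symm hwu]),
                Finset.card_singleton]
            have hdeg3 : 3 ≤ G.degree p := by
              rw [← SimpleGraph.card_neighborFinset_eq_degree, ← hcard]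
              exact Finset.card_le_card hsub
            exact hpne (huniq p hdeg3)
        · -- n = 1
          have hn1 : n = 1 := by omega
          have hpi : p = i := hc.dist_eq_zero_iff.mp (by omega)
          rwa [← hpi]
  apply hmi
  apply ZP (G.dist v i) v rfl hmv
  intro w hvw hdw
  exfalso
  have := hleaf w hvw
  omega
end
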